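/- arXiv:2408.14382 — 8 statements merged into one kernel-verified Lean document; each statement's English description precedes it below -/
import Mathlib

section
/- For all integers a, b ≥ 2, the equitable dominator chromatic number of the line graph of the bi-star S_{a,b} equals max{a, b} + 1, i.e., χ_ed(L(S_{a,b})) = max{a, b} + 1. -/
open SimpleGraph

/-- `c` is an equitable dominator coloring of `G` with `n` colors: it is a proper vertex
coloring, every vertex dominates some nonempty color class (each vertex of that class lies in
its closed neighborhood), and any two color classes differ in cardinality by at most 1. -/
def IsEDColoring {V : Type*} (G : SimpleGraph V) {n : ℕ} (c : V → Fin n) : Prop :=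
  (∀ ⦃u v : V⦄, G.Adj u v → c u ≠ c v) ∧
  (∀ v : V, ∃ j : Fin n, (∃ u, c u = j) ∧ ∀ u, c u = j → u = v ∨ G.Adj v u) ∧
  (∀ i j : Fin n, {u | c u = i}.ncard ≤ {u | c u = j}.ncard + 1)

/-- The equitable dominator chromatic number of `G`: the least number of colors admitting an
equitable dominator coloring of `G`. -/
noncomputable def edcn {V : Type*} (G : SimpleGraph V) : ℕ :=
  sInf {n : ℕ | ∃ c : V → Fin n, IsEDColoring G c}
/-- The bi-star `S_{a,b}`: two stars `K_{1,a}` and `K_{1,b}` whose centers (`Sum.inl none`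
and `Sum.inr none`) are joined by an edge. -/
def biStar (a b : ℕ) : SimpleGraph (Option (Fin a) ⊕ Option (Fin b)) :=
  SimpleGraph.fromRel (fun x y =>
    (x = Sum.inl none ∧ y = Sum.inr none) ∨
    (x = Sum.inl none ∧ ∃ i : Fin a, y = Sum.inl (some i)) ∨
    (x = Sum.inr none ∧ ∃ j : Fin b, y = Sum.inr (some j)))

/-!
The line graph of `S_{a,b}` is two cliques, `K_{a+1}` and `K_{b+1}` (the edges at either
center), sharing one vertex (the middle edge). The cliques force `max a b + 1` colors of any
proper coloring. Conversely, give the middle edge color `0` and number the pendant edges at each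
center `1, 2, …`: every color class has one or two elements, and since the middle edge meets
every other edge, its class `{middle edge}` is dominated by every vertex.
-/

variable {V W W' α : Type*} {G : SimpleGraph V} {H : SimpleGraph W} {n : ℕ}

theorem injective_comp_of_top_hom {c : V → α} (hc : ∀ ⦃u v⦄, G.Adj u v → c u ≠ c v)
    (f : (⊤ : SimpleGraph W) →g G) : Function.Injective (c ∘ f) :=
  Hom.injective_of_top_hom ((Coloring.mk c fun h ↦ hc h).comp f)

theorem ncard_fiber_inter_range_le_one [Finite V] {c : V → α}
    (hc : ∀ ⦃u v⦄, G.Adj u v → c u ≠ c v) (f : (⊤ : SimpleGraph W) →g G) (i : α) :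
    ({u | c u = i} ∩ Set.range f).ncard ≤ 1 := by
  rw [Set.ncard_le_one_iff]
  rintro _ _ ⟨hx, x, rfl⟩ ⟨hy, y, rfl⟩
  exact congrArg f (injective_comp_of_top_hom hc f (hx.trans hy.symm))

theorem ncard_fiber_le_two [Finite V] {c : V → α} (hc : ∀ ⦃u v⦄, G.Adj u v → c u ≠ c v)
    (f : (⊤ : SimpleGraph W) →g G) (g : (⊤ : SimpleGraph W') →g G)
    (hcover : Set.range f ∪ Set.range g = Set.univ) (i : α) :
    {u | c u = i}.ncard ≤ 2 := by
  calc {u | c u = i}.ncard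
      = ({u | c u = i} ∩ Set.range f ∪ {u | c u = i} ∩ Set.range g).ncard := by
        rw [← Set.inter_union_distrib_left, hcover, Set.inter_univ]
    _ ≤ 1 + 1 := (Set.ncard_union_le _ _).trans <| add_le_add
        (ncard_fiber_inter_range_le_one hc f i) (ncard_fiber_inter_range_le_one hc g i)

namespace IsEDColoring

theorem of_adj_universal [Finite V] {c : V → Fin n}
    (hc : ∀ ⦃u v⦄, G.Adj u v → c u ≠ c v) (v₀ : V) (hv₀ : ∀ v, v ≠ v₀ → G.Adj v v₀)
    (hsurj : Function.Surjective c) (hfiber : ∀ i, {u | c u = i}.ncard ≤ 2) : IsEDColoring G c := by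
  have hpos (i : Fin n) : 1 ≤ {u | c u = i}.ncard := by
    obtain ⟨u, rfl⟩ := hsurj i
    exact (Set.ncard_pos (s := {x | c x = c u})).2 ⟨u, rfl⟩
  refine ⟨hc, fun v ↦ ⟨c v₀, ⟨v₀, rfl⟩, fun u hu ↦ ?_⟩,
    fun i j ↦ (hfiber i).trans (by linarith [hpos j])⟩
  obtain rfl : u = v₀ := by_contra fun hne ↦ hc (hv₀ u hne) hu
  by_cases hv : v = u
  · exact .inl hv.symm
  · exact .inr (hv₀ v hv)

theorem comp_iso {c : W → Fin n} (hc : IsEDColoring H c) (e : G ≃g H) :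
    IsEDColoring G (c ∘ e) := by
  obtain ⟨hproper, hdom, hequi⟩ := hc
  refine ⟨fun u v huv ↦ hproper (e.map_adj_iff.2 huv), fun v ↦ ?_, fun i j ↦ ?_⟩
  · obtain ⟨j, ⟨u, hu⟩, hj⟩ := hdom (e v)
    refine ⟨j, ⟨e.symm u, by simpa using hu⟩, fun u hu ↦ ?_⟩
    simpa [e.map_adj_iff] using hj (e u) hu
  · have hcard (k : Fin n) : {u | (c ∘ e) u = k}.ncard = {w | c w = k}.ncard :=
      Set.ncard_preimage_of_injective_subset_range (s := {w | c w = k}) e.injective (by simp)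
    simpa only [hcard] using hequi i j

theorem card_le_of_top_hom [Fintype W] {c : V → Fin n} (hc : IsEDColoring G c)
    (f : (⊤ : SimpleGraph W) →g G) : Fintype.card W ≤ n := by
  simpa using Fintype.card_le_of_injective _ (injective_comp_of_top_hom hc.1 f)

end IsEDColoring

theorem edcn_le {c : V → Fin n} (hc : IsEDColoring G c) : edcn G ≤ n :=
  Nat.sInf_le ⟨c, hc⟩

theorem card_le_edcn [Fintype W] {c : V → Fin n} (hc : IsEDColoring G c)
    (f : (⊤ : SimpleGraph W) →g G) : Fintype.card W ≤ edcn G :=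
  le_csInf ⟨n, c, hc⟩ fun _ ⟨_, hd⟩ ↦ hd.card_le_of_top_hom f

theorem edcn_congr (e : G ≃g H) : edcn G = edcn H := by
  unfold edcn
  congr 1
  ext n
  exact ⟨fun ⟨c, hc⟩ ↦ ⟨c ∘ e.symm, hc.comp_iso e.symm⟩,
    fun ⟨c, hc⟩ ↦ ⟨c ∘ e, hc.comp_iso e⟩⟩

def completeGraphWedge (α β : Type*) : SimpleGraph (Option (α ⊕ β)) :=
  (⊤ : SimpleGraph (Option α)).map (Function.Embedding.optionMap Function.Embedding.inl) ⊔
    (⊤ : SimpleGraph (Option β)).map (Function.Embedding.optionMap Function.Embedding.inr)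

namespace completeGraphWedge

variable (α β : Type*)

def inlHom : (⊤ : SimpleGraph (Option α)) →g completeGraphWedge α β :=
  (Hom.ofLE le_sup_left).comp (Embedding.map _ ⊤).toHom

def inrHom : (⊤ : SimpleGraph (Option β)) →g completeGraphWedge α β :=
  (Hom.ofLE le_sup_right).comp (Embedding.map _ ⊤).toHom

theorem range_inlHom_union_range_inrHom :
    Set.range (inlHom α β) ∪ Set.range (inrHom α β) = Set.univ := by
  refine Set.eq_univ_of_forall ?_
  rintro (_ | x | y)
  · exact .inl ⟨none, rfl⟩
  · exact .inl ⟨some x, rfl⟩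
  · exact .inr ⟨some y, rfl⟩

theorem adj_none {x : Option (α ⊕ β)} (hx : x ≠ none) :
    (completeGraphWedge α β).Adj x none := by
  rcases x with _ | x | y
  · exact absurd rfl hx
  · exact (inlHom α β).map_adj (show (⊤ : SimpleGraph (Option α)).Adj (some x) none by simp)
  · exact (inrHom α β).map_adj (show (⊤ : SimpleGraph (Option β)).Adj (some y) none by simp)

variable (a b : ℕ)

def coloring : Option (Fin a ⊕ Fin b) → Fin (max a b + 1)
  | none => 0
  | some (.inl i) => (i.castLE (le_max_left a b)).succ
  | some (.inr j) => (j.castLE (le_max_right a b)).succ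

theorem injective_coloring_comp_map_inl :
    Function.Injective (coloring a b ∘ Option.map Sum.inl) := by
  rintro (_ | i) (_ | i') h <;> simp_all [coloring, Fin.ext_iff]

theorem injective_coloring_comp_map_inr :
    Function.Injective (coloring a b ∘ Option.map Sum.inr) := by
  rintro (_ | j) (_ | j') h <;> simp_all [coloring, Fin.ext_iff]

theorem coloring_ne_of_adj ⦃x y : Option (Fin a ⊕ Fin b)⦄
    (h : (completeGraphWedge (Fin a) (Fin b)).Adj x y) : coloring a b x ≠ coloring a b y := by
  rcases h with ⟨-, u, v, huv, rfl, rfl⟩ | ⟨-, u, v, huv, rfl, rfl⟩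
  · exact (injective_coloring_comp_map_inl a b).ne huv
  · exact (injective_coloring_comp_map_inr a b).ne huv

theorem coloring_surjective : Function.Surjective (coloring a b) := by
  refine Fin.cases ⟨none, rfl⟩ fun k ↦ ?_
  rcases lt_or_ge k.val a with hk | hk
  · exact ⟨some (.inl ⟨k, hk⟩), by simp [coloring]⟩
  · exact ⟨some (.inr ⟨k, by omega⟩), by simp [coloring]⟩

theorem isEDColoring_coloring :
    IsEDColoring (completeGraphWedge (Fin a) (Fin b)) (coloring a b) :=
  .of_adj_universal (coloring_ne_of_adj a b) none (fun _ ↦ adj_none _ _) (coloring_surjective a b)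
    (ncard_fiber_le_two (coloring_ne_of_adj a b) (inlHom _ _) (inrHom _ _)
      (range_inlHom_union_range_inrHom _ _))

end completeGraphWedge

open completeGraphWedge in
theorem edcn_completeGraphWedge_fin (a b : ℕ) :
    edcn (completeGraphWedge (Fin a) (Fin b)) = max a b + 1 := by
  have hc := isEDColoring_coloring a b
  have hleft := card_le_edcn hc (inlHom _ _)
  have hright := card_le_edcn hc (inrHom _ _)
  simp only [Fintype.card_option, Fintype.card_fin] at hleft hright
  exact le_antisymm (edcn_le hc) (by omega)

namespace biStar

variable {a b : ℕ}

def edge : Option (Fin a ⊕ Fin b) → Sym2 (Option (Fin a) ⊕ Option (Fin b))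
  | none => s(.inl none, .inr none)
  | some (.inl i) => s(.inl none, .inl (some i))
  | some (.inr j) => s(.inr none, .inr (some j))

theorem edge_mem_edgeSet (m : Option (Fin a ⊕ Fin b)) : edge m ∈ (biStar a b).edgeSet := by
  rcases m with _ | i | j <;> simp [edge, biStar]

theorem edge_injective : Function.Injective (edge (a := a) (b := b)) := by
  rintro (_ | i | j) (_ | i' | j') h <;> simp_all [edge]

theorem exists_edge_eq {e : Sym2 (Option (Fin a) ⊕ Option (Fin b))}
    (he : e ∈ (biStar a b).edgeSet) : ∃ m, edge m = e := by
  induction e using Sym2.ind with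
  | _ x y =>
    simp only [biStar, mem_edgeSet, fromRel_adj] at he
    obtain ⟨-, (⟨rfl, rfl⟩ | ⟨rfl, i, rfl⟩ | ⟨rfl, j, rfl⟩) |
      (⟨rfl, rfl⟩ | ⟨rfl, i, rfl⟩ | ⟨rfl, j, rfl⟩)⟩ := he
    exacts [⟨none, rfl⟩, ⟨some (.inl i), rfl⟩, ⟨some (.inr j), rfl⟩, ⟨none, Sym2.eq_swap⟩,
      ⟨some (.inl i), Sym2.eq_swap⟩, ⟨some (.inr j), Sym2.eq_swap⟩]

noncomputable def edgeEquiv : Option (Fin a ⊕ Fin b) ≃ (biStar a b).edgeSet :=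
  .ofBijective (fun m ↦ ⟨edge m, edge_mem_edgeSet m⟩)
    ⟨fun _ _ h ↦ edge_injective (congrArg Subtype.val h),
      fun e ↦ (exists_edge_eq e.2).imp fun _ hm ↦ Subtype.ext hm⟩

/-- Two edges of the bi-star meet unless they are pendant edges at different centers. -/
noncomputable def lineGraphIso :
    completeGraphWedge (Fin a) (Fin b) ≃g (biStar a b).lineGraph where
  toEquiv := edgeEquiv
  map_rel_iff' {m m'} := by
    rw [lineGraph_adj_iff_exists]
    rcases m with _ | i | j <;> rcases m' with _ | i' | j' <;>
      simp [edgeEquiv, edge, completeGraphWedge, map_adj', Option.map_eq_some_iff]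

end biStar

theorem edcn_lineGraph_biStar_general (a b : ℕ) :
    edcn (biStar a b).lineGraph = max a b + 1 := by
  rw [← edcn_congr biStar.lineGraphIso, edcn_completeGraphWedge_fin]

theorem edcn_lineGraph_biStar (a b : ℕ) (ha : 2 ≤ a) (hb : 2 ≤ b) :
    edcn (biStar a b).lineGraph = max a b + 1 :=
  edcn_lineGraph_biStar_general a b
end

section
/- For every integer t ≥ 4, the equitable dominator chromatic number of the line graph of the wheel graph W_{1,t} equals t, i.e., χ_ed(L(W_{1,t})) = t. -/
open SimpleGraph

/-- The wheel graph `W_{1,t}`: the join of a central vertex `none` with the cycle `C_t`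
on the vertices `some i`, `i : ZMod t`. -/
def wheel (t : ℕ) : SimpleGraph (Option (ZMod t)) :=
  SimpleGraph.fromRel (fun x y =>
    x = none ∨ ∃ i : ZMod t, x = some i ∧ y = some (i + 1))

namespace EDWheel

variable {t : ℕ}

/-- The spoke edge from the center to rim vertex `i`. -/
def spoke (t : ℕ) (i : ZMod t) : Sym2 (Option (ZMod t)) := s(none, some i)

/-- The rim edge from `i` to `i+1`. -/
def rim (t : ℕ) (i : ZMod t) : Sym2 (Option (ZMod t)) := s(some i, some (i + 1))

@[simp] lemma spoke_def (i : ZMod t) : spoke t i = s(none, some i) := rfl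
@[simp] lemma rim_def (i : ZMod t) : rim t i = s(some i, some (i + 1)) := rfl

lemma wheel_adj (x y : Option (ZMod t)) :
    (wheel t).Adj x y ↔ x ≠ y ∧
      ((x = none ∨ ∃ i : ZMod t, x = some i ∧ y = some (i + 1)) ∨
       (y = none ∨ ∃ i : ZMod t, y = some i ∧ x = some (i + 1))) :=
  fromRel_adj _ x y

lemma spoke_mem (i : ZMod t) : spoke t i ∈ (wheel t).edgeSet := by
  rw [spoke_def, mem_edgeSet, wheel_adj]
  exact ⟨by simp, Or.inl (Or.inl rfl)⟩

lemma rim_mem (h1 : (1 : ZMod t) ≠ 0) (i : ZMod t) : rim t i ∈ (wheel t).edgeSet := by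
  rw [rim_def, mem_edgeSet, wheel_adj]
  refine ⟨?_, Or.inl (Or.inr ⟨i, rfl, rfl⟩)⟩
  intro hcon
  rw [Option.some.injEq] at hcon
  exact h1 (by linear_combination -hcon)

lemma edge_cases {e : Sym2 (Option (ZMod t))} (he : e ∈ (wheel t).edgeSet) :
    (∃ i, e = spoke t i) ∨ (∃ i, e = rim t i) := by
  induction e using Sym2.ind with
  | _ x y =>
    rw [mem_edgeSet, wheel_adj] at he
    obtain ⟨hne, h⟩ := he
    match x, y with
    | none, none => exact absurd rfl hne
    | none, some i => exact Or.inl ⟨i, rfl⟩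
    | some i, none => exact Or.inl ⟨i, Sym2.eq_swap⟩
    | some i, some j =>
      rcases h with (h | ⟨k, hk1, hk2⟩) | (h | ⟨k, hk1, hk2⟩)
      · exact absurd h (by simp)
      · cases hk1; cases hk2; exact Or.inr ⟨i, rfl⟩
      · exact absurd h (by simp)
      · cases hk1; cases hk2; exact Or.inr ⟨j, Sym2.eq_swap⟩

/-- The underlying symmetric color function. -/
def cf (t : ℕ) : Option (ZMod t) → Option (ZMod t) → ZMod t
  | none, none => 0
  | none, some i => i
  | some i, none => i
  | some i, some j =>
    if j = i + 1 ∧ i ≠ j + 1 then i - 1 else if i = j + 1 ∧ j ≠ i + 1 then j - 1 else 0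

lemma cf_symm (x y : Option (ZMod t)) : cf t x y = cf t y x := by
  match x, y with
  | none, none => rfl
  | none, some i => rfl
  | some i, none => rfl
  | some i, some j =>
    show (if j = i + 1 ∧ i ≠ j + 1 then i - 1 else if i = j + 1 ∧ j ≠ i + 1 then j - 1 else 0)
      = (if i = j + 1 ∧ j ≠ i + 1 then j - 1 else if j = i + 1 ∧ i ≠ j + 1 then i - 1 else 0)
    by_cases hA : j = i + 1 ∧ i ≠ j + 1 <;> by_cases hB : i = j + 1 ∧ j ≠ i + 1
    · exact absurd hB.1 hA.2
    · rw [if_pos hA, if_neg hB, if_pos hA]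
    · rw [if_neg hA, if_pos hB, if_pos hB]
    · rw [if_neg hA, if_neg hB, if_neg hB, if_neg hA]

/-- The color of an edge (as an element of `Sym2`). -/
def csym (t : ℕ) : Sym2 (Option (ZMod t)) → ZMod t := Sym2.lift ⟨cf t, cf_symm⟩

@[simp] lemma csym_spoke (i : ZMod t) : csym t (spoke t i) = i := rfl

lemma csym_rim (h2 : (2 : ZMod t) ≠ 0) (i : ZMod t) : csym t (rim t i) = i - 1 := by
  have h : i ≠ (i + 1) + 1 := by
    intro h; exact h2 (by linear_combination -h)
  show (if i + 1 = i + 1 ∧ i ≠ (i + 1) + 1 then i - 1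
    else if i = (i + 1) + 1 ∧ i + 1 ≠ i + 1 then (i+1) - 1 else 0) = i - 1
  rw [if_pos ⟨rfl, h⟩]

lemma spoke_inj {i j : ZMod t} (h : spoke t i = spoke t j) : i = j := by
  rw [spoke_def, spoke_def, Sym2.eq_iff] at h
  rcases h with ⟨-, h⟩ | ⟨h, -⟩ <;> simp_all

lemma rim_inj (h2 : (2 : ZMod t) ≠ 0) {i j : ZMod t} (h : rim t i = rim t j) : i = j := by
  rw [rim_def, rim_def, Sym2.eq_iff] at h
  rcases h with ⟨h, -⟩ | ⟨ha, hb⟩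
  · simpa using h
  · rw [Option.some.injEq] at ha hb
    exact absurd (show (2 : ZMod t) = 0 by linear_combination hb - ha) h2

lemma spoke_ne_rim (i j : ZMod t) : spoke t i ≠ rim t j := by
  simp [spoke_def, rim_def, Sym2.eq_iff]

theorem upper (h1 : (1 : ZMod t) ≠ 0) (h2 : (2 : ZMod t) ≠ 0) [NeZero t] :
    ∃ c : (wheel t).edgeSet → Fin t, IsEDColoring (wheel t).lineGraph c := by
  classical
  let E : ZMod t ≃ Fin t := Fintype.equivFinOfCardEq (ZMod.card t)
  refine ⟨fun e => E (csym t e), ?_, ?_, ?_⟩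
  · -- proper
    rintro ⟨u, hu⟩ ⟨v, hv⟩ hadj h
    rw [lineGraph_adj_iff_exists] at hadj
    obtain ⟨hne, w, hw1, hw2⟩ := hadj
    simp only at hw1 hw2
    have hne' : u ≠ v := fun h => hne (by simpa using h)
    have hcol : csym t u = csym t v := E.injective h
    rcases edge_cases hu with ⟨i, rfl⟩ | ⟨i, rfl⟩ <;>
      rcases edge_cases hv with ⟨j, rfl⟩ | ⟨j, rfl⟩
    · rw [csym_spoke, csym_spoke] at hcol
      exact hne' (by rw [hcol])
    · -- spoke i vs rim j
      rw [csym_spoke, csym_rim h2] at hcol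
      rw [spoke_def] at hw1; rw [rim_def] at hw2
      rw [Sym2.mem_iff] at hw1 hw2
      rcases hw1 with rfl | rfl
      · rcases hw2 with h | h <;> simp at h
      · rcases hw2 with h | h <;> rw [Option.some.injEq] at h
        · exact h1 (by linear_combination hcol - h)
        · exact h2 (by linear_combination hcol - h)
    · -- rim i vs spoke j
      rw [csym_rim h2, csym_spoke] at hcol
      rw [rim_def] at hw1; rw [spoke_def] at hw2
      rw [Sym2.mem_iff] at hw1 hw2
      rcases hw2 with rfl | rfl
      · rcases hw1 with h | h <;> simp at h
      · rcases hw1 with h | h <;> rw [Option.some.injEq] at h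
        · exact h1 (by linear_combination -hcol - h)
        · exact h2 (by linear_combination -hcol - h)
    · -- rim i vs rim j
      rw [csym_rim h2, csym_rim h2] at hcol
      exact hne' (by rw [show i = j by linear_combination hcol])
  · -- domination
    rintro ⟨v, hv⟩
    rcases edge_cases hv with ⟨i, rfl⟩ | ⟨i, rfl⟩
    · -- spoke i dominates class (i-1) = {spoke (i-1), rim i}
      refine ⟨E (i - 1), ⟨⟨spoke t (i-1), spoke_mem _⟩, rfl⟩, ?_⟩
      rintro ⟨u, hu⟩ h
      have hcu : csym t u = i - 1 := E.injective h
      right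
      rw [lineGraph_adj_iff_exists]
      rcases edge_cases hu with ⟨j, rfl⟩ | ⟨j, rfl⟩
      · -- u = spoke j with j = i - 1
        rw [csym_spoke] at hcu
        refine ⟨?_, none, by simp, by simp⟩
        intro hh
        have hji : i = j := spoke_inj (Subtype.mk_eq_mk.mp hh)
        exact h1 (by linear_combination hji + hcu)
      · -- u = rim j with j - 1 = i - 1, so j = i
        rw [csym_rim h2] at hcu
        obtain rfl : j = i := by linear_combination hcu
        exact ⟨fun hh => spoke_ne_rim _ _ (Subtype.mk_eq_mk.mp hh), some j,
          by simp, by simp⟩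
    · -- rim i dominates class i = {spoke i, rim (i+1)}
      refine ⟨E i, ⟨⟨spoke t i, spoke_mem _⟩, rfl⟩, ?_⟩
      rintro ⟨u, hu⟩ h
      have hcu : csym t u = i := E.injective h
      right
      rw [lineGraph_adj_iff_exists]
      rcases edge_cases hu with ⟨j, rfl⟩ | ⟨j, rfl⟩
      · -- u = spoke j with j = i
        rw [csym_spoke] at hcu
        obtain rfl : j = i := hcu
        exact ⟨fun hh => spoke_ne_rim _ _ (Subtype.mk_eq_mk.mp hh).symm, some j,
          by simp, by simp⟩
      · -- u = rim j with j - 1 = i, so j = i + 1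
        rw [csym_rim h2] at hcu
        obtain rfl : j = i + 1 := by linear_combination hcu
        refine ⟨?_, some (i+1), by simp, by simp⟩
        intro hh
        have hrr : i = i + 1 := rim_inj h2 (Subtype.mk_eq_mk.mp hh)
        exact h1 (by linear_combination -hrr)
  · -- equitable: every class has exactly two elements
    have key : ∀ k : Fin t,
        {u : (wheel t).edgeSet | E (csym t ↑u) = k} =
          {⟨spoke t (E.symm k), spoke_mem _⟩, ⟨rim t (E.symm k + 1), rim_mem h1 _⟩} := by
      intro k
      ext ⟨u, hu⟩
      simp only [Set.mem_setOf_eq, Set.mem_insert_iff, Set.mem_singleton_iff,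
        Subtype.mk_eq_mk]
      constructor
      · intro h
        have hcu : csym t u = E.symm k := by
          rw [← E.symm_apply_apply (csym t u), h]
        rcases edge_cases hu with ⟨j, rfl⟩ | ⟨j, rfl⟩
        · rw [csym_spoke] at hcu; exact Or.inl (by rw [hcu])
        · rw [csym_rim h2] at hcu
          exact Or.inr (by rw [show j = E.symm k + 1 by linear_combination hcu])
      · rintro (rfl | rfl)
        · rw [csym_spoke, E.apply_symm_apply]
        · rw [csym_rim h2, show E.symm k + 1 - 1 = E.symm k from by ring,
            E.apply_symm_apply]
    have hcard : ∀ k : Fin t, {u : (wheel t).edgeSet | E (csym t ↑u) = k}.ncard = 2 := by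
      intro k
      rw [key k, Set.ncard_pair]
      exact fun hh => spoke_ne_rim _ _ (Subtype.mk_eq_mk.mp hh)
    intro i j
    rw [show {u : (wheel t).edgeSet | (fun e => E (csym t ↑e)) u = i} =
      {u : (wheel t).edgeSet | E (csym t ↑u) = i} from rfl, hcard i]
    rw [show {u : (wheel t).edgeSet | (fun e => E (csym t ↑e)) u = j} =
      {u : (wheel t).edgeSet | E (csym t ↑u) = j} from rfl, hcard j]
    omega

theorem lower {n : ℕ} [NeZero t] (c : (wheel t).edgeSet → Fin n)
    (hc : IsEDColoring (wheel t).lineGraph c) : t ≤ n := by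
  have hinj : Function.Injective (fun i : ZMod t => c ⟨spoke t i, spoke_mem i⟩) := by
    intro i j h
    by_contra hne
    have hadj : (wheel t).lineGraph.Adj ⟨spoke t i, spoke_mem i⟩ ⟨spoke t j, spoke_mem j⟩ := by
      rw [lineGraph_adj_iff_exists]
      exact ⟨fun hh => hne (spoke_inj (Subtype.mk_eq_mk.mp hh)),
        none, by simp, by simp⟩
    exact hc.1 hadj h
  calc t = Fintype.card (ZMod t) := (ZMod.card t).symm
    _ ≤ Fintype.card (Fin n) := Fintype.card_le_of_injective _ hinj
    _ = n := Fintype.card_fin n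

end EDWheel

theorem edcn_lineGraph_wheel (t : ℕ) (ht : 4 ≤ t) :
    edcn (wheel t).lineGraph = t := by
  haveI : NeZero t := ⟨by omega⟩
  have h1 : (1 : ZMod t) ≠ 0 := by
    simpa using (ZMod.natCast_eq_zero_iff 1 t).not.mpr
      (fun h => absurd (Nat.le_of_dvd one_pos h) (by omega))
  have h2 : (2 : ZMod t) ≠ 0 := by
    simpa using (ZMod.natCast_eq_zero_iff 2 t).not.mpr
      (fun h => absurd (Nat.le_of_dvd two_pos h) (by omega))
  have hmem : t ∈ {n : ℕ | ∃ c : (wheel t).edgeSet → Fin n,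
      IsEDColoring (wheel t).lineGraph c} := EDWheel.upper h1 h2
  refine le_antisymm (Nat.sInf_le hmem) (le_csInf ⟨t, hmem⟩ ?_)
  rintro n ⟨c, hc⟩
  exact EDWheel.lower c hc
end

section
/- For every integer t ≥ 4 with t ≡ 0, 2, or 3 (mod 4), the equitable dominator chromatic number of the line graph of the helm graph H_{1,t,t} equals t + ⌈t/2⌉ + ⌈t/4⌉, i.e., χ_ed(L(H_{1,t,t})) = t + ⌈t/2⌉ + ⌈t/4⌉. -/
open SimpleGraph

/-- The helm graph `H_{1,t,t}`: the wheel `W_{1,t}` (center `none`, rim vertices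
`some (Sum.inl i)`) together with a pendant vertex `some (Sum.inr i)` attached to each
rim vertex. -/
def helm (t : ℕ) : SimpleGraph (Option (ZMod t ⊕ ZMod t)) :=
  SimpleGraph.fromRel (fun x y =>
    (∃ i : ZMod t, x = none ∧ y = some (Sum.inl i)) ∨
    (∃ i : ZMod t, x = some (Sum.inl i) ∧ y = some (Sum.inl (i + 1))) ∨
    (∃ i : ZMod t, x = some (Sum.inl i) ∧ y = some (Sum.inr i)))


/-! transfer of ED colorings along a graph equivalence -/

theorem IsEDColoring.comp_equiv {V V' : Type*} {G : SimpleGraph V} {G' : SimpleGraph V'}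
    (e : V ≃ V') (hadj : ∀ a b, G.Adj a b ↔ G'.Adj (e a) (e b)) {n : ℕ} {c : V' → Fin n}
    (h : IsEDColoring G' c) : IsEDColoring G (c ∘ e) := by
  obtain ⟨hp, hd, he⟩ := h
  refine ⟨fun u v huv => hp ((hadj u v).mp huv), fun v => ?_, fun i j => ?_⟩
  · obtain ⟨j, ⟨u', hu'⟩, hdom⟩ := hd (e v)
    refine ⟨j, ⟨e.symm u', by simpa using hu'⟩, fun u hu => ?_⟩
    rcases hdom (e u) hu with h1 | h1
    · exact Or.inl (e.injective h1)
    · exact Or.inr ((hadj v u).mpr h1)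
  · have key : ∀ i : Fin n, {u | (c ∘ e) u = i}.ncard = {u | c u = i}.ncard := by
      intro i
      have : {u | (c ∘ e) u = i} = e.symm '' {u | c u = i} := by
        ext u
        constructor
        · intro h; exact ⟨e u, h, by simp⟩
        · rintro ⟨u', h1, rfl⟩; simpa using h1
      rw [this, Set.ncard_image_of_injective _ e.symm.injective]
    rw [key i, key j]; exact he i j

theorem edcn_eq_of_equiv {V V' : Type*} {G : SimpleGraph V} {G' : SimpleGraph V'}
    (e : V ≃ V') (hadj : ∀ a b, G.Adj a b ↔ G'.Adj (e a) (e b)) : edcn G = edcn G' := by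
  have hsymm : ∀ a b, G'.Adj a b ↔ G.Adj (e.symm a) (e.symm b) := by
    intro a b; rw [hadj (e.symm a) (e.symm b)]; simp
  unfold edcn
  congr 1
  ext n
  exact ⟨fun ⟨c, hc⟩ => ⟨c ∘ e.symm, hc.comp_equiv e.symm hsymm⟩,
    fun ⟨c, hc⟩ => ⟨c ∘ e, hc.comp_equiv e hadj⟩⟩

abbrev HW (t : ℕ) := ZMod t ⊕ ZMod t ⊕ ZMod t

def lgRel (t : ℕ) : HW t → HW t → Prop
  | .inl _, .inl _ => True
  | .inl i, .inr (.inl j) => i = j ∨ i = j + 1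
  | .inl i, .inr (.inr j) => i = j
  | .inr (.inl i), .inr (.inl j) => j = i + 1
  | .inr (.inl i), .inr (.inr j) => j = i ∨ j = i + 1
  | _, _ => False

/-- explicit model of the line graph of the helm graph -/
def LG (t : ℕ) : SimpleGraph (HW t) := SimpleGraph.fromRel (lgRel t)

def phiE (t : ℕ) : HW t → Sym2 (Option (ZMod t ⊕ ZMod t))
  | .inl i => s(none, some (.inl i))
  | .inr (.inl i) => s(some (.inl i), some (.inl (i+1)))
  | .inr (.inr i) => s(some (.inl i), some (.inr i))




section
variable {t : ℕ} (ht : 4 ≤ t)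
include ht

lemma zmod_ne_add_one (i : ZMod t) : i ≠ i + 1 := by
  haveI : NeZero t := ⟨by omega⟩
  intro h
  have h2 : (0 : ZMod t) = 1 := by
    have := add_right_cancel (a := (0:ZMod t)) (b := i) (c := (1:ZMod t)) ?_
    · exact this
    · simpa [add_comm] using h
  have : (1 : ZMod t).val = 1 := by
    haveI : Fact (1 < t) := ⟨by omega⟩
    exact ZMod.val_one t
  rw [← h2] at this
  simp [ZMod.val_zero] at this

lemma phiE_mem_edgeSet (w : HW t) : phiE t w ∈ (helm t).edgeSet := by
  match w with
  | .inl i =>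
    show (helm t).Adj none (some (.inl i))
    exact ⟨by simp, Or.inl (Or.inl ⟨i, rfl, rfl⟩)⟩
  | .inr (.inl i) =>
    show (helm t).Adj (some (.inl i)) (some (.inl (i+1)))
    exact ⟨by simpa using (zmod_ne_add_one ht i), Or.inl (Or.inr (Or.inl ⟨i, rfl, rfl⟩))⟩
  | .inr (.inr i) =>
    show (helm t).Adj (some (.inl i)) (some (.inr i))
    exact ⟨by simp, Or.inl (Or.inr (Or.inr ⟨i, rfl, rfl⟩))⟩

lemma zmod_val_add_one (i : ZMod t) : (i + 1).val = if i.val + 1 = t then 0 else i.val + 1 := by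
  haveI : NeZero t := ⟨by omega⟩
  have v1 : (1 : ZMod t).val = 1 := by
    haveI : Fact (1 < t) := ⟨by omega⟩
    exact ZMod.val_one t
  have hlt : i.val < t := ZMod.val_lt i
  rw [ZMod.val_add, v1]
  split_ifs with h
  · rw [h, Nat.mod_self]
  · exact Nat.mod_eq_of_lt (by omega)

lemma zmod_val_eq_iff (i j : ZMod t) : i = j ↔ i.val = j.val := by
  haveI : NeZero t := ⟨by omega⟩
  exact ⟨fun h => h ▸ rfl, fun h => ZMod.val_injective _ h⟩

lemma zmod_ne_add_two (i j : ZMod t) (h3 : 3 ≤ t) (h1 : i = j + 1) (h2 : j = i + 1) : False := by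
  haveI : NeZero t := ⟨by omega⟩
  rw [zmod_val_eq_iff ht, zmod_val_add_one ht] at h1 h2
  have hi : i.val < t := ZMod.val_lt i
  have hj : j.val < t := ZMod.val_lt j
  split_ifs at h1 h2 <;> omega

lemma phiE_injective : Function.Injective (phiE t) := by
  intro w₁ w₂ h
  match w₁, w₂ with
  | .inl i, .inl j => simp [phiE, Sym2.eq_iff] at h; simp [h]
  | .inl i, .inr (.inl j) => simp [phiE, Sym2.eq_iff] at h
  | .inl i, .inr (.inr j) => simp [phiE, Sym2.eq_iff] at h
  | .inr (.inl i), .inl j => simp [phiE, Sym2.eq_iff] at h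
  | .inr (.inr i), .inl j => simp [phiE, Sym2.eq_iff] at h
  | .inr (.inl i), .inr (.inl j) =>
    simp [phiE, Sym2.eq_iff] at h
    rcases h with ⟨rfl, -⟩ | ⟨h1, h2⟩
    · rfl
    · exact absurd (zmod_ne_add_two ht i j (by omega) h1 h2.symm) (fun h => h)
  | .inr (.inl i), .inr (.inr j) => simp [phiE, Sym2.eq_iff] at h
  | .inr (.inr i), .inr (.inl j) => simp [phiE, Sym2.eq_iff] at h
  | .inr (.inr i), .inr (.inr j) =>
    simp [phiE, Sym2.eq_iff] at h
    simp [h]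

omit ht in
lemma phiE_surjective (e : Sym2 (Option (ZMod t ⊕ ZMod t))) (he : e ∈ (helm t).edgeSet) :
    ∃ w : HW t, phiE t w = e := by
  induction e using Sym2.ind with
  | _ x y =>
    have hadj : (helm t).Adj x y := he
    obtain ⟨hne, hrel⟩ := hadj
    rcases hrel with (⟨i, rfl, rfl⟩ | ⟨i, rfl, rfl⟩ | ⟨i, rfl, rfl⟩) |
        (⟨i, rfl, rfl⟩ | ⟨i, rfl, rfl⟩ | ⟨i, rfl, rfl⟩)
    · exact ⟨.inl i, rfl⟩
    · exact ⟨.inr (.inl i), rfl⟩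
    · exact ⟨.inr (.inr i), rfl⟩
    · exact ⟨.inl i, Sym2.eq_swap⟩
    · exact ⟨.inr (.inl i), Sym2.eq_swap⟩
    · exact ⟨.inr (.inr i), Sym2.eq_swap⟩

end

section
variable {t : ℕ} (ht : 4 ≤ t)
include ht

lemma lg_adj_iff (w₁ w₂ : HW t) :
    (helm t).lineGraph.Adj ⟨phiE t w₁, phiE_mem_edgeSet ht w₁⟩
      ⟨phiE t w₂, phiE_mem_edgeSet ht w₂⟩ ↔ (LG t).Adj w₁ w₂ := by
  rw [lineGraph_adj_iff_exists]
  have hne : (⟨phiE t w₁, phiE_mem_edgeSet ht w₁⟩ : (helm t).edgeSet) ≠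
      ⟨phiE t w₂, phiE_mem_edgeSet ht w₂⟩ ↔ w₁ ≠ w₂ := by
    rw [ne_eq, Subtype.mk_eq_mk]
    exact not_congr (phiE_injective ht).eq_iff
  rw [hne]
  show _ ↔ (SimpleGraph.fromRel (lgRel t)).Adj w₁ w₂
  rw [SimpleGraph.fromRel_adj]
  match w₁, w₂ with
  | .inl i, .inl j =>
    simp [phiE, lgRel, Sym2.mem_iff]
  | .inl i, .inr (.inl j) =>
    simp [phiE, lgRel, Sym2.mem_iff]
  | .inl i, .inr (.inr j) =>
    simp [phiE, lgRel, Sym2.mem_iff]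
  | .inr (.inl i), .inl j =>
    simp [phiE, lgRel, Sym2.mem_iff]
    tauto
  | .inr (.inr i), .inl j =>
    simp [phiE, lgRel, Sym2.mem_iff]
    tauto
  | .inr (.inl i), .inr (.inl j) =>
    simp [phiE, lgRel, Sym2.mem_iff]
    intro hij
    constructor
    · rintro ((h | h) | h | h)
      · exact absurd h hij
      · exact Or.inr h
      · exact Or.inl h.symm
      · exact absurd h hij
    · rintro (h | h)
      · exact Or.inr (Or.inl h.symm)
      · exact Or.inl (Or.inr h)
  | .inr (.inl i), .inr (.inr j) =>
    simp [phiE, lgRel, Sym2.mem_iff]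
    tauto
  | .inr (.inr i), .inr (.inl j) =>
    simp [phiE, lgRel, Sym2.mem_iff]
  | .inr (.inr i), .inr (.inr j) =>
    simp [phiE, lgRel, Sym2.mem_iff]
end

section
variable {t : ℕ} (ht : 4 ≤ t)
include ht

lemma adj_P_iff (i : ZMod t) (x : HW t) :
    (LG t).Adj (.inr (.inr i)) x ↔
      x = .inl i ∨ ∃ j, (i = j ∨ i = j + 1) ∧ x = .inr (.inl j) := by
  show (SimpleGraph.fromRel _).Adj _ _ ↔ _
  rw [SimpleGraph.fromRel_adj]
  match x with
  | .inl j => simp [lgRel]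
  | .inr (.inl j) => simp [lgRel]
  | .inr (.inr j) => simp [lgRel]

lemma zmod_succ_ne_self (i : ZMod t) : i + 1 ≠ i := by
  haveI : NeZero t := ⟨by omega⟩
  rw [ne_eq, zmod_val_eq_iff ht, zmod_val_add_one ht]
  have := ZMod.val_lt (n := t) i
  split_ifs <;> omega

lemma zmod_two_step (m m' : ZMod t) (h1 : m = m' + 1) (h2 : m' = m + 1) : False := by
  haveI : NeZero t := ⟨by omega⟩
  rw [zmod_val_eq_iff ht, zmod_val_add_one ht] at h1 h2
  have := ZMod.val_lt (n := t) m
  have := ZMod.val_lt (n := t) m'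
  split_ifs at h1 h2 <;> omega

lemma clique_Q (i : ZMod t) {x y : HW t}
    (hx : x = .inr (.inr i) ∨ (LG t).Adj (.inr (.inr i)) x)
    (hy : y = .inr (.inr i) ∨ (LG t).Adj (.inr (.inr i)) y)
    (hxy : x ≠ y) : (LG t).Adj x y := by
  haveI : NeZero t := ⟨by omega⟩
  have hsymm : ∀ a b : HW t, (LG t).Adj a b → (LG t).Adj b a := fun a b h => h.symm
  rcases hx with rfl | hx
  · rcases hy with rfl | hy
    · exact absurd rfl hxy
    · exact hy
  rcases hy with rfl | hy
  · exact hx.symm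
  -- both adjacent to P i
  rw [adj_P_iff ht] at hx hy
  rcases hx with rfl | ⟨m, hm, rfl⟩
  · rcases hy with rfl | ⟨m', hm', rfl⟩
    · exact absurd rfl hxy
    · -- S i vs C m'
      exact ⟨by simp, Or.inl (by simp [lgRel]; tauto)⟩
  · rcases hy with rfl | ⟨m', hm', rfl⟩
    · -- C m vs S i
      exact ⟨by simp, Or.inr (by simp [lgRel]; tauto)⟩
    · -- C m vs C m'
      have hmm : m ≠ m' := fun h => hxy (by rw [h])
      rcases hm with rfl | hm
      · rcases hm' with h | h
        · exact absurd h.symm (fun hh => hmm hh.symm)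
        · -- m = m' + 1
          exact ⟨by simpa using hmm, Or.inr (by simp [lgRel]; exact h)⟩
      · rcases hm' with h | h
        · -- i = m + 1, i = m' : m' = m + 1
          subst h
          exact ⟨by simpa using hmm, Or.inl (by simp [lgRel]; exact hm)⟩
        · -- i = m + 1, i = m' + 1: m = m'
          exfalso
          apply hmm
          rw [zmod_val_eq_iff ht] at hm h ⊢
          rw [zmod_val_add_one ht] at hm h
          have := ZMod.val_lt (n := t) m
          have := ZMod.val_lt (n := t) m'
          split_ifs at hm h <;> omega
end

section Lower
open Finset
variable {t : ℕ} (ht : 4 ≤ t) [NeZero t] {n : ℕ} (c : HW t → Fin n) (hc : IsEDColoring (LG t) c)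
include ht hc

lemma pendant_witness (i : ZMod t) :
    ∃ (j : Fin n) (x : HW t), (univ.filter (fun u => c u = j)) = {x} ∧
      (x = .inr (.inr i) ∨ (LG t).Adj (.inr (.inr i)) x) := by
  obtain ⟨j, ⟨u₀, hu₀⟩, hdom⟩ := hc.2.1 (.inr (.inr i))
  refine ⟨j, u₀, ?_, hdom u₀ hu₀⟩
  rw [Finset.eq_singleton_iff_unique_mem]
  refine ⟨by simpa using hu₀, fun u hu => ?_⟩
  simp only [Finset.mem_filter, Finset.mem_univ, true_and] at hu
  by_contra hne
  have hadj : (LG t).Adj u u₀ := clique_Q ht i (hdom u hu) (hdom u₀ hu₀) hne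
  exact hc.1 hadj (by rw [hu, hu₀])

theorem lower_bound (hmod : t % 4 = 0 ∨ t % 4 = 2 ∨ t % 4 = 3) :
    t + (t + 1) / 2 + (t + 3) / 4 ≤ n := by
  classical
  set F : Fin n → Finset (HW t) := fun j => univ.filter (fun u => c u = j) with hF
  -- total count
  have hcard3t : ∑ j, (F j).card = 3 * t := by
    rw [← Finset.card_eq_sum_card_fiberwise (f := c) (s := univ) (t := univ) (by simp)]
    simp [Fintype.card_sum, ZMod.card t]
    ring
  -- a singleton class exists
  obtain ⟨j₀, x₀, hj₀, -⟩ := pendant_witness ht c hc (0 : ZMod t)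
  -- ncard to Finset.card
  have hncard : ∀ j : Fin n, {u | c u = j}.ncard = (F j).card := by
    intro j
    rw [← Set.ncard_coe_finset]
    congr 1
    ext u
    simp [hF]
  -- all classes have size ≤ 2
  have h2 : ∀ j, (F j).card ≤ 2 := by
    intro j
    have := hc.2.2 j j₀
    rw [hncard j, hncard j₀] at this
    have e1 : (F j₀).card = 1 := by
      show (univ.filter (fun u => c u = j₀)).card = 1
      rw [hj₀]
      simp
    omega
  set A : Finset (Fin n) := univ.filter (fun j => (F j).card = 1) with hA
  -- sum splitting
  have hsplit : ∑ j ∈ A, (F j).card + ∑ j ∈ univ.filter (fun j => ¬ (F j).card = 1), (F j).card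
      = 3 * t := by
    rw [Finset.sum_filter_add_sum_filter_not]
    exact hcard3t
  have s1 : ∑ j ∈ A, (F j).card = A.card := by
    rw [Finset.sum_congr rfl (fun j hj => by
      simp only [hA, Finset.mem_filter] at hj
      exact hj.2)]
    simp
  have hcompl : A.card + (univ.filter (fun j => ¬ (F j).card = 1)).card = n := by
    have h := Finset.card_filter_add_card_filter_not (s := (univ : Finset (Fin n)))
      (p := fun j => (F j).card = 1)
    simp only [Finset.card_univ, Fintype.card_fin] at h
    rw [hA]
    convert h using 3
  have s2 : ∑ j ∈ univ.filter (fun j => ¬ (F j).card = 1), (F j).card ≤ 2 * (n - A.card) := by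
    calc ∑ j ∈ univ.filter (fun j => ¬ (F j).card = 1), (F j).card
        ≤ ∑ j ∈ univ.filter (fun j => ¬ (F j).card = 1), 2 :=
          Finset.sum_le_sum (fun j _ => h2 j)
      _ = 2 * (n - A.card) := by
          rw [Finset.sum_const]
          have : (univ.filter (fun j => ¬ (F j).card = 1)).card = n - A.card := by omega
          rw [this]
          ring
  have spar : 2 ∣ ∑ j ∈ univ.filter (fun j => ¬ (F j).card = 1), (F j).card := by
    apply Finset.dvd_sum
    intro j hj
    simp only [Finset.mem_filter] at hj
    have := h2 j
    omega
  have haN : A.card ≤ n := by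
    calc A.card ≤ (univ : Finset (Fin n)).card := Finset.card_le_card (Finset.filter_subset _ _)
      _ = n := by simp
  -- covering: t ≤ 2 * A.card
  have hcov : t ≤ 2 * A.card := by
    have hw := fun i : ZMod t => pendant_witness ht c hc i
    choose w x hfib hmem using hw
    have hwA : ∀ i, w i ∈ A := by
      intro i
      simp only [hA, Finset.mem_filter, Finset.mem_univ, true_and]
      show (univ.filter (fun u => c u = w i)).card = 1
      rw [hfib i]
      simp
    have hcardt : (univ : Finset (ZMod t)).card = ∑ j ∈ A, (univ.filter (fun i => w i = j)).card :=
      Finset.card_eq_sum_card_fiberwise (fun i _ => hwA i)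
    have hbound : ∀ j ∈ A, (univ.filter (fun i => w i = j)).card ≤ 2 := by
      intro j hj
      rcases Finset.eq_empty_or_nonempty (univ.filter (fun i => w i = j)) with he | ⟨i₀, hi₀⟩
      · simp [he]
      · simp only [Finset.mem_filter, Finset.mem_univ, true_and] at hi₀
        have hxeq : ∀ i, w i = j → x i = x i₀ := by
          intro i hi
          have h1 := hfib i
          have h2 := hfib i₀
          rw [hi] at h1
          rw [hi₀] at h2
          rw [h1] at h2
          exact Finset.singleton_injective h2
        have key : ∀ i, w i = j →
            ((∃ m, x i₀ = .inl m ∧ i = m) ∨ (∃ m, x i₀ = .inr (.inr m) ∧ i = m) ∨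
             (∃ m, x i₀ = .inr (.inl m) ∧ (i = m ∨ i = m + 1))) := by
          intro i hi
          have hx := hmem i
          rw [hxeq i hi] at hx
          match hxi : x i₀ with
          | .inl m =>
            rw [hxi] at hx
            rcases hx with h | h
            · exact absurd h (by simp)
            · rw [adj_P_iff ht] at h
              rcases h with h | ⟨j', hj', h⟩
              · simp only [Sum.inl.injEq] at h
                exact Or.inl ⟨m, rfl, h.symm⟩
              · exact absurd h (by simp)
          | .inr (.inr m) =>
            rw [hxi] at hx
            rcases hx with h | h
            · simp only [Sum.inr.injEq] at h
              exact Or.inr (Or.inl ⟨m, rfl, h.symm⟩)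
            · rw [adj_P_iff ht] at h
              rcases h with h | ⟨j', hj', h⟩ <;> simp at h
          | .inr (.inl m) =>
            rw [hxi] at hx
            rcases hx with h | h
            · exact absurd h (by simp)
            · rw [adj_P_iff ht] at h
              rcases h with h | ⟨j', hj', h⟩
              · exact absurd h (by simp)
              · simp only [Sum.inr.injEq, Sum.inl.injEq] at h
                subst h
                exact Or.inr (Or.inr ⟨m, rfl, hj'⟩)
        match hxi : x i₀ with
        | .inl m =>
          have hsub : univ.filter (fun i => w i = j) ⊆ {m} := by
            intro i hi
            simp only [Finset.mem_filter, Finset.mem_univ, true_and] at hi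
            rcases key i hi with ⟨m', hm', him⟩ | ⟨m', hm', _⟩ | ⟨m', hm', _⟩ <;>
              rw [hxi] at hm' <;> first
              | (simp only [Sum.inl.injEq] at hm'; subst hm'; simp [him])
              | simp at hm'
          calc (univ.filter (fun i => w i = j)).card ≤ ({m} : Finset (ZMod t)).card :=
              Finset.card_le_card hsub
            _ ≤ 2 := by simp
        | .inr (.inr m) =>
          have hsub : univ.filter (fun i => w i = j) ⊆ {m} := by
            intro i hi
            simp only [Finset.mem_filter, Finset.mem_univ, true_and] at hi
            rcases key i hi with ⟨m', hm', _⟩ | ⟨m', hm', him⟩ | ⟨m', hm', _⟩ <;>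
              rw [hxi] at hm' <;> first
              | (simp only [Sum.inr.injEq] at hm'; subst hm'; simp [him])
              | simp at hm'
          calc (univ.filter (fun i => w i = j)).card ≤ ({m} : Finset (ZMod t)).card :=
              Finset.card_le_card hsub
            _ ≤ 2 := by simp
        | .inr (.inl m) =>
          have hsub : univ.filter (fun i => w i = j) ⊆ {m, m + 1} := by
            intro i hi
            simp only [Finset.mem_filter, Finset.mem_univ, true_and] at hi
            rcases key i hi with ⟨m', hm', _⟩ | ⟨m', hm', _⟩ | ⟨m', hm', him⟩ <;>
              rw [hxi] at hm'
            · simp at hm'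
            · simp at hm'
            · simp only [Sum.inr.injEq, Sum.inl.injEq] at hm'
              subst hm'
              simp only [Finset.mem_insert, Finset.mem_singleton]
              exact him
          calc (univ.filter (fun i => w i = j)).card ≤ ({m, m + 1} : Finset (ZMod t)).card :=
              Finset.card_le_card hsub
            _ ≤ 2 := (Finset.card_insert_le _ _).trans (by simp)
    calc t = (univ : Finset (ZMod t)).card := by simp [ZMod.card t]
      _ = ∑ j ∈ A, (univ.filter (fun i => w i = j)).card := hcardt
      _ ≤ ∑ j ∈ A, 2 := Finset.sum_le_sum hbound
      _ = 2 * A.card := by rw [Finset.sum_const]; ring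
  obtain ⟨M, hM⟩ := spar
  omega
end Lower

section Upper
variable {t : ℕ} (ht : 4 ≤ t) [NeZero t]
include ht

lemma build_ED (N : ℕ) (u : HW t → ℕ) (pt : HW t → HW t)
    (hbound : ∀ w, u w < N)
    (hproper : ∀ w w', (LG t).Adj w w' → u w ≠ u w')
    (hfib : ∀ w w', u w' = u w → w' = w ∨ w' = pt w)
    (hsurj : ∀ j, j < N → ∃ w, u w = j)
    (hdomw : ∀ w, ∃ m : ZMod t, pt (.inr (.inl m)) = .inr (.inl m) ∧
      (w = .inr (.inl m) ∨ (LG t).Adj w (.inr (.inl m)))) :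
    ∃ c : HW t → Fin N, IsEDColoring (LG t) c := by
  refine ⟨fun w => ⟨u w, hbound w⟩, ?_, ?_, ?_⟩
  · intro w w' hadj h
    exact hproper w w' hadj (by simpa [Fin.ext_iff] using h)
  · intro w
    obtain ⟨m, hptm, hm⟩ := hdomw w
    refine ⟨⟨u (.inr (.inl m)), hbound _⟩, ⟨.inr (.inl m), rfl⟩, fun v hv => ?_⟩
    have : v = .inr (.inl m) := by
      rcases hfib (.inr (.inl m)) v (by simpa [Fin.ext_iff] using hv) with h | h
      · exact h
      · rw [hptm] at h; exact h
    subst this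
    rcases hm with h | h
    · exact Or.inl h.symm
    · exact Or.inr h
  · intro i j
    beta_reduce
    have hle : ∀ i : Fin N, {w | (⟨u w, hbound w⟩ : Fin N) = i}.ncard ≤ 2 := by
      intro i
      obtain ⟨wi, hwi⟩ := hsurj i.1 i.2
      have hsub : {w | (⟨u w, hbound w⟩ : Fin N) = i} ⊆ {wi, pt wi} := by
        intro w hw
        simp only [Set.mem_setOf_eq, Fin.ext_iff] at hw
        rcases hfib wi w (by simp [hw, hwi]) with h | h
        · exact Or.inl h
        · exact Or.inr h
      calc {w | (⟨u w, hbound w⟩ : Fin N) = i}.ncard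
          ≤ ({wi, pt wi} : Set (HW t)).ncard := Set.ncard_le_ncard hsub (Set.toFinite _)
        _ ≤ 2 := by
            refine (Set.ncard_insert_le _ _).trans ?_
            simp
    have hge : ∀ i : Fin N, 1 ≤ {w | (⟨u w, hbound w⟩ : Fin N) = i}.ncard := by
      intro i
      obtain ⟨wi, hwi⟩ := hsurj i.1 i.2
      refine (Set.ncard_pos (Set.toFinite _)).mpr ⟨wi, ?_⟩
      simp [Set.mem_setOf_eq, Fin.ext_iff, hwi]
    have := hle i
    have := hge j
    omega
end Upper

def ucolB (t : ℕ) : HW t → ℕ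
  | .inl i => i.val
  | .inr (.inr i) => if i.val = 0 then t else i.val - 1
  | .inr (.inl i) => if i.val = 1 then t - 1
      else if i.val % 2 = 0 then t + 1 + i.val / 2
      else t + 1 + (t + 1) / 2 + (i.val - 3) / 4

def ptB (t : ℕ) : HW t → HW t
  | .inl i => if i.val = t - 1 then .inr (.inl ((1 : ℕ) : ZMod t))
      else .inr (.inr (((i.val + 1 : ℕ) : ZMod t)))
  | .inr (.inr i) => if i.val = 0 then .inr (.inr i) else .inl (((i.val - 1 : ℕ) : ZMod t))
  | .inr (.inl i) => if i.val = 1 then .inl (((t - 1 : ℕ) : ZMod t))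
      else if i.val % 2 = 0 then .inr (.inl i)
      else if i.val % 4 = 3 then .inr (.inl (((i.val + 2 : ℕ) : ZMod t)))
      else .inr (.inl (((i.val - 2 : ℕ) : ZMod t)))

section SchemeB
variable {t : ℕ} (ht : 4 ≤ t) [NeZero t]
include ht

lemma veqz (i j : ZMod t) (h : i.val = j.val) : i = j := (zmod_val_eq_iff ht i j).mpr h

lemma vcast (m : ℕ) (h : m < t) : ((m : ZMod t)).val = m := ZMod.val_cast_of_lt h

lemma vsucc_cases (i j : ZMod t) (h : i = j + 1) :
    (j.val + 1 < t ∧ i.val = j.val + 1) ∨ (j.val = t - 1 ∧ i.val = 0) := by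
  rw [zmod_val_eq_iff ht, zmod_val_add_one ht] at h
  have h1 : i.val < t := ZMod.val_lt i
  have h2 : j.val < t := ZMod.val_lt j
  split_ifs at h <;> [right; left] <;> omega

lemma adj_elim {w w' : HW t} (h : (LG t).Adj w w') :
    w ≠ w' ∧ (lgRel t w w' ∨ lgRel t w' w) := (SimpleGraph.fromRel_adj _ _ _).mp h

lemma hboundB (hm : t % 4 = 2 ∨ t % 4 = 3) (w : HW t) :
    ucolB t w < t + (t + 1) / 2 + (t + 3) / 4 := by
  match w with
  | .inl i =>
    have := ZMod.val_lt i
    simp only [ucolB]; omega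
  | .inr (.inr i) =>
    have := ZMod.val_lt i
    simp only [ucolB]; split_ifs <;> omega
  | .inr (.inl i) =>
    have := ZMod.val_lt i
    simp only [ucolB]; split_ifs <;> omega

lemma hproperB (hm : t % 4 = 2 ∨ t % 4 = 3) (w w' : HW t) (hadj : (LG t).Adj w w') :
    ucolB t w ≠ ucolB t w' := by
  obtain ⟨hne, hrel⟩ := adj_elim ht hadj
  match w, w' with
  | .inl i, .inl j =>
    have hv : i.val ≠ j.val := fun hv => hne (by rw [veqz ht i j hv])
    simp only [ucolB]; omega
  | .inl i, .inr (.inl j) =>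
    simp only [lgRel, or_false] at hrel
    have hi := ZMod.val_lt i; have hj := ZMod.val_lt j
    have hv : i.val = j.val ∨ (j.val + 1 < t ∧ i.val = j.val + 1) ∨ (j.val = t - 1 ∧ i.val = 0) := by
      rcases hrel with h | h
      · exact Or.inl ((zmod_val_eq_iff ht i j).mp h)
      · exact Or.inr (vsucc_cases ht i j h)
    simp only [ucolB]; split_ifs <;> omega
  | .inr (.inl j), .inl i =>
    simp only [lgRel, false_or] at hrel
    have hi := ZMod.val_lt i; have hj := ZMod.val_lt j
    have hv : i.val = j.val ∨ (j.val + 1 < t ∧ i.val = j.val + 1) ∨ (j.val = t - 1 ∧ i.val = 0) := by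
      rcases hrel with h | h
      · exact Or.inl ((zmod_val_eq_iff ht i j).mp h)
      · exact Or.inr (vsucc_cases ht i j h)
    simp only [ucolB]; split_ifs <;> omega
  | .inl i, .inr (.inr j) =>
    simp only [lgRel, or_false] at hrel
    have hi := ZMod.val_lt i
    have hv := (zmod_val_eq_iff ht i j).mp hrel
    simp only [ucolB]; split_ifs <;> omega
  | .inr (.inr j), .inl i =>
    simp only [lgRel, false_or] at hrel
    have hi := ZMod.val_lt i
    have hv := (zmod_val_eq_iff ht i j).mp hrel
    simp only [ucolB]; split_ifs <;> omega
  | .inr (.inl i), .inr (.inl j) =>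
    have hi := ZMod.val_lt i; have hj := ZMod.val_lt j
    have hv : (i.val + 1 < t ∧ j.val = i.val + 1) ∨ (i.val = t - 1 ∧ j.val = 0) ∨
        (j.val + 1 < t ∧ i.val = j.val + 1) ∨ (j.val = t - 1 ∧ i.val = 0) := by
      simp only [lgRel] at hrel
      rcases hrel with h | h
      · rcases vsucc_cases ht j i h with h | h
        · exact Or.inl h
        · exact Or.inr (Or.inl h)
      · exact Or.inr (Or.inr (vsucc_cases ht i j h))
    simp only [ucolB]; split_ifs <;> omega
  | .inr (.inl i), .inr (.inr j) =>
    simp only [lgRel, or_false] at hrel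
    have hi := ZMod.val_lt i; have hj := ZMod.val_lt j
    simp only [ucolB]; split_ifs <;> omega
  | .inr (.inr j), .inr (.inl i) =>
    simp only [lgRel, false_or] at hrel
    have hi := ZMod.val_lt i; have hj := ZMod.val_lt j
    simp only [ucolB]; split_ifs <;> omega
  | .inr (.inr i), .inr (.inr j) =>
    simp only [lgRel, or_self] at hrel

lemma hfibB (hm : t % 4 = 2 ∨ t % 4 = 3) (w w' : HW t) (h : ucolB t w' = ucolB t w) :
    w' = w ∨ w' = ptB t w := by
  have h4 : 4 ≤ t := ht
  match w, w' with
  | .inl i, .inl j =>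
    left
    simp only [ucolB] at h
    rw [veqz ht j i h]
  | .inl i, .inr (.inr j) =>
    right
    have hi := ZMod.val_lt i; have hj := ZMod.val_lt j
    simp only [ucolB] at h
    have hj0 : ¬ j.val = 0 := by intro h0; rw [if_pos h0] at h; omega
    rw [if_neg hj0] at h
    have hit : ¬ i.val = t - 1 := by omega
    simp only [ptB]
    rw [if_neg hit]
    have : j = ((i.val + 1 : ℕ) : ZMod t) := by
      apply veqz ht
      rw [vcast ht _ (by omega : i.val + 1 < t)]
      omega
    rw [this]
  | .inl i, .inr (.inl j) =>
    right
    have hi := ZMod.val_lt i; have hj := ZMod.val_lt j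
    simp only [ucolB] at h
    have hj1 : j.val = 1 := by
      by_contra h1
      rw [if_neg h1] at h
      split_ifs at h <;> omega
    rw [if_pos hj1] at h
    have hit : i.val = t - 1 := by omega
    simp only [ptB]
    rw [if_pos hit]
    have : j = ((1 : ℕ) : ZMod t) := by
      apply veqz ht
      rw [vcast ht _ (by omega : 1 < t)]
      exact hj1
    rw [this]
  | .inr (.inr i), .inl j =>
    right
    have hi := ZMod.val_lt i; have hj := ZMod.val_lt j
    simp only [ucolB] at h
    have hi0 : ¬ i.val = 0 := by intro h0; rw [if_pos h0] at h; omega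
    rw [if_neg hi0] at h
    simp only [ptB]
    rw [if_neg hi0]
    have : j = ((i.val - 1 : ℕ) : ZMod t) := by
      apply veqz ht
      rw [vcast ht _ (by omega : i.val - 1 < t)]
      omega
    rw [this]
  | .inr (.inr i), .inr (.inr j) =>
    left
    have hi := ZMod.val_lt i; have hj := ZMod.val_lt j
    simp only [ucolB] at h
    have : j.val = i.val := by split_ifs at h <;> omega
    rw [veqz ht j i this]
  | .inr (.inr i), .inr (.inl j) =>
    exfalso
    have hi := ZMod.val_lt i; have hj := ZMod.val_lt j
    simp only [ucolB] at h
    split_ifs at h <;> omega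
  | .inr (.inl i), .inl j =>
    right
    have hi := ZMod.val_lt i; have hj := ZMod.val_lt j
    simp only [ucolB] at h
    have hi1 : i.val = 1 := by
      by_contra h1
      rw [if_neg h1] at h
      split_ifs at h <;> omega
    rw [if_pos hi1] at h
    simp only [ptB]
    rw [if_pos hi1]
    have : j = ((t - 1 : ℕ) : ZMod t) := by
      apply veqz ht
      rw [vcast ht _ (by omega : t - 1 < t)]
      omega
    rw [this]
  | .inr (.inl i), .inr (.inr j) =>
    exfalso
    have hi := ZMod.val_lt i; have hj := ZMod.val_lt j
    simp only [ucolB] at h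
    split_ifs at h <;> omega
  | .inr (.inl i), .inr (.inl j) =>
    have hi := ZMod.val_lt i; have hj := ZMod.val_lt j
    simp only [ucolB] at h
    by_cases hi1 : i.val = 1
    · left
      have hj1 : j.val = 1 := by
        by_contra h1
        rw [if_pos hi1, if_neg h1] at h
        split_ifs at h <;> omega
      rw [veqz ht j i (by omega : j.val = i.val)]
    · rw [if_neg hi1] at h
      by_cases hie : i.val % 2 = 0
      · left
        rw [if_pos hie] at h
        have hj0 : j.val = i.val := by
          by_cases hj1 : j.val = 1
          · rw [if_pos hj1] at h; omega
          · rw [if_neg hj1] at h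
            split_ifs at h <;> omega
        rw [veqz ht j i hj0]
      · rw [if_neg hie] at h
        have hjv : ¬ j.val = 1 ∧ ¬ j.val % 2 = 0 := by
          constructor
          · intro h1; rw [if_pos h1] at h; omega
          · intro h2
            by_cases hj1 : j.val = 1
            · omega
            · rw [if_neg hj1, if_pos h2] at h; omega
        rw [if_neg hjv.1, if_neg hjv.2] at h
        -- both odd ≥ 3, (j.val - 3)/4 = (i.val - 3)/4
        have hkey : j.val = i.val ∨ (i.val % 4 = 3 ∧ j.val = i.val + 2) ∨
            (i.val % 4 = 1 ∧ j.val = i.val - 2) := by omega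
        simp only [ptB]
        rw [if_neg hi1, if_neg hie]
        rcases hkey with hk | ⟨hk3, hk⟩ | ⟨hk1, hk⟩
        · left
          rw [veqz ht j i hk]
        · right
          rw [if_pos hk3]
          have : j = ((i.val + 2 : ℕ) : ZMod t) := by
            apply veqz ht
            rw [vcast ht _ (by omega : i.val + 2 < t)]
            exact hk
          rw [this]
        · right
          rw [if_neg (by omega : ¬ i.val % 4 = 3)]
          have : j = ((i.val - 2 : ℕ) : ZMod t) := by
            apply veqz ht
            rw [vcast ht _ (by omega : i.val - 2 < t)]
            exact hk
          rw [this]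

lemma hsurjB (hm : t % 4 = 2 ∨ t % 4 = 3) (j : ℕ) (hj : j < t + (t + 1) / 2 + (t + 3) / 4) :
    ∃ w : HW t, ucolB t w = j := by
  rcases Nat.lt_or_ge j t with h1 | h1
  · exact ⟨.inl ((j : ℕ) : ZMod t), by simp only [ucolB]; exact vcast ht j h1⟩
  rcases Nat.eq_or_lt_of_le h1 with h2 | h2
  · refine ⟨.inr (.inr (0 : ZMod t)), ?_⟩
    simp [ucolB]
    omega
  rcases Nat.lt_or_ge j (t + 1 + (t + 1) / 2) with h3 | h3
  · refine ⟨.inr (.inl ((2 * (j - t - 1) : ℕ) : ZMod t)), ?_⟩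
    have hlt : 2 * (j - t - 1) < t := by omega
    simp only [ucolB, vcast ht _ hlt]
    rw [if_neg (by omega), if_pos (by omega)]
    omega
  · refine ⟨.inr (.inl ((4 * (j - (t + 1 + (t + 1) / 2)) + 3 : ℕ) : ZMod t)), ?_⟩
    have hlt : 4 * (j - (t + 1 + (t + 1) / 2)) + 3 < t := by omega
    simp only [ucolB, vcast ht _ hlt]
    rw [if_neg (by omega), if_neg (by omega)]
    omega

lemma hdomwB (hm : t % 4 = 2 ∨ t % 4 = 3) (w : HW t) :
    ∃ m : ZMod t, ptB t (.inr (.inl m)) = .inr (.inl m) ∧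
      (w = .inr (.inl m) ∨ (LG t).Adj w (.inr (.inl m))) := by
  have hfix : ∀ m : ZMod t, m.val % 2 = 0 → ptB t (.inr (.inl m)) = .inr (.inl m) := by
    intro m hme
    simp only [ptB]
    rw [if_neg (by omega), if_pos hme]
  match w with
  | .inl i =>
    have hi := ZMod.val_lt i
    by_cases hie : i.val % 2 = 0
    · exact ⟨i, hfix i hie, Or.inr ⟨by simp, Or.inl (Or.inl rfl)⟩⟩
    · refine ⟨((i.val - 1 : ℕ) : ZMod t), hfix _ (by rw [vcast ht _ (by omega)]; omega), Or.inr
        ⟨by simp, Or.inl (Or.inr ?_)⟩⟩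
      apply veqz ht
      rw [zmod_val_add_one ht, vcast ht _ (by omega : i.val - 1 < t)]
      rw [if_neg (by omega)]
      omega
  | .inr (.inr i) =>
    have hi := ZMod.val_lt i
    by_cases hie : i.val % 2 = 0
    · refine ⟨i, hfix i hie, Or.inr ⟨by simp, Or.inr (Or.inl rfl)⟩⟩
    · refine ⟨((i.val - 1 : ℕ) : ZMod t), hfix _ (by rw [vcast ht _ (by omega)]; omega), Or.inr
        ⟨by simp, Or.inr (Or.inr ?_)⟩⟩
      apply veqz ht
      rw [zmod_val_add_one ht, vcast ht _ (by omega : i.val - 1 < t)]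
      rw [if_neg (by omega)]
      omega
  | .inr (.inl i) =>
    have hi := ZMod.val_lt i
    by_cases hie : i.val % 2 = 0
    · exact ⟨i, hfix i hie, Or.inl rfl⟩
    · set mv : ℕ := if i.val + 1 = t then 0 else i.val + 1 with hmv
      have hmvlt : mv < t := by rw [hmv]; split_ifs <;> omega
      refine ⟨((mv : ℕ) : ZMod t), hfix _ (by rw [vcast ht _ hmvlt]; rw [hmv]; split_ifs <;> omega),
        Or.inr ⟨?_, Or.inl ?_⟩⟩
      · intro hcon
        have : i.val = mv := by
          have := congrArg (fun x : HW t => x) hcon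
          simp only [Sum.inr.injEq, Sum.inl.injEq] at hcon
          rw [hcon, vcast ht _ hmvlt]
        rw [hmv] at this
        split_ifs at this <;> omega
      · show (((mv : ℕ) : ZMod t)) = i + 1
        apply veqz ht
        rw [vcast ht _ hmvlt, zmod_val_add_one ht]

end SchemeB

def ucolA (t : ℕ) : HW t → ℕ
  | .inl i => i.val
  | .inr (.inr i) => if i.val = 0 then t - 1 else i.val - 1
  | .inr (.inl i) => if i.val % 2 = 0 then t + i.val / 2 else t + t / 2 + i.val / 4

def ptA (t : ℕ) : HW t → HW t
  | .inl i => if i.val = t - 1 then .inr (.inr ((0 : ℕ) : ZMod t))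
      else .inr (.inr (((i.val + 1 : ℕ) : ZMod t)))
  | .inr (.inr i) => if i.val = 0 then .inl (((t - 1 : ℕ) : ZMod t))
      else .inl (((i.val - 1 : ℕ) : ZMod t))
  | .inr (.inl i) => if i.val % 2 = 0 then .inr (.inl i)
      else if i.val % 4 = 1 then .inr (.inl (((i.val + 2 : ℕ) : ZMod t)))
      else .inr (.inl (((i.val - 2 : ℕ) : ZMod t)))

section SchemeA
variable {t : ℕ} (ht : 4 ≤ t) [NeZero t]
include ht

lemma hboundA (hm : t % 4 = 0) (w : HW t) :
    ucolA t w < t + (t + 1) / 2 + (t + 3) / 4 := by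
  match w with
  | .inl i => have := ZMod.val_lt i; simp only [ucolA]; omega
  | .inr (.inr i) => have := ZMod.val_lt i; simp only [ucolA]; split_ifs <;> omega
  | .inr (.inl i) => have := ZMod.val_lt i; simp only [ucolA]; split_ifs <;> omega

lemma hproperA (hm : t % 4 = 0) (w w' : HW t) (hadj : (LG t).Adj w w') :
    ucolA t w ≠ ucolA t w' := by
  obtain ⟨hne, hrel⟩ := adj_elim ht hadj
  match w, w' with
  | .inl i, .inl j =>
    have hv : i.val ≠ j.val := fun hv => hne (by rw [veqz ht i j hv])
    simp only [ucolA]; omega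
  | .inl i, .inr (.inl j) =>
    have hi := ZMod.val_lt i; have hj := ZMod.val_lt j
    simp only [ucolA]; split_ifs <;> omega
  | .inr (.inl j), .inl i =>
    have hi := ZMod.val_lt i; have hj := ZMod.val_lt j
    simp only [ucolA]; split_ifs <;> omega
  | .inl i, .inr (.inr j) =>
    simp only [lgRel, or_false] at hrel
    have hi := ZMod.val_lt i
    have hv := (zmod_val_eq_iff ht i j).mp hrel
    simp only [ucolA]; split_ifs <;> omega
  | .inr (.inr j), .inl i =>
    simp only [lgRel, false_or] at hrel
    have hi := ZMod.val_lt i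
    have hv := (zmod_val_eq_iff ht i j).mp hrel
    simp only [ucolA]; split_ifs <;> omega
  | .inr (.inl i), .inr (.inl j) =>
    have hi := ZMod.val_lt i; have hj := ZMod.val_lt j
    have hv : (i.val + 1 < t ∧ j.val = i.val + 1) ∨ (i.val = t - 1 ∧ j.val = 0) ∨
        (j.val + 1 < t ∧ i.val = j.val + 1) ∨ (j.val = t - 1 ∧ i.val = 0) := by
      simp only [lgRel] at hrel
      rcases hrel with h | h
      · rcases vsucc_cases ht j i h with h | h
        · exact Or.inl h
        · exact Or.inr (Or.inl h)
      · exact Or.inr (Or.inr (vsucc_cases ht i j h))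
    simp only [ucolA]; split_ifs <;> omega
  | .inr (.inl i), .inr (.inr j) =>
    have hi := ZMod.val_lt i; have hj := ZMod.val_lt j
    simp only [ucolA]; split_ifs <;> omega
  | .inr (.inr j), .inr (.inl i) =>
    have hi := ZMod.val_lt i; have hj := ZMod.val_lt j
    simp only [ucolA]; split_ifs <;> omega
  | .inr (.inr i), .inr (.inr j) =>
    simp only [lgRel, or_self] at hrel

lemma hfibA (hm : t % 4 = 0) (w w' : HW t) (h : ucolA t w' = ucolA t w) :
    w' = w ∨ w' = ptA t w := by
  match w, w' with
  | .inl i, .inl j =>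
    left
    simp only [ucolA] at h
    rw [veqz ht j i h]
  | .inl i, .inr (.inr j) =>
    right
    have hi := ZMod.val_lt i; have hj := ZMod.val_lt j
    simp only [ucolA] at h
    simp only [ptA]
    by_cases hj0 : j.val = 0
    · rw [if_pos hj0] at h
      have hit : i.val = t - 1 := by omega
      rw [if_pos hit]
      have : j = ((0 : ℕ) : ZMod t) := veqz ht _ _ (by rw [vcast ht _ (by omega)]; omega)
      rw [this]
    · rw [if_neg hj0] at h
      have hit : ¬ i.val = t - 1 := by omega
      rw [if_neg hit]
      have : j = ((i.val + 1 : ℕ) : ZMod t) :=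
        veqz ht _ _ (by rw [vcast ht _ (by omega)]; omega)
      rw [this]
  | .inl i, .inr (.inl j) =>
    exfalso
    have hi := ZMod.val_lt i; have hj := ZMod.val_lt j
    simp only [ucolA] at h
    split_ifs at h <;> omega
  | .inr (.inr i), .inl j =>
    right
    have hi := ZMod.val_lt i; have hj := ZMod.val_lt j
    simp only [ucolA] at h
    simp only [ptA]
    by_cases hi0 : i.val = 0
    · rw [if_pos hi0] at h
      rw [if_pos hi0]
      have : j = ((t - 1 : ℕ) : ZMod t) :=
        veqz ht _ _ (by rw [vcast ht _ (by omega)]; omega)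
      rw [this]
    · rw [if_neg hi0] at h
      rw [if_neg hi0]
      have : j = ((i.val - 1 : ℕ) : ZMod t) :=
        veqz ht _ _ (by rw [vcast ht _ (by omega)]; omega)
      rw [this]
  | .inr (.inr i), .inr (.inr j) =>
    left
    have hi := ZMod.val_lt i; have hj := ZMod.val_lt j
    simp only [ucolA] at h
    have : j.val = i.val := by split_ifs at h <;> omega
    rw [veqz ht j i this]
  | .inr (.inr i), .inr (.inl j) =>
    exfalso
    have hi := ZMod.val_lt i; have hj := ZMod.val_lt j
    simp only [ucolA] at h
    split_ifs at h <;> omega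
  | .inr (.inl i), .inl j =>
    exfalso
    have hi := ZMod.val_lt i; have hj := ZMod.val_lt j
    simp only [ucolA] at h
    split_ifs at h <;> omega
  | .inr (.inl i), .inr (.inr j) =>
    exfalso
    have hi := ZMod.val_lt i; have hj := ZMod.val_lt j
    simp only [ucolA] at h
    split_ifs at h <;> omega
  | .inr (.inl i), .inr (.inl j) =>
    have hi := ZMod.val_lt i; have hj := ZMod.val_lt j
    simp only [ucolA] at h
    by_cases hie : i.val % 2 = 0
    · left
      rw [if_pos hie] at h
      have : j.val = i.val := by split_ifs at h <;> omega
      rw [veqz ht j i this]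
    · rw [if_neg hie] at h
      have hje : ¬ j.val % 2 = 0 := by
        intro h2; rw [if_pos h2] at h; omega
      rw [if_neg hje] at h
      have hkey : j.val = i.val ∨ (i.val % 4 = 1 ∧ j.val = i.val + 2) ∨
          (i.val % 4 = 3 ∧ j.val = i.val - 2) := by omega
      simp only [ptA]
      rw [if_neg hie]
      rcases hkey with hk | ⟨hk1, hk⟩ | ⟨hk3, hk⟩
      · left; rw [veqz ht j i hk]
      · right
        rw [if_pos hk1]
        have : j = ((i.val + 2 : ℕ) : ZMod t) :=
          veqz ht _ _ (by rw [vcast ht _ (by omega)]; omega)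
        rw [this]
      · right
        rw [if_neg (by omega : ¬ i.val % 4 = 1)]
        have : j = ((i.val - 2 : ℕ) : ZMod t) :=
          veqz ht _ _ (by rw [vcast ht _ (by omega)]; omega)
        rw [this]

lemma hsurjA (hm : t % 4 = 0) (j : ℕ) (hj : j < t + (t + 1) / 2 + (t + 3) / 4) :
    ∃ w : HW t, ucolA t w = j := by
  rcases Nat.lt_or_ge j t with h1 | h1
  · exact ⟨.inl ((j : ℕ) : ZMod t), by simp only [ucolA]; exact vcast ht j h1⟩
  rcases Nat.lt_or_ge j (t + t / 2) with h3 | h3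
  · refine ⟨.inr (.inl ((2 * (j - t) : ℕ) : ZMod t)), ?_⟩
    have hlt : 2 * (j - t) < t := by omega
    simp only [ucolA, vcast ht _ hlt]
    rw [if_pos (by omega)]
    omega
  · refine ⟨.inr (.inl ((4 * (j - t - t / 2) + 1 : ℕ) : ZMod t)), ?_⟩
    have hlt : 4 * (j - t - t / 2) + 1 < t := by omega
    simp only [ucolA, vcast ht _ hlt]
    rw [if_neg (by omega)]
    omega

lemma hdomwA (hm : t % 4 = 0) (w : HW t) :
    ∃ m : ZMod t, ptA t (.inr (.inl m)) = .inr (.inl m) ∧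
      (w = .inr (.inl m) ∨ (LG t).Adj w (.inr (.inl m))) := by
  have hfix : ∀ m : ZMod t, m.val % 2 = 0 → ptA t (.inr (.inl m)) = .inr (.inl m) := by
    intro m hme
    simp only [ptA]
    rw [if_pos hme]
  match w with
  | .inl i =>
    have hi := ZMod.val_lt i
    by_cases hie : i.val % 2 = 0
    · exact ⟨i, hfix i hie, Or.inr ⟨by simp, Or.inl (Or.inl rfl)⟩⟩
    · refine ⟨((i.val - 1 : ℕ) : ZMod t), hfix _ (by rw [vcast ht _ (by omega)]; omega), Or.inr
        ⟨by simp, Or.inl (Or.inr ?_)⟩⟩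
      apply veqz ht
      rw [zmod_val_add_one ht, vcast ht _ (by omega : i.val - 1 < t)]
      rw [if_neg (by omega)]
      omega
  | .inr (.inr i) =>
    have hi := ZMod.val_lt i
    by_cases hie : i.val % 2 = 0
    · refine ⟨i, hfix i hie, Or.inr ⟨by simp, Or.inr (Or.inl rfl)⟩⟩
    · refine ⟨((i.val - 1 : ℕ) : ZMod t), hfix _ (by rw [vcast ht _ (by omega)]; omega), Or.inr
        ⟨by simp, Or.inr (Or.inr ?_)⟩⟩
      apply veqz ht
      rw [zmod_val_add_one ht, vcast ht _ (by omega : i.val - 1 < t)]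
      rw [if_neg (by omega)]
      omega
  | .inr (.inl i) =>
    have hi := ZMod.val_lt i
    by_cases hie : i.val % 2 = 0
    · exact ⟨i, hfix i hie, Or.inl rfl⟩
    · set mv : ℕ := if i.val + 1 = t then 0 else i.val + 1 with hmv
      have hmvlt : mv < t := by rw [hmv]; split_ifs <;> omega
      refine ⟨((mv : ℕ) : ZMod t),
        hfix _ (by rw [vcast ht _ hmvlt]; rw [hmv]; split_ifs <;> omega),
        Or.inr ⟨?_, Or.inl ?_⟩⟩
      · intro hcon
        have : i.val = mv := by
          simp only [Sum.inr.injEq, Sum.inl.injEq] at hcon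
          rw [hcon, vcast ht _ hmvlt]
        rw [hmv] at this
        split_ifs at this <;> omega
      · show (((mv : ℕ) : ZMod t)) = i + 1
        apply veqz ht
        rw [vcast ht _ hmvlt, zmod_val_add_one ht]
end SchemeA


theorem edcn_lineGraph_helm_of_mod_four (t : ℕ) (ht : 4 ≤ t)
    (hmod : t % 4 = 0 ∨ t % 4 = 2 ∨ t % 4 = 3) :
    edcn (helm t).lineGraph = t + (t + 1) / 2 + (t + 3) / 4 := by
  haveI : NeZero t := ⟨by omega⟩
  have hbij : Function.Bijective (fun w : HW t => (⟨phiE t w, phiE_mem_edgeSet ht w⟩ :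
      (helm t).edgeSet)) := by
    constructor
    · intro a b hab
      exact phiE_injective ht (congrArg Subtype.val hab)
    · rintro ⟨e, he⟩
      obtain ⟨w, hw⟩ := phiE_surjective (t := t) e he
      exact ⟨w, Subtype.ext hw⟩
  let e : HW t ≃ (helm t).edgeSet := Equiv.ofBijective _ hbij
  have hadj : ∀ a b, (LG t).Adj a b ↔ (helm t).lineGraph.Adj (e a) (e b) :=
    fun a b => (lg_adj_iff ht a b).symm
  have htrans : edcn (LG t) = edcn (helm t).lineGraph := edcn_eq_of_equiv e hadj
  rw [← htrans]
  have hexists : ∃ c : HW t → Fin (t + (t + 1) / 2 + (t + 3) / 4), IsEDColoring (LG t) c := by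
    rcases hmod with hm | hm
    · exact build_ED ht _ (ucolA t) (ptA t) (hboundA ht hm) (hproperA ht hm) (hfibA ht hm)
        (hsurjA ht hm) (hdomwA ht hm)
    · exact build_ED ht _ (ucolB t) (ptB t) (hboundB ht (by omega)) (hproperB ht (by omega))
        (hfibB ht (by omega)) (hsurjB ht (by omega)) (hdomwB ht (by omega))
  apply le_antisymm
  · exact Nat.sInf_le hexists
  · refine le_csInf ⟨t + (t + 1) / 2 + (t + 3) / 4, hexists⟩ ?_
    intro n hn
    obtain ⟨c, hc⟩ := hn
    exact lower_bound ht c hc hmod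
end

section
/- For every integer t ≥ 5 with t ≡ 1 (mod 4), the equitable dominator chromatic number of the line graph of the helm graph H_{1,t,t} equals t + ⌈t/2⌉ + ⌊t/4⌋, i.e., χ_ed(L(H_{1,t,t})) = t + ⌈t/2⌉ + ⌊t/4⌋. -/
open SimpleGraph

namespace EDH

lemma isEDColoring_comp {V W : Type*} {G : SimpleGraph V} {H : SimpleGraph W}
    (φ : G ≃g H) {n : ℕ} {c : V → Fin n} (hc : IsEDColoring G c) :
    IsEDColoring H (c ∘ φ.symm) := by
  obtain ⟨h1, h2, h3⟩ := hc
  refine ⟨?_, ?_, ?_⟩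
  · intro u v huv
    exact h1 (φ.symm.map_adj_iff.mpr huv)
  · intro w
    obtain ⟨j, ⟨u0, hu0⟩, hj⟩ := h2 (φ.symm w)
    refine ⟨j, ⟨φ u0, by simpa using hu0⟩, ?_⟩
    intro u hu
    rcases hj (φ.symm u) hu with h | h
    · left; have := congrArg φ h; simpa using this
    · right
      have : H.Adj (φ (φ.symm w)) (φ (φ.symm u)) := φ.map_adj_iff.mpr h
      simpa using this
  · intro i j
    have key : ∀ i : Fin n, {u | (c ∘ φ.symm) u = i} = φ '' {u | c u = i} := by
      intro i
      ext w
      simp only [Set.mem_image, Set.mem_setOf_eq, Function.comp_apply]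
      constructor
      · intro h; exact ⟨φ.symm w, h, by simp⟩
      · rintro ⟨u, hu, rfl⟩; simpa using hu
    have inj : Function.Injective (φ : V → W) := φ.toEquiv.injective
    rw [key i, key j, Set.ncard_image_of_injective _ inj, Set.ncard_image_of_injective _ inj]
    exact h3 i j

lemma edcn_congr {V W : Type*} {G : SimpleGraph V} {H : SimpleGraph W}
    (φ : G ≃g H) : edcn G = edcn H := by
  unfold edcn
  congr 1
  ext n
  constructor
  · rintro ⟨c, hc⟩; exact ⟨c ∘ φ.symm, isEDColoring_comp φ hc⟩
  · rintro ⟨c, hc⟩; exact ⟨c ∘ φ, by simpa using isEDColoring_comp φ.symm hc⟩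


def HG (t : ℕ) : SimpleGraph (ZMod t ⊕ ZMod t ⊕ ZMod t) :=
  SimpleGraph.fromRel (fun x y => match x, y with
    | .inl _, .inl _ => True
    | .inl i, .inr (.inl j) => i = j ∨ i = j + 1
    | .inl i, .inr (.inr j) => j = i
    | .inr (.inl i), .inr (.inl j) => j = i + 1
    | .inr (.inl i), .inr (.inr j) => j = i ∨ j = i + 1
    | _, _ => False)

section
variable {t : ℕ}

lemma valt [NeZero t] (i : ZMod t) : i.val < t := ZMod.val_lt i

lemma casti [NeZero t] (i : ZMod t) : ((i.val : ℕ) : ZMod t) = i :=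
  ZMod.natCast_rightInverse i

lemma cast_succ_eq [NeZero t] {i : ZMod t} (w : ℕ) (h : w + 1 = i.val) :
    ((w : ℕ) : ZMod t) + 1 = i := by
  rw [show ((w : ℕ) : ZMod t) + 1 = ((w + 1 : ℕ) : ZMod t) by push_cast; ring, h, casti]

lemma cast_eq_add_one [NeZero t] {i : ZMod t} (w : ℕ) (h : w = i.val + 1) :
    ((w : ℕ) : ZMod t) = i + 1 := by
  rw [h, Nat.cast_add, Nat.cast_one, casti]

lemma val_add_one (ht : 5 ≤ t) (i : ZMod t) :
    (i + 1).val = if i.val + 1 = t then 0 else i.val + 1 := by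
  haveI : NeZero t := ⟨by omega⟩
  haveI : Fact (1 < t) := ⟨by omega⟩
  rw [ZMod.val_add, ZMod.val_one]
  have h := valt i
  split_ifs with h1
  · rw [h1, Nat.mod_self]
  · exact Nat.mod_eq_of_lt (by omega)

lemma val_eq_iff [NeZero t] (i j : ZMod t) : i = j ↔ i.val = j.val :=
  ⟨fun h => h ▸ rfl, fun h => ZMod.val_injective t h⟩

lemma one_ne_zero' (ht : 5 ≤ t) : (1 : ZMod t) ≠ 0 := by
  haveI : NeZero t := ⟨by omega⟩
  haveI : Fact (1 < t) := ⟨by omega⟩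
  rw [Ne, val_eq_iff, ZMod.val_one, ZMod.val_zero]; omega

lemma two_ne_zero' (ht : 5 ≤ t) : (2 : ZMod t) ≠ 0 := by
  haveI : NeZero t := ⟨by omega⟩
  rw [Ne, val_eq_iff, ZMod.val_zero, show ((2 : ZMod t)) = ((2 : ℕ) : ZMod t) by push_cast; ring,
    ZMod.val_cast_of_lt (by omega)]
  omega

lemma three_ne_zero' (ht : 5 ≤ t) : (3 : ZMod t) ≠ 0 := by
  haveI : NeZero t := ⟨by omega⟩
  rw [Ne, val_eq_iff, ZMod.val_zero, show ((3 : ZMod t)) = ((3 : ℕ) : ZMod t) by push_cast; ring,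
    ZMod.val_cast_of_lt (by omega)]
  omega

lemma self_ne_add_one (ht : 5 ≤ t) (i : ZMod t) : i ≠ i + 1 := by
  intro h
  nth_rewrite 1 [show i = i + 0 by ring] at h
  exact one_ne_zero' ht (by linear_combination -h)

/-- The map sending abstract indices to edges of the helm. -/
def fE (t : ℕ) (ht : 5 ≤ t) : ZMod t ⊕ ZMod t ⊕ ZMod t → (helm t).edgeSet
  | .inl i => ⟨s(none, some (Sum.inl i)), by
      rw [SimpleGraph.mem_edgeSet, helm, SimpleGraph.fromRel_adj]
      exact ⟨by simp, Or.inl (Or.inl ⟨i, rfl, rfl⟩)⟩⟩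
  | .inr (.inl i) => ⟨s(some (Sum.inl i), some (Sum.inl (i + 1))), by
      rw [SimpleGraph.mem_edgeSet, helm, SimpleGraph.fromRel_adj]
      exact ⟨by simpa using self_ne_add_one ht i, Or.inl (Or.inr (Or.inl ⟨i, rfl, rfl⟩))⟩⟩
  | .inr (.inr i) => ⟨s(some (Sum.inl i), some (Sum.inr i)), by
      rw [SimpleGraph.mem_edgeSet, helm, SimpleGraph.fromRel_adj]
      exact ⟨by simp, Or.inl (Or.inr (Or.inr ⟨i, rfl, rfl⟩))⟩⟩


end
section
variable {t : ℕ}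

lemma fE_inj (ht : 5 ≤ t) : Function.Injective (fE t ht) := by
  intro a b hab
  rcases a with i | i | i <;> rcases b with j | j | j <;>
    simp only [fE, Subtype.mk.injEq, Sym2.eq_iff, Option.some.injEq, Sum.inl.injEq,
      Sum.inr.injEq, reduceCtorEq, and_false, false_and, and_true, true_and, or_false,
      false_or, or_self] at hab
  · rw [hab]
  · rcases hab with ⟨h1, h2⟩ | ⟨h1, h2⟩
    · rw [h1]
    · exfalso
      apply two_ne_zero' ht
      linear_combination h2 - h1
  · rw [hab.1]

lemma fE_surj (ht : 5 ≤ t) : Function.Surjective (fE t ht) := by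
  rintro ⟨e, he⟩
  induction e using Sym2.ind with
  | _ x y =>
    rw [SimpleGraph.mem_edgeSet, helm, SimpleGraph.fromRel_adj] at he
    obtain ⟨hne, h | h⟩ := he
    · rcases h with ⟨i, rfl, rfl⟩ | ⟨i, rfl, rfl⟩ | ⟨i, rfl, rfl⟩
      · exact ⟨.inl i, rfl⟩
      · exact ⟨.inr (.inl i), rfl⟩
      · exact ⟨.inr (.inr i), rfl⟩
    · rcases h with ⟨i, rfl, rfl⟩ | ⟨i, rfl, rfl⟩ | ⟨i, rfl, rfl⟩
      · exact ⟨.inl i, Subtype.ext (Sym2.eq_swap)⟩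
      · exact ⟨.inr (.inl i), Subtype.ext (Sym2.eq_swap)⟩
      · exact ⟨.inr (.inr i), Subtype.ext (Sym2.eq_swap)⟩

lemma fE_mapRel (ht : 5 ≤ t) (a b : ZMod t ⊕ ZMod t ⊕ ZMod t) :
    (helm t).lineGraph.Adj (fE t ht a) (fE t ht b) ↔ (HG t).Adj a b := by
  have hne : fE t ht a = fE t ht b ↔ a = b :=
    ⟨fun h => fE_inj ht h, fun h => by rw [h]⟩
  rw [SimpleGraph.lineGraph_adj_iff_exists, HG, SimpleGraph.fromRel_adj, Ne, hne]
  refine and_congr_right fun hab => ?_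
  rcases a with i | i | i <;> rcases b with j | j | j <;>
    simp only [ne_eq, Sum.inl.injEq, Sum.inr.injEq, reduceCtorEq, not_false_eq_true] at hab <;>
    simp only [fE, Sym2.mem_iff, Option.some.injEq, Sum.inl.injEq, Sum.inr.injEq,
      reduceCtorEq, or_false, false_or, or_self] <;>
    first | tauto | aesop

end

section
variable {t k : ℕ}

/-- Abbreviations for vertex constructors of `HG`. -/
local notation "Sp" i => (Sum.inl i : ZMod t ⊕ ZMod t ⊕ ZMod t)
local notation "Ri" i => (Sum.inr (Sum.inl i) : ZMod t ⊕ ZMod t ⊕ ZMod t)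
local notation "Pe" i => (Sum.inr (Sum.inr i) : ZMod t ⊕ ZMod t ⊕ ZMod t)

lemma sp_eq [NeZero t] {i : ZMod t} {w : ℕ} (h : i.val = w) : (Sp i) = Sp ((w : ℕ) : ZMod t) := by
  rw [← casti i, h]

lemma ri_eq [NeZero t] {i : ZMod t} {w : ℕ} (h : i.val = w) : (Ri i) = Ri ((w : ℕ) : ZMod t) := by
  rw [← casti i, h]

lemma pe_eq [NeZero t] {i : ZMod t} {w : ℕ} (h : i.val = w) : (Pe i) = Pe ((w : ℕ) : ZMod t) := by
  rw [← casti i, h]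

lemma adj_ss {i j : ZMod t} (h : i ≠ j) : (HG t).Adj (Sp i) (Sp j) :=
  ⟨by simpa using h, Or.inl trivial⟩

lemma adj_sr {i j : ZMod t} (h : i = j ∨ i = j + 1) : (HG t).Adj (Sp i) (Ri j) :=
  ⟨by simp, Or.inl h⟩

lemma adj_sp {i : ZMod t} : (HG t).Adj (Sp i) (Pe i) :=
  ⟨by simp, Or.inl rfl⟩

lemma adj_rr (ht : 5 ≤ t) {i j : ZMod t} (h : j = i + 1) : (HG t).Adj (Ri i) (Ri j) := by
  refine ⟨?_, Or.inl h⟩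
  simp only [ne_eq, Sum.inr.injEq, Sum.inl.injEq]
  rw [h]
  exact self_ne_add_one ht i

lemma adj_rp {i j : ZMod t} (h : j = i ∨ j = i + 1) : (HG t).Adj (Ri i) (Pe j) :=
  ⟨by simp, Or.inl h⟩

/-- The explicit equitable dominator coloring (as a `ℕ`-valued function). -/
def dcol (t k : ℕ) : ZMod t ⊕ ZMod t ⊕ ZMod t → ℕ
  | .inl i => if i.val = 0 then 0 else 2*k + i.val
  | .inr (.inl i) => if i.val % 2 = 1 then (i.val+1)/2
      else if i.val = 0 then 6*k+1 else 6*k+1+(i.val+2)/4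
  | .inr (.inr i) => if i.val = 4*k then 6*k+1 else 2*k + i.val + 1

variable (htk : t = 4*k+1) (hk : 1 ≤ k)
include htk hk

lemma dcol_lt (u : ZMod t ⊕ ZMod t ⊕ ZMod t) : dcol t k u < 7*k+2 := by
  haveI : NeZero t := ⟨by omega⟩
  rcases u with i | i | i <;> have hv := valt i <;>
    simp only [dcol] <;> split_ifs <;> omega

lemma class_zero (u : ZMod t ⊕ ZMod t ⊕ ZMod t) (h : dcol t k u = 0) : u = Sp (0 : ZMod t) := by
  haveI : NeZero t := ⟨by omega⟩
  rcases u with i | i | i <;> have hv := valt i <;>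
    simp only [dcol] at h <;> split_ifs at h <;> try omega
  have h0 : i = 0 := by
    rw [← casti i, (by omega : i.val = 0)]; exact Nat.cast_zero
  rw [h0]

lemma class_odd (m : ℕ) (h1 : 1 ≤ m) (h2 : m ≤ 2*k) (u : ZMod t ⊕ ZMod t ⊕ ZMod t)
    (h : dcol t k u = m) : u = Ri ((2*m-1 : ℕ) : ZMod t) := by
  haveI : NeZero t := ⟨by omega⟩
  rcases u with i | i | i <;> have hv := valt i <;>
    simp only [dcol] at h <;> split_ifs at h <;> try omega
  exact ri_eq (by omega)

lemma class_pair (m : ℕ) (hm : m < 7*k+2) :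
    ∃ a b, ∀ u, dcol t k u = m → u = a ∨ u = b := by
  haveI : NeZero t := ⟨by omega⟩
  rcases (by omega : m = 0 ∨ (1 ≤ m ∧ m ≤ 2*k) ∨ (2*k+1 ≤ m ∧ m ≤ 6*k) ∨ m = 6*k+1 ∨
      (6*k+2 ≤ m ∧ m ≤ 7*k+1)) with h0 | h1 | h1 | h1 | h1
  · exact ⟨Sp (0 : ZMod t), Sp (0 : ZMod t), fun u hu => Or.inl (class_zero htk hk u (h0 ▸ hu))⟩
  · exact ⟨Ri ((2*m-1 : ℕ) : ZMod t), Ri ((2*m-1 : ℕ) : ZMod t),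
      fun u hu => Or.inl (class_odd htk hk m h1.1 h1.2 u hu)⟩
  · refine ⟨Sp ((m - 2*k : ℕ) : ZMod t), Pe ((m - 2*k - 1 : ℕ) : ZMod t), fun u hu => ?_⟩
    rcases u with i | i | i <;> have hv := valt i <;>
      simp only [dcol] at hu <;> split_ifs at hu <;> try omega
    · exact Or.inl (sp_eq (by omega))
    · exact Or.inr (pe_eq (by omega))
  · refine ⟨Ri ((0 : ℕ) : ZMod t), Pe ((4*k : ℕ) : ZMod t), fun u hu => ?_⟩
    rcases u with i | i | i <;> have hv := valt i <;>
      simp only [dcol] at hu <;> split_ifs at hu <;> try omega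
    · exact Or.inl (ri_eq (by omega))
    · exact Or.inr (pe_eq (by omega))
  · refine ⟨Ri ((4*(m-(6*k+1))-2 : ℕ) : ZMod t), Ri ((4*(m-(6*k+1)) : ℕ) : ZMod t),
      fun u hu => ?_⟩
    rcases u with i | i | i <;> have hv := valt i <;>
      simp only [dcol] at hu <;> split_ifs at hu <;> try omega
    rcases (by omega : i.val = 4*(m-(6*k+1))-2 ∨ i.val = 4*(m-(6*k+1))) with h' | h'
    · exact Or.inl (ri_eq h')
    · exact Or.inr (ri_eq h')

lemma class_nonempty (m : ℕ) (hm : m < 7*k+2) : ∃ u, dcol t k u = m := by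
  haveI : NeZero t := ⟨by omega⟩
  rcases (by omega : m = 0 ∨ (1 ≤ m ∧ m ≤ 2*k) ∨ (2*k+1 ≤ m ∧ m ≤ 6*k) ∨ m = 6*k+1 ∨
      (6*k+2 ≤ m ∧ m ≤ 7*k+1)) with h1 | h1 | h1 | h1 | h1
  · refine ⟨Sp (0 : ZMod t), ?_⟩
    simp only [dcol, ZMod.val_zero]
    norm_num
    omega
  · refine ⟨Ri ((2*m-1 : ℕ) : ZMod t), ?_⟩
    simp only [dcol, ZMod.val_cast_of_lt (show 2*m-1 < t by omega)]
    rw [if_pos (by omega)]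
    omega
  · refine ⟨Sp ((m-2*k : ℕ) : ZMod t), ?_⟩
    simp only [dcol, ZMod.val_cast_of_lt (show m-2*k < t by omega)]
    rw [if_neg (by omega)]
    omega
  · refine ⟨Ri ((0 : ℕ) : ZMod t), ?_⟩
    simp only [dcol, ZMod.val_cast_of_lt (show 0 < t by omega)]
    norm_num
    omega
  · refine ⟨Ri ((4*(m-(6*k+1))-2 : ℕ) : ZMod t), ?_⟩
    simp only [dcol, ZMod.val_cast_of_lt (show 4*(m-(6*k+1))-2 < t by omega)]
    rw [if_neg (by omega), if_neg (by omega)]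
    omega

lemma dcol_proper {u v : ZMod t ⊕ ZMod t ⊕ ZMod t} (hadj : (HG t).Adj u v) :
    dcol t k u ≠ dcol t k v := by
  haveI : NeZero t := ⟨by omega⟩
  have ht5 : 5 ≤ t := by omega
  obtain ⟨hne, hrel⟩ := hadj
  rcases u with i | i | i <;> rcases v with j | j | j <;>
      have hvi := valt i <;> have hvj := valt j <;>
      simp only [ne_eq, Sum.inl.injEq, Sum.inr.injEq, reduceCtorEq, not_false_eq_true] at hne
  -- spoke-spoke
  · have hvne : i.val ≠ j.val := fun h => hne ((val_eq_iff i j).mpr h)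
    simp only [dcol]; split_ifs <;> omega
  -- spoke-rim
  · simp only [dcol]; split_ifs <;> omega
  -- spoke-pend
  · rcases hrel with h | h
    · have hv := congrArg ZMod.val h
      simp only [dcol]; split_ifs <;> omega
    · exact h.elim
  -- rim-spoke
  · simp only [dcol]; split_ifs <;> omega
  -- rim-rim
  · rcases hrel with h | h <;>
      [have hv := congrArg ZMod.val h; have hv := congrArg ZMod.val h] <;>
      rw [val_add_one ht5] at hv <;>
      split_ifs at hv <;> simp only [dcol] <;> split_ifs <;> omega
  -- rim-pend
  · rcases hrel with (h | h) | h
    · have hv := congrArg ZMod.val h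
      simp only [dcol]; split_ifs <;> omega
    · have hv := congrArg ZMod.val h
      rw [val_add_one ht5] at hv
      split_ifs at hv <;> simp only [dcol] <;> split_ifs <;> omega
    · exact h.elim
  -- pend-spoke
  · rcases hrel with h | h
    · exact h.elim
    · have hv := congrArg ZMod.val h
      simp only [dcol]; split_ifs <;> omega
  -- pend-rim
  · rcases hrel with h | (h | h)
    · exact h.elim
    · have hv := congrArg ZMod.val h
      simp only [dcol]; split_ifs <;> omega
    · have hv := congrArg ZMod.val h
      rw [val_add_one ht5] at hv
      split_ifs at hv <;> simp only [dcol] <;> split_ifs <;> omega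
  -- pend-pend
  · rcases hrel with h | h <;> exact h.elim

lemma dcol_dom (v : ZMod t ⊕ ZMod t ⊕ ZMod t) :
    ∃ m : ℕ, m ≤ 2*k ∧ ∀ u, dcol t k u = m → u = v ∨ (HG t).Adj v u := by
  haveI : NeZero t := ⟨by omega⟩
  have ht5 : 5 ≤ t := by omega
  rcases v with i | i | i
  · refine ⟨0, by omega, fun u hu => ?_⟩
    rw [class_zero htk hk u hu]
    by_cases h0 : i = 0
    · exact Or.inl (by rw [h0])
    · exact Or.inr (adj_ss h0)
  · have hv := valt i
    rcases (by omega : i.val % 2 = 1 ∨ (i.val % 2 = 0 ∧ i.val = 4*k) ∨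
        (i.val % 2 = 0 ∧ i.val < 4*k)) with hw | ⟨hw, hw'⟩ | ⟨hw, hw'⟩
    · refine ⟨(i.val+1)/2, by omega, fun u hu => ?_⟩
      rw [class_odd htk hk _ (by omega) (by omega) u hu]
      refine Or.inl ?_
      rw [show 2*((i.val+1)/2)-1 = i.val by omega, casti]
    · refine ⟨2*k, by omega, fun u hu => ?_⟩
      rw [class_odd htk hk _ (by omega) (by omega) u hu]
      exact Or.inr ((adj_rr ht5 (cast_succ_eq _ (by omega)).symm).symm)
    · refine ⟨i.val/2+1, by omega, fun u hu => ?_⟩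
      rw [class_odd htk hk _ (by omega) (by omega) u hu]
      exact Or.inr (adj_rr ht5 (cast_eq_add_one _ (by omega)))
  · have hv := valt i
    rcases (by omega : i.val = 0 ∨ i.val % 2 = 1 ∨ (i.val % 2 = 0 ∧ 2 ≤ i.val))
        with hw | hw | ⟨hw, hw'⟩
    · refine ⟨0, by omega, fun u hu => ?_⟩
      rw [class_zero htk hk u hu]
      have h0 : i = 0 := by rw [← casti i, hw, Nat.cast_zero]
      rw [h0]
      exact Or.inr (adj_sp (i := (0 : ZMod t))).symm
    · refine ⟨(i.val+1)/2, by omega, fun u hu => ?_⟩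
      rw [class_odd htk hk _ (by omega) (by omega) u hu]
      have hiq : ((2*((i.val+1)/2)-1 : ℕ) : ZMod t) = i := by
        rw [show 2*((i.val+1)/2)-1 = i.val by omega, casti]
      rw [hiq]
      exact Or.inr (adj_rp (Or.inl rfl)).symm
    · refine ⟨i.val/2, by omega, fun u hu => ?_⟩
      rw [class_odd htk hk _ (by omega) (by omega) u hu]
      exact Or.inr ((adj_rp (Or.inr (cast_succ_eq _ (by omega)).symm)).symm)

lemma upper : (7*k+2) ∈ {n : ℕ | ∃ c : ZMod t ⊕ ZMod t ⊕ ZMod t → Fin n,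
    IsEDColoring (HG t) c} := by
  haveI : NeZero t := ⟨by omega⟩
  refine ⟨fun u => ⟨dcol t k u, dcol_lt htk hk u⟩, ?_, ?_, ?_⟩
  · intro u v hadj h
    exact dcol_proper htk hk hadj (by simpa [Fin.ext_iff] using h)
  · intro v
    obtain ⟨m, hm, hdom⟩ := dcol_dom htk hk v
    refine ⟨⟨m, by omega⟩, ?_, ?_⟩
    · obtain ⟨u, hu⟩ := class_nonempty htk hk m (by omega)
      exact ⟨u, Fin.ext hu⟩
    · intro u hu
      exact hdom u (congrArg Fin.val hu)
  · intro a b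
    have hbeta : ∀ m : Fin (7*k+2),
        {u | (fun u => (⟨dcol t k u, dcol_lt htk hk u⟩ : Fin (7*k+2))) u = m} =
        {u | (⟨dcol t k u, dcol_lt htk hk u⟩ : Fin (7*k+2)) = m} := fun m => rfl
    simp only [hbeta]
    obtain ⟨x, y, hxy⟩ := class_pair htk hk a.val a.isLt
    obtain ⟨u0, hu0⟩ := class_nonempty htk hk b.val b.isLt
    have hsub : {u | (⟨dcol t k u, dcol_lt htk hk u⟩ : Fin (7*k+2)) = a} ⊆ {x, y} := by
      intro u hu
      have : dcol t k u = a.val := congrArg Fin.val hu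
      simpa using hxy u this
    have h2 : {u | (⟨dcol t k u, dcol_lt htk hk u⟩ : Fin (7*k+2)) = a}.ncard ≤ 2 := by
      refine le_trans (Set.ncard_le_ncard hsub (Set.toFinite _)) ?_
      refine le_trans (Set.ncard_insert_le x {y}) ?_
      simp
    have h1 : 0 < {u | (⟨dcol t k u, dcol_lt htk hk u⟩ : Fin (7*k+2)) = b}.ncard := by
      rw [Set.ncard_pos (Set.toFinite _)]
      exact ⟨u0, Fin.ext hu0⟩
    omega

omit htk hk in
lemma pend_nbhd {i : ZMod t} {u : ZMod t ⊕ ZMod t ⊕ ZMod t} (h : (HG t).Adj (Pe i) u) :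
    u = (Sp i) ∨ u = (Ri (i-1)) ∨ u = (Ri i) := by
  obtain ⟨hne, hrel⟩ := h
  rcases u with j | j | j
  · rcases hrel with h | h
    · exact h.elim
    · exact Or.inl (by rw [h])
  · rcases hrel with h | (h | h)
    · exact h.elim
    · exact Or.inr (Or.inr (by rw [h]))
    · refine Or.inr (Or.inl (congrArg _ (congrArg _ ?_)))
      rw [h]; ring
  · rcases hrel with h | h <;> exact h.elim

lemma lower (n : ℕ) (c : ZMod t ⊕ ZMod t ⊕ ZMod t → Fin n)
    (hc : IsEDColoring (HG t) c) : 7*k+2 ≤ n := by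
  haveI : NeZero t := ⟨by omega⟩
  have ht5 : 5 ≤ t := by omega
  classical
  obtain ⟨h1, h2, h3⟩ := hc
  -- every pendant dominates a singleton color class in its closed neighborhood
  have key : ∀ i : ZMod t, ∃ (j : Fin n) (x : ZMod t ⊕ ZMod t ⊕ ZMod t), c x = j ∧
      (∀ u, c u = j → u = x) ∧
      (x = (Pe i) ∨ x = (Sp i) ∨ x = (Ri (i-1)) ∨ x = (Ri i)) := by
    intro i
    obtain ⟨j, ⟨u0, hu0⟩, hdom⟩ := h2 (Pe i)
    have hmem : ∀ u, c u = j →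
        (u = (Pe i) ∨ u = (Sp i) ∨ u = (Ri (i-1)) ∨ u = (Ri i)) := by
      intro u hu
      rcases hdom u hu with h | h
      · exact Or.inl h
      · exact Or.inr (pend_nbhd h)
    have huniq : ∀ u w, c u = j → c w = j → u = w := by
      intro u w hu hw
      by_contra hne
      refine h1 ?_ (hu.trans hw.symm)
      have A1 : (HG t).Adj (Sp i) (Pe i) := adj_sp
      have A2 : (HG t).Adj (Sp i) (Ri (i-1)) := adj_sr (Or.inr (by ring))
      have A3 : (HG t).Adj (Sp i) (Ri i) := adj_sr (Or.inl rfl)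
      have A4 : (HG t).Adj (Ri (i-1)) (Pe i) := adj_rp (Or.inr (by ring))
      have A5 : (HG t).Adj (Ri i) (Pe i) := adj_rp (Or.inl rfl)
      have A6 : (HG t).Adj (Ri (i-1)) (Ri i) := adj_rr ht5 (by ring)
      rcases hmem u hu with h | h | h | h <;> rcases hmem w hw with g | g | g | g <;>
        subst h <;> subst g <;>
        first
          | exact absurd rfl hne
          | exact A1 | exact A1.symm
          | exact A2 | exact A2.symm
          | exact A3 | exact A3.symm
          | exact A4 | exact A4.symm
          | exact A5 | exact A5.symm
          | exact A6 | exact A6.symm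
    exact ⟨j, u0, hu0, fun u hu => huniq u u0 hu hu0, hmem u0 hu0⟩
  choose F X hcx huniq hloc using key
  -- colors of distinct pendants coincide only for neighboring pendants
  have P2 : ∀ i i' : ZMod t, F i = F i' → i ≠ i' → (i' = i + 1 ∨ i = i' + 1) := by
    intro i i' hF hne
    have hx : X i = X i' := huniq i' (X i) (hF ▸ hcx i)
    rcases hloc i with h | h | h | h <;> rcases hloc i' with g | g | g | g <;>
      rw [← hx] at g <;> rw [h] at g <;>
      simp only [Sum.inl.injEq, Sum.inr.injEq, reduceCtorEq] at g
    · exact absurd g hne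
    · exact absurd g hne
    · exact absurd (by linear_combination g) hne
    · exact Or.inr (by linear_combination g)
    · exact Or.inl (by linear_combination -g)
    · exact absurd g hne
  classical
  let fib : Fin n → ℕ := fun a => (Finset.univ.filter (fun u => c u = a)).card
  let p : Fin n → Prop := fun a => fib a = 1
  have hcardS : Fintype.card (ZMod t ⊕ ZMod t ⊕ ZMod t) = 3*t := by
    rw [Fintype.card_sum, Fintype.card_sum, ZMod.card]
    omega
  have htot : ∑ a : Fin n, fib a = 3*t := by
    rw [show (3*t) = Fintype.card (ZMod t ⊕ ZMod t ⊕ ZMod t) from hcardS.symm,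
      ← Finset.card_univ,
      Finset.card_eq_sum_card_fiberwise (fun x _ => Finset.mem_univ (c x))]
  have hset : ∀ a : Fin n, {u | c u = a}.ncard = fib a := by
    intro a
    show _ = (Finset.univ.filter (fun u => c u = a)).card
    rw [← Set.ncard_coe_finset]
    congr 1
    ext u
    simp
  have hF1 : ∀ i : ZMod t, fib (F i) = 1 := by
    intro i
    refine Finset.card_eq_one.mpr ⟨X i, ?_⟩
    ext u
    simp only [Finset.mem_filter, Finset.mem_univ, true_and, Finset.mem_singleton]
    exact ⟨fun h => huniq i u h, fun h => h ▸ hcx i⟩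
  have hf2 : ∀ a : Fin n, fib a ≤ 2 := by
    intro a
    have := h3 a (F 0)
    rw [hset a, hset (F 0), hF1 0] at this
    omega
  have hfibF : ∀ a ∈ Finset.univ.image F, (Finset.univ.filter (fun i => F i = a)).card ≤ 2 := by
    intro a ha
    obtain ⟨i0, -, rfl⟩ := Finset.mem_image.mp ha
    by_cases hcase : (i0 + 1) ∈ Finset.univ.filter (fun i => F i = F i0)
    · refine le_trans (Finset.card_le_card
        (show _ ⊆ ({i0, i0+1} : Finset (ZMod t)) from fun x hx => ?_)) ?_
      · have hfx : F x = F i0 := (Finset.mem_filter.mp hx).2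
        by_cases hx0 : x = i0
        · exact Finset.mem_insert.mpr (Or.inl hx0)
        rcases P2 x i0 hfx hx0 with h | h
        · have hmem' : F (i0+1) = F i0 := (Finset.mem_filter.mp hcase).2
          have hne2 : x ≠ i0 + 1 := by
            intro e
            refine two_ne_zero' ht5 ?_
            linear_combination -h - e
          rcases P2 x (i0+1) (hfx.trans hmem'.symm) hne2 with h2 | h2
          · refine absurd (?_ : x = i0) hx0
            linear_combination -h2
          · refine absurd (?_ : (3 : ZMod t) = 0) (three_ne_zero' ht5)
            linear_combination -h - h2
        · exact Finset.mem_insert.mpr (Or.inr (Finset.mem_singleton.mpr h))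
      · exact le_trans (Finset.card_insert_le _ _) (by simp)
    · refine le_trans (Finset.card_le_card
        (show _ ⊆ ({i0-1, i0} : Finset (ZMod t)) from fun x hx => ?_)) ?_
      · have hfx : F x = F i0 := (Finset.mem_filter.mp hx).2
        by_cases hx0 : x = i0
        · exact Finset.mem_insert.mpr (Or.inr (Finset.mem_singleton.mpr hx0))
        rcases P2 x i0 hfx hx0 with h | h
        · refine Finset.mem_insert.mpr (Or.inl ?_)
          linear_combination -h
        · exact absurd (Finset.mem_filter.mpr ⟨Finset.mem_univ _, by rw [← h]; exact hfx⟩)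
            hcase
      · exact le_trans (Finset.card_insert_le (i0-1) {i0}) (by simp)
  have himgcard : t ≤ 2 * (Finset.univ.image F).card := by
    have h1 := Finset.card_eq_sum_card_fiberwise
      (fun (x : ZMod t) (_ : x ∈ Finset.univ) => Finset.mem_image_of_mem F (Finset.mem_univ x))
    have h2' : ∑ a ∈ Finset.univ.image F, (Finset.univ.filter (fun i => F i = a)).card ≤
        ∑ _a ∈ Finset.univ.image F, 2 := Finset.sum_le_sum hfibF
    rw [Finset.sum_const, smul_eq_mul] at h2'
    rw [Finset.card_univ, ZMod.card] at h1
    omega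
  have hBcard : (Finset.univ.image F).card ≤ (Finset.univ.filter p).card := by
    refine Finset.card_le_card (fun a ha => ?_)
    obtain ⟨i, -, rfl⟩ := Finset.mem_image.mp ha
    exact Finset.mem_filter.mpr ⟨Finset.mem_univ _, hF1 i⟩
  have hsplit := Finset.sum_filter_add_sum_filter_not Finset.univ p fib
  have hS1 : ∑ a ∈ Finset.univ.filter p, fib a = (Finset.univ.filter p).card := by
    calc ∑ a ∈ Finset.univ.filter p, fib a
        = ∑ _a ∈ Finset.univ.filter p, 1 :=
          Finset.sum_congr rfl (fun a ha => (Finset.mem_filter.mp ha).2)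
      _ = _ := by rw [Finset.sum_const, smul_eq_mul, mul_one]
  have hS2 : ∑ a ∈ Finset.univ.filter (fun a => ¬ p a), fib a ≤
      2 * (Finset.univ.filter (fun a => ¬ p a)).card := by
    have := Finset.sum_le_sum (s := Finset.univ.filter (fun a => ¬ p a))
      (fun a _ => hf2 a)
    rw [Finset.sum_const, smul_eq_mul] at this
    omega
  have hcards : (Finset.univ.filter p).card +
      (Finset.univ.filter (fun a => ¬ p a)).card = n := by
    rw [Finset.card_filter_add_card_filter_not, Finset.card_univ, Fintype.card_fin]
  have e1 := hsplit.trans htot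
  rw [hS1] at e1
  omega

end
end EDH

theorem edcn_lineGraph_helm_of_one_mod_four (t : ℕ) (ht : 5 ≤ t) (hmod : t % 4 = 1) :
    edcn (helm t).lineGraph = t + (t + 1) / 2 + t / 4 := by
  have hk : 1 ≤ t / 4 := by omega
  have htk : t = 4 * (t / 4) + 1 := by omega
  set k := t / 4
  have φ : EDH.HG t ≃g (helm t).lineGraph :=
    { toEquiv := Equiv.ofBijective (EDH.fE t ht) ⟨EDH.fE_inj ht, EDH.fE_surj ht⟩,
      map_rel_iff' := fun {a b} => EDH.fE_mapRel ht a b }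
  rw [← EDH.edcn_congr φ, show t + (t + 1) / 2 + t / 4 = 7*k+2 by omega]
  apply le_antisymm
  · exact Nat.sInf_le (EDH.upper htk hk)
  · refine le_csInf ⟨7*k+2, EDH.upper htk hk⟩ ?_
    rintro n ⟨c, hc⟩
    exact EDH.lower htk hk n c hc
end

section
/- For every integer t ≥ 4, the line graph of the helm graph H_{1,t,t} admits an equitable dominator coloring using 2t colors; in particular χ_ed(L(H_{1,t,t})) ≤ 2t. -/
open SimpleGraph

namespace EDHelm

abbrev HV (t : ℕ) := Option (ZMod t ⊕ ZMod t)

def fcol (t : ℕ) : HV t → HV t → ℕ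
  | none, some (Sum.inl i) => i.val
  | some (Sum.inl i), none => i.val
  | some (Sum.inl _), some (Sum.inr j) => (j - 1).val
  | some (Sum.inr j), some (Sum.inl _) => (j - 1).val
  | some (Sum.inl i), some (Sum.inl j) =>
      if j = i + 1 ∧ i = j + 1 then t + min i.val j.val
      else if j = i + 1 then t + i.val
      else if i = j + 1 then t + j.val
      else t + min i.val j.val
  | _, _ => 0

lemma fcol_symm (t : ℕ) : ∀ x y, fcol t x y = fcol t y x := by
  rintro (_|(i|i)) (_|(j|j)) <;> simp only [fcol]
  by_cases h1 : (j : ZMod t) = i + 1 <;> by_cases h2 : (i : ZMod t) = j + 1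
  · rw [if_pos ⟨h1, h2⟩, if_pos ⟨h2, h1⟩, min_comm]
  · rw [if_neg fun h => h2 h.2, if_pos h1, if_neg fun h => h2 h.1, if_neg h2, if_pos h1]
  · rw [if_neg fun h => h1 h.1, if_neg h1, if_pos h2, if_neg fun h => h1 h.2, if_pos h2]
  · rw [if_neg fun h => h1 h.1, if_neg h1, if_neg h2, if_neg fun h => h1 h.2, if_neg h2,
      if_neg h1, min_comm]

def scol (t : ℕ) : Sym2 (HV t) → ℕ := Sym2.lift ⟨fcol t, fcol_symm t⟩

@[simp] lemma scol_mk (t : ℕ) (x y : HV t) : scol t s(x, y) = fcol t x y := rfl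

def sp (t : ℕ) (i : ZMod t) : Sym2 (HV t) := s(none, some (Sum.inl i))
def ri (t : ℕ) (i : ZMod t) : Sym2 (HV t) := s(some (Sum.inl i), some (Sum.inl (i + 1)))
def pe (t : ℕ) (i : ZMod t) : Sym2 (HV t) := s(some (Sum.inl i), some (Sum.inr i))

section
variable {t : ℕ} (ht : 4 ≤ t)
include ht

lemma two_ne (i : ZMod t) : i ≠ i + 1 + 1 := by
  intro h
  rw [add_assoc] at h
  have h3 : (0 : ZMod t) = 1 + 1 := add_left_cancel (a := i) (by rw [add_zero]; exact h)
  have h2 : ((2 : ℕ) : ZMod t) = 0 := by push_cast; rw [← one_add_one_eq_two]; exact h3.symm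
  rw [ZMod.natCast_eq_zero_iff] at h2
  have := Nat.le_of_dvd (by norm_num) h2
  omega

lemma one_ne (i : ZMod t) : i ≠ i + 1 := by
  intro h
  have h3 : (0 : ZMod t) = 1 := add_left_cancel (a := i) (by rw [add_zero]; exact h)
  have h2 : ((1 : ℕ) : ZMod t) = 0 := by push_cast; exact h3.symm
  rw [ZMod.natCast_eq_zero_iff] at h2
  have := Nat.le_of_dvd (by norm_num) h2
  omega

lemma scol_sp (i : ZMod t) : scol t (sp t i) = i.val := rfl

lemma scol_pe (i : ZMod t) : scol t (pe t i) = (i - 1).val := rfl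

lemma scol_ri (i : ZMod t) : scol t (ri t i) = t + i.val := by
  have h1 : (i + 1 : ZMod t) = i + 1 := rfl
  have h2 : ¬ (i : ZMod t) = i + 1 + 1 := two_ne ht i
  simp only [ri, scol_mk, fcol]
  rw [if_neg fun h => h2 h.2]
  simp [h2]

lemma scol_lt (z : Sym2 (HV t)) : scol t z < 2 * t := by
  haveI : NeZero t := ⟨by omega⟩
  induction z using Sym2.ind with
  | _ x y =>
    have vlt : ∀ a : ZMod t, a.val < t := fun a => ZMod.val_lt a
    obtain (_|(i|i)) := x <;> obtain (_|(j|j)) := y <;>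
      simp only [scol_mk, fcol] <;> try split_ifs
    all_goals first
      | omega
      | (have := vlt i; omega)
      | (have := vlt j; omega)
      | (have := vlt (i - 1); omega)
      | (have := vlt (j - 1); omega)
      | (have := vlt i; have := vlt j; omega)

lemma helm_adj {x y : HV t} : (helm t).Adj x y ↔ x ≠ y ∧
    (((∃ i : ZMod t, x = none ∧ y = some (Sum.inl i)) ∨
      (∃ i : ZMod t, x = some (Sum.inl i) ∧ y = some (Sum.inl (i + 1))) ∨
      (∃ i : ZMod t, x = some (Sum.inl i) ∧ y = some (Sum.inr i))) ∨
     ((∃ i : ZMod t, y = none ∧ x = some (Sum.inl i)) ∨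
      (∃ i : ZMod t, y = some (Sum.inl i) ∧ x = some (Sum.inl (i + 1))) ∨
      (∃ i : ZMod t, y = some (Sum.inl i) ∧ x = some (Sum.inr i)))) := by
  unfold helm
  rw [SimpleGraph.fromRel_adj]

lemma mem_sp (i : ZMod t) : sp t i ∈ (helm t).edgeSet := by
  rw [sp, SimpleGraph.mem_edgeSet, helm_adj ht]
  exact ⟨by simp, Or.inl (Or.inl ⟨i, rfl, rfl⟩)⟩

lemma mem_ri (i : ZMod t) : ri t i ∈ (helm t).edgeSet := by
  rw [ri, SimpleGraph.mem_edgeSet, helm_adj ht]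
  exact ⟨by simpa using one_ne ht i, Or.inl (Or.inr (Or.inl ⟨i, rfl, rfl⟩))⟩

lemma mem_pe (i : ZMod t) : pe t i ∈ (helm t).edgeSet := by
  rw [pe, SimpleGraph.mem_edgeSet, helm_adj ht]
  exact ⟨by simp, Or.inl (Or.inr (Or.inr ⟨i, rfl, rfl⟩))⟩

lemma classify {e : Sym2 (HV t)} (he : e ∈ (helm t).edgeSet) :
    (∃ i, e = sp t i) ∨ (∃ i, e = ri t i) ∨ (∃ i, e = pe t i) := by
  induction e using Sym2.ind with
  | _ x y =>
    rw [SimpleGraph.mem_edgeSet, helm_adj ht] at he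
    obtain ⟨-, h⟩ := he
    rcases h with (⟨i, rfl, rfl⟩ | ⟨i, rfl, rfl⟩ | ⟨i, rfl, rfl⟩) |
      (⟨i, h1, h2⟩ | ⟨i, h1, h2⟩ | ⟨i, h1, h2⟩)
    · exact Or.inl ⟨i, rfl⟩
    · exact Or.inr (Or.inl ⟨i, rfl⟩)
    · exact Or.inr (Or.inr ⟨i, rfl⟩)
    · subst h1; subst h2; exact Or.inl ⟨i, Sym2.eq_swap⟩
    · subst h1; subst h2; exact Or.inr (Or.inl ⟨i, Sym2.eq_swap⟩)
    · subst h1; subst h2; exact Or.inr (Or.inr ⟨i, Sym2.eq_swap⟩)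

lemma sp_ne_ri (i j : ZMod t) : sp t i ≠ ri t j := by
  simp [sp, ri, Sym2.eq_iff]

lemma sp_ne_pe (i j : ZMod t) : sp t i ≠ pe t j := by
  simp [sp, pe, Sym2.eq_iff]

lemma ri_ne_pe (i j : ZMod t) : ri t i ≠ pe t j := by
  simp [ri, pe, Sym2.eq_iff]

lemma mem_vertex_sp (i : ZMod t) : some (Sum.inl i) ∈ sp t i := by
  rw [sp, Sym2.mem_iff]; right; rfl

lemma mem_vertex_ri (i : ZMod t) : some (Sum.inl i) ∈ ri t i := by
  rw [ri, Sym2.mem_iff]; left; rfl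

lemma mem_vertex_pe (i : ZMod t) : some (Sum.inl i) ∈ pe t i := by
  rw [pe, Sym2.mem_iff]; left; rfl

lemma eq_ri_of {u : (helm t).edgeSet} {k : ZMod t} (h : scol t u.val = t + k.val) :
    u.val = ri t k := by
  haveI : NeZero t := ⟨by omega⟩
  rcases classify ht u.2 with ⟨i, hi⟩ | ⟨i, hi⟩ | ⟨i, hi⟩
  · rw [hi, scol_sp ht] at h
    have := ZMod.val_lt i; omega
  · rw [hi, scol_ri ht] at h
    have : i = k := ZMod.val_injective t (by omega)
    rw [hi, this]
  · rw [hi, scol_pe ht] at h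
    have := ZMod.val_lt (i - 1); omega

lemma low_color {u : (helm t).edgeSet} {k : ℕ} (hk : k < t) (h : scol t u.val = k) :
    u.val = sp t (k : ZMod t) ∨ u.val = pe t ((k : ZMod t) + 1) := by
  haveI : NeZero t := ⟨by omega⟩
  rcases classify ht u.2 with ⟨i, hi⟩ | ⟨i, hi⟩ | ⟨i, hi⟩
  · rw [hi, scol_sp ht] at h
    have : i = (k : ZMod t) := ZMod.val_injective t (by rw [ZMod.val_cast_of_lt hk, h])
    exact Or.inl (by rw [hi, this])
  · rw [hi, scol_ri ht] at h; omega
  · rw [hi, scol_pe ht] at h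
    have h1 : i - 1 = (k : ZMod t) := ZMod.val_injective t (by rw [ZMod.val_cast_of_lt hk, h])
    have : i = (k : ZMod t) + 1 := by rw [← h1]; ring
    exact Or.inr (by rw [hi, this])

lemma scol_sp_cast {k : ℕ} (hk : k < t) : scol t (sp t (k : ZMod t)) = k := by
  haveI : NeZero t := ⟨by omega⟩
  rw [scol_sp ht, ZMod.val_cast_of_lt hk]

lemma scol_pe_cast {k : ℕ} (hk : k < t) : scol t (pe t ((k : ZMod t) + 1)) = k := by
  haveI : NeZero t := ⟨by omega⟩
  rw [scol_pe ht, add_sub_cancel_right, ZMod.val_cast_of_lt hk]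

lemma sp_pe_no_common {m : ZMod t} {w : HV t} (h1 : w ∈ sp t m) (h2 : w ∈ pe t (m + 1)) :
    False := by
  rw [sp, Sym2.mem_iff] at h1
  rw [pe, Sym2.mem_iff] at h2
  rcases h1 with rfl | rfl <;> rcases h2 with h | h <;> simp_all
  exact one_ne ht 0 (by rw [zero_add]; exact h.symm)


end



end EDHelm

open EDHelm in
theorem edcn_lineGraph_helm_le_two_mul (t : ℕ) (ht : 4 ≤ t) :
    (∃ c : (helm t).edgeSet → Fin (2 * t), IsEDColoring (helm t).lineGraph c) ∧
    edcn (helm t).lineGraph ≤ 2 * t := by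
  haveI : NeZero t := ⟨by omega⟩
  let c : (helm t).edgeSet → Fin (2 * t) := fun e => ⟨scol t e.val, scol_lt ht e.val⟩
  have cval : ∀ e : (helm t).edgeSet, (c e).val = scol t e.val := fun e => rfl
  let R : ZMod t → (helm t).edgeSet := fun i => ⟨ri t i, mem_ri ht i⟩
  have adj_of : ∀ (u v : (helm t).edgeSet) (w : HV t), u.val ≠ v.val →
      w ∈ u.val → w ∈ v.val → (helm t).lineGraph.Adj u v := by
    intro u v w hne hw1 hw2
    rw [SimpleGraph.lineGraph_adj_iff_exists]
    exact ⟨fun h => hne (congrArg Subtype.val h), w, hw1, hw2⟩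
  have hc : IsEDColoring (helm t).lineGraph c := by
    refine ⟨?_, ?_, ?_⟩
    · -- proper
      intro u v hadj hcc
      rw [SimpleGraph.lineGraph_adj_iff_exists] at hadj
      obtain ⟨hne, w, hw1, hw2⟩ := hadj
      have hval : scol t u.val = scol t v.val := congrArg Fin.val hcc
      by_cases hlow : scol t u.val < t
      · rcases low_color ht hlow rfl with hu | hu <;>
          rcases low_color ht (k := scol t u.val) hlow hval.symm with hv | hv
        · exact hne (Subtype.ext (hu.trans hv.symm))
        · exact sp_pe_no_common ht (hu ▸ hw1) (hv ▸ hw2)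
        · exact sp_pe_no_common ht (hv ▸ hw2) (hu ▸ hw1)
        · exact hne (Subtype.ext (hu.trans hv.symm))
      · have hub := scol_lt ht u.val
        set k : ZMod t := ((scol t u.val - t : ℕ) : ZMod t) with hkdef
        have hkval : scol t u.val = t + k.val := by
          rw [hkdef, ZMod.val_cast_of_lt (by omega)]; omega
        have h1 := eq_ri_of ht (u := u) hkval
        have h2 := eq_ri_of ht (u := v) (hval ▸ hkval)
        exact hne (Subtype.ext (h1.trans h2.symm))
    · -- domination
      intro v
      rcases classify ht v.2 with ⟨i, hi⟩ | ⟨i, hi⟩ | ⟨i, hi⟩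
      · refine ⟨c (R i), ⟨R i, rfl⟩, fun u hu => ?_⟩
        have huv : u.val = ri t i := eq_ri_of ht (by rw [← cval, hu, cval]; exact scol_ri ht i)
        right
        refine adj_of v u (some (Sum.inl i)) ?_ ?_ ?_
        · rw [hi, huv]; exact sp_ne_ri ht i i
        · rw [hi]; exact mem_vertex_sp ht i
        · rw [huv]; exact mem_vertex_ri ht i
      · refine ⟨c v, ⟨v, rfl⟩, fun u hu => ?_⟩
        left
        have huv : u.val = ri t i := eq_ri_of ht
          (by rw [← cval, hu, cval, hi]; exact scol_ri ht i)
        exact Subtype.ext (huv.trans hi.symm)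
      · refine ⟨c (R i), ⟨R i, rfl⟩, fun u hu => ?_⟩
        have huv : u.val = ri t i := eq_ri_of ht (by rw [← cval, hu, cval]; exact scol_ri ht i)
        right
        refine adj_of v u (some (Sum.inl i)) ?_ ?_ ?_
        · rw [hi, huv]; exact (ri_ne_pe ht i i).symm
        · rw [hi]; exact mem_vertex_pe ht i
        · rw [huv]; exact mem_vertex_ri ht i
    · -- equitable
      have bounds : ∀ j : Fin (2 * t),
          1 ≤ {u | c u = j}.ncard ∧ {u | c u = j}.ncard ≤ 2 := by
        intro j
        by_cases hj : j.val < t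
        · have hset : {u | c u = j} =
              {(⟨sp t (j.val : ZMod t), mem_sp ht _⟩ : (helm t).edgeSet),
               ⟨pe t ((j.val : ZMod t) + 1), mem_pe ht _⟩} := by
            ext u
            simp only [Set.mem_setOf_eq, Set.mem_insert_iff, Set.mem_singleton_iff]
            constructor
            · intro hu
              have : scol t u.val = j.val := by rw [← cval, hu]
              rcases low_color ht hj this with h | h
              · exact Or.inl (Subtype.ext h)
              · exact Or.inr (Subtype.ext h)
            · rintro (rfl | rfl) <;> apply Fin.ext
              · rw [cval]; exact scol_sp_cast ht hj
              · rw [cval]; exact scol_pe_cast ht hj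
          rw [hset, Set.ncard_pair (by
            intro h
            exact sp_ne_pe ht _ _ (congrArg Subtype.val h))]
          omega
        · have hjub := j.isLt
          set k : ZMod t := ((j.val - t : ℕ) : ZMod t) with hkdef
          have hkval : (j.val : ℕ) = t + k.val := by
            rw [hkdef, ZMod.val_cast_of_lt (by omega)]; omega
          have hset : {u | c u = j} = {R k} := by
            ext u
            simp only [Set.mem_setOf_eq, Set.mem_singleton_iff]
            constructor
            · intro hu
              exact Subtype.ext (eq_ri_of ht (by rw [← cval, hu]; omega))
            · rintro rfl
              apply Fin.ext
              rw [cval]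
              show scol t (ri t k) = _
              rw [scol_ri ht]; omega
          rw [hset, Set.ncard_singleton]
          omega
      intro i j
      have h1 := bounds i
      have h2 := bounds j
      omega
  exact ⟨⟨c, hc⟩, Nat.sInf_le ⟨c, hc⟩⟩
end

section
/- For every integer t ≥ 3, the equitable dominator chromatic number of the line graph of the t-sunlet graph Sl_t equals t + ⌈t/4⌉, i.e., χ_ed(L(Sl_t)) = t + ⌈t/4⌉. -/
open SimpleGraph

/-- The `t`-sunlet graph `Sl_t`: the cycle `C_t` on the vertices `Sum.inl i`, `i : ZMod t`,
with a pendant vertex `Sum.inr i` attached to each cycle vertex. -/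
def sunlet (t : ℕ) : SimpleGraph (ZMod t ⊕ ZMod t) :=
  SimpleGraph.fromRel (fun x y =>
    (∃ i : ZMod t, x = Sum.inl i ∧ y = Sum.inl (i + 1)) ∨
    (∃ i : ZMod t, x = Sum.inl i ∧ y = Sum.inr i))

/-!
Write `q = ⌈t/4⌉`. The line graph of `Sl_t` has `2t` vertices: the cycle edges `eᵢ` and the
spokes `sᵢ`, and the closed neighbourhood of `sᵢ` is the triangle `{sᵢ, eᵢ, eᵢ₋₁}`.

Lower bound: the class dominated by `sᵢ` lies in that triangle, so it is a singleton, and a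
singleton class is dominated by at most two spokes; hence there are at least `⌈t/2⌉` singleton
classes. Equitability then bounds every class by `2`, so `2t + ⌈t/2⌉ ≤ 2n`, i.e. `n ≥ t + q`.

Upper bound: list the vertices as the even cycle edges, the odd cycle edges, then the spokes, give
each of the first `2q` positions its own color and pair up the remaining positions. The `⌈t/2⌉`
even cycle edges get singleton classes and every vertex is, or is adjacent to, one of them; no
pair is an edge.
-/

section Transfer
variable {V W : Type*} {G : SimpleGraph V} {G' : SimpleGraph W}

lemma IsEDColoring.comp_iso_s13 (f : G ≃g G') {n : ℕ} {c : W → Fin n} (hc : IsEDColoring G' c) :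
    IsEDColoring G (c ∘ f) := by
  obtain ⟨hproper, hdom, hequit⟩ := hc
  have hclass (k : Fin n) : {u | (c ∘ f) u = k}.ncard = {w | c w = k}.ncard :=
    Set.ncard_preimage_of_injective_subset_range (s := {w | c w = k}) f.injective
      (by simp [f.surjective.range_eq])
  refine ⟨fun u v h => hproper (f.map_adj_iff.2 h), fun v => ?_, fun i j => ?_⟩
  · obtain ⟨j, ⟨w, hw⟩, hdom⟩ := hdom (f v)
    refine ⟨j, ⟨f.symm w, by simpa using hw⟩, fun u hu => ?_⟩
    exact (hdom (f u) hu).imp (fun h => f.injective h) f.map_adj_iff.1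
  · simpa only [hclass] using hequit i j

lemma edcn_eq_of_iso (f : G ≃g G') : edcn G = edcn G' := by
  unfold edcn
  congr 1
  ext n
  exact ⟨fun ⟨c, hc⟩ => ⟨c ∘ f.symm, hc.comp_iso_s13 f.symm⟩,
    fun ⟨c, hc⟩ => ⟨c ∘ f, hc.comp_iso_s13 f⟩⟩

end Transfer

/-- A model of `(sunlet t).lineGraph`: `Sum.inl i` is the cycle edge `{i, i + 1}` and `Sum.inr i`
the spoke at `i`. -/
def sunletLine (t : ℕ) : SimpleGraph (ZMod t ⊕ ZMod t) :=
  SimpleGraph.fromRel (fun x y =>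
    ∃ i : ZMod t, x = Sum.inl i ∧ (y = Sum.inl (i + 1) ∨ y = Sum.inr i ∨ y = Sum.inr (i + 1)))

section Model
variable {t : ℕ} {i j : ZMod t}

@[simp] lemma sunletLine_adj_inl_inl :
    (sunletLine t).Adj (.inl i) (.inl j) ↔ i ≠ j ∧ (j = i + 1 ∨ i = j + 1) := by
  simp [sunletLine]

@[simp] lemma sunletLine_adj_inl_inr :
    (sunletLine t).Adj (.inl i) (.inr j) ↔ j = i ∨ j = i + 1 := by
  simp [sunletLine]

@[simp] lemma sunletLine_adj_inr_inl :
    (sunletLine t).Adj (.inr i) (.inl j) ↔ i = j ∨ i = j + 1 := by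
  simp [sunletLine]

@[simp] lemma sunletLine_not_adj_inr_inr : ¬ (sunletLine t).Adj (.inr i) (.inr j) := by
  simp [sunletLine]

@[simp] lemma sunlet_adj_inl_inl :
    (sunlet t).Adj (.inl i) (.inl j) ↔ i ≠ j ∧ (j = i + 1 ∨ i = j + 1) := by
  simp [sunlet]

@[simp] lemma sunlet_adj_inl_inr : (sunlet t).Adj (.inl i) (.inr j) ↔ j = i := by
  simp [sunlet]

@[simp] lemma sunlet_adj_inr_inl : (sunlet t).Adj (.inr i) (.inl j) ↔ i = j := by
  simp [sunlet]

@[simp] lemma sunlet_not_adj_inr_inr : ¬ (sunlet t).Adj (.inr i) (.inr j) := by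
  simp [sunlet]

lemma ZMod.natCast_ne_zero_of_lt {k : ℕ} (hk : 0 < k) (hkt : k < t) : (k : ZMod t) ≠ 0 := by
  rw [Ne, ZMod.natCast_eq_zero_iff]
  exact fun h => absurd (Nat.le_of_dvd hk h) (by omega)

lemma ZMod.one_ne_zero_and_two_ne_zero (ht : 3 ≤ t) :
    (1 : ZMod t) ≠ 0 ∧ (2 : ZMod t) ≠ 0 :=
  ⟨by exact_mod_cast ZMod.natCast_ne_zero_of_lt one_pos (by omega),
    by exact_mod_cast ZMod.natCast_ne_zero_of_lt two_pos (by omega)⟩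

def sunletEdge (t : ℕ) : ZMod t ⊕ ZMod t → Sym2 (ZMod t ⊕ ZMod t) :=
  Sum.elim (fun i => s(.inl i, .inl (i + 1))) (fun i => s(.inl i, .inr i))

lemma sunletEdge_mem_edgeSet (ht : 3 ≤ t) (x : ZMod t ⊕ ZMod t) :
    sunletEdge t x ∈ (sunlet t).edgeSet := by
  obtain ⟨h1, -⟩ := ZMod.one_ne_zero_and_two_ne_zero ht
  rcases x with i | i <;> simp [sunletEdge]
  grind

lemma sunletEdge_injective (ht : 3 ≤ t) : Function.Injective (sunletEdge t) := by
  obtain ⟨h1, h2⟩ := ZMod.one_ne_zero_and_two_ne_zero ht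
  rintro (i | i) (j | j) h <;> simp [sunletEdge] at h ⊢ <;> grind

lemma exists_sunletEdge_eq (e : Sym2 (ZMod t ⊕ ZMod t)) (he : e ∈ (sunlet t).edgeSet) :
    ∃ x, sunletEdge t x = e := by
  induction e using Sym2.ind with
  | _ u v =>
  rcases u with i | i <;> rcases v with j | j <;> simp [sunletEdge] at he ⊢
  all_goals grind

lemma sunletLine_adj_iff_sunletEdge (ht : 3 ≤ t) (x y : ZMod t ⊕ ZMod t) :
    (sunletLine t).Adj x y ↔
      sunletEdge t x ≠ sunletEdge t y ∧ ∃ v, v ∈ sunletEdge t x ∧ v ∈ sunletEdge t y := by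
  obtain ⟨h1, h2⟩ := ZMod.one_ne_zero_and_two_ne_zero ht
  rcases x with i | i <;> rcases y with j | j <;> simp [sunletEdge] <;> grind

noncomputable def sunletLineIso (ht : 3 ≤ t) : sunletLine t ≃g (sunlet t).lineGraph where
  toEquiv := Equiv.ofBijective (fun x => ⟨sunletEdge t x, sunletEdge_mem_edgeSet ht x⟩)
    ⟨fun x y h => sunletEdge_injective ht (congrArg Subtype.val h),
      fun ⟨e, he⟩ => (exists_sunletEdge_eq e he).imp fun _ hx => Subtype.ext hx⟩
  map_rel_iff' {x y} := by
    rw [lineGraph_adj_iff_exists, sunletLine_adj_iff_sunletEdge ht]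
    exact and_congr Subtype.ext_iff.not Iff.rfl

end Model

section Counting
variable {V ι : Type*} {G : SimpleGraph V} {n : ℕ} {c : V → Fin n}

lemma subsingleton_of_dominated_of_isClique (hproper : ∀ ⦃u v⦄, G.Adj u v → c u ≠ c v)
    {v : V} (hclique : G.IsClique (insert v (G.neighborSet v))) {j : Fin n}
    (hdom : ∀ u, c u = j → u = v ∨ G.Adj v u) : {u | c u = j}.Subsingleton := by
  intro u hu w hw
  by_contra hne
  exact hproper (hclique (hdom u hu) (hdom w hw) hne) (hu.trans hw.symm)

lemma IsEDColoring.exists_singleton_classes [Fintype ι] (hc : IsEDColoring G c) (f : ι → V)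
    (hclique : ∀ i, G.IsClique (insert (f i) (G.neighborSet (f i)))) {k : ℕ}
    (hmult : ∀ x, {i | x = f i ∨ G.Adj (f i) x}.ncard ≤ k) :
    ∃ S : Finset (Fin n), (∀ j ∈ S, {u | c u = j}.ncard = 1) ∧
      Fintype.card ι ≤ k * S.card := by
  classical
  choose J hJne hJdom using fun i => hc.2.1 (f i)
  refine ⟨Finset.univ.image J, ?_, Finset.card_le_mul_card_image _ k ?_⟩
  · simp only [Finset.mem_image, Finset.mem_univ, true_and, forall_exists_index]
    rintro _ i rfl
    obtain ⟨x, hx⟩ := hJne i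
    rw [(subsingleton_of_dominated_of_isClique hc.1 (hclique i) (hJdom i)).eq_singleton_of_mem hx,
      Set.ncard_singleton]
  · simp only [Finset.mem_image, Finset.mem_univ, true_and, forall_exists_index]
    rintro _ i₀ rfl
    obtain ⟨x, hx⟩ := hJne i₀
    calc (Finset.univ.filter fun i => J i = J i₀).card
        = ((Finset.univ.filter fun i => J i = J i₀ : Finset ι) : Set ι).ncard :=
          (Set.ncard_coe_finset _).symm
      _ ≤ {i | x = f i ∨ G.Adj (f i) x}.ncard := by
          refine Set.ncard_le_ncard (fun i hi => hJdom i x ?_) (Set.toFinite _)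
          have hi : J i = J i₀ := by simpa using hi
          rw [hi, hx]
      _ ≤ k := hmult x

lemma card_add_card_le_two_mul [Fintype V]
    (hequit : ∀ i j : Fin n, {u | c u = i}.ncard ≤ {u | c u = j}.ncard + 1)
    (S : Finset (Fin n)) (hS : ∀ j ∈ S, {u | c u = j}.ncard = 1) (hSne : S.Nonempty) :
    Fintype.card V + S.card ≤ 2 * n := by
  classical
  obtain ⟨j₀, hj₀⟩ := hSne
  have hclass (j : Fin n) : {u | c u = j}.ncard = (Finset.univ.filter fun u => c u = j).card := by
    simp [Set.ncard_eq_toFinset_card']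
  calc Fintype.card V + S.card
      = ∑ j, ({u | c u = j}.ncard + if j ∈ S then 1 else 0) := by
        rw [Finset.sum_add_distrib, Finset.sum_boole, Finset.filter_mem_eq_inter,
          Finset.univ_inter, Finset.card_univ.symm.trans (Finset.card_eq_sum_card_fiberwise
            (f := c) (t := Finset.univ) (fun u _ => Finset.mem_univ _))]
        simp only [hclass, Nat.cast_id]
    _ ≤ ∑ _j : Fin n, 2 := by
        refine Finset.sum_le_sum fun j _ => ?_
        have := hequit j j₀
        split_ifs with hj
        · rw [hS j hj]
        · rw [hS j₀ hj₀] at this; omega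
    _ = 2 * n := by simp [mul_comm]

end Counting

section LowerBound
variable {t : ℕ}

lemma isClique_insert_neighborSet_inr (ht : 3 ≤ t) (m : ZMod t) :
    (sunletLine t).IsClique (insert (.inr m) ((sunletLine t).neighborSet (.inr m))) := by
  obtain ⟨h1, -⟩ := ZMod.one_ne_zero_and_two_ne_zero ht
  rintro (i | i) hi (j | j) hj hne <;> simp at hi hj hne ⊢ <;> grind

lemma ncard_setOf_mem_closedNbhd_inr_le_two (x : ZMod t ⊕ ZMod t) :
    {m | x = .inr m ∨ (sunletLine t).Adj (.inr m) x}.ncard ≤ 2 := by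
  obtain ⟨b, hx⟩ : ∃ b, {m | x = .inr m ∨ (sunletLine t).Adj (.inr m) x} ⊆ {b, b + 1} := by
    rcases x with b | b
    · exact ⟨b, fun m hm => by simpa using hm⟩
    · exact ⟨b, fun m hm => by simp_all⟩
  exact (Set.ncard_le_ncard hx (Set.toFinite _)).trans (Set.ncard_insert_le _ _ |>.trans (by simp))

lemma IsEDColoring.sunletLine_le (ht : 3 ≤ t) {n : ℕ} {c : ZMod t ⊕ ZMod t → Fin n}
    (hc : IsEDColoring (sunletLine t) c) : t + (t + 3) / 4 ≤ n := by
  have : NeZero t := ⟨by omega⟩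
  obtain ⟨S, hS, hcard⟩ := hc.exists_singleton_classes Sum.inr
    (isClique_insert_neighborSet_inr ht) ncard_setOf_mem_closedNbhd_inr_le_two
  rw [ZMod.card] at hcard
  have hSne : S.Nonempty := Finset.card_pos.1 (by omega)
  have := card_add_card_le_two_mul hc.2.2 S hS hSne
  simp only [Fintype.card_sum, ZMod.card] at this
  omega

end LowerBound

section UpperBound
variable {t : ℕ} [NeZero t]

lemma ZMod.val_add_one_eq_or (i : ZMod t) :
    (i + 1).val = i.val + 1 ∨ (i.val + 1 = t ∧ (i + 1).val = 0) := by
  have hcast : i + 1 = ((i.val + 1 : ℕ) : ZMod t) := by push_cast [ZMod.natCast_zmod_val]; rfl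
  rcases (show i.val + 1 ≤ t from i.val_lt).lt_or_eq with h | h
  · exact .inl (by rw [hcast, ZMod.val_cast_of_lt h])
  · exact .inr ⟨h, by rw [hcast, h, ZMod.natCast_self, ZMod.val_zero]⟩

lemma ZMod.val_sub_one_of_odd {i : ZMod t} (hi : i.val % 2 = 1) : (i - 1).val = i.val - 1 := by
  have h1 : (1 : ZMod t).val = 1 := by
    rw [ZMod.val_one_eq_one_mod]; exact Nat.mod_eq_of_lt (by have := i.val_lt; omega)
  rw [ZMod.val_sub (by omega), h1]

def sunletPos (t : ℕ) : ZMod t ⊕ ZMod t → ℕ :=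
  Sum.elim (fun i => if i.val % 2 = 0 then i.val / 2 else (t + 1) / 2 + i.val / 2)
    (fun i => t + i.val)

lemma sunletPos_lt (v : ZMod t ⊕ ZMod t) : sunletPos t v < 2 * t := by
  rcases v with i | i <;> have := i.val_lt <;> simp only [sunletPos, Sum.elim_inl, Sum.elim_inr]
  · split_ifs <;> omega
  · omega

lemma sunletPos_injective : Function.Injective (sunletPos t) := by
  rintro (i | i) (j | j) h <;> have := i.val_lt <;> have := j.val_lt <;>
    simp only [sunletPos, Sum.elim_inl, Sum.elim_inr, Sum.inl.injEq, Sum.inr.injEq] at h ⊢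
  · refine ZMod.val_injective t ?_
    split_ifs at h <;> omega
  · split_ifs at h <;> omega
  · split_ifs at h <;> omega
  · exact ZMod.val_injective t (by omega)

lemma sunletPos_surjective {p : ℕ} (hp : p < 2 * t) : ∃ v, sunletPos t v = p := by
  have hbij : Function.Bijective fun v => (⟨sunletPos t v, sunletPos_lt v⟩ : Fin (2 * t)) := by
    rw [Fintype.bijective_iff_injective_and_card]
    refine ⟨fun u v h => sunletPos_injective (congrArg Fin.val h), ?_⟩
    simp [ZMod.card, two_mul]
  obtain ⟨v, hv⟩ := hbij.2 ⟨p, hp⟩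
  exact ⟨v, congrArg Fin.val hv⟩

/-- From position `(t + 1) / 2` on there are only odd cycle edges, which are pairwise
non-adjacent, and spokes; the only mixed block is `{e_{t-2}, s₀}` for odd `t`. -/
lemma sunletLine_not_adj_of_sunletPos (u v : ZMod t ⊕ ZMod t)
    (hu : (t + 1) / 2 ≤ sunletPos t u) (hv : (t + 1) / 2 ≤ sunletPos t v)
    (huv : sunletPos t u / 2 = sunletPos t v / 2) : ¬ (sunletLine t).Adj u v := by
  rcases u with i | i <;> rcases v with j | j <;>
    have := i.val_lt <;> have := j.val_lt <;> have := i.val_add_one_eq_or <;>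
    have := j.val_add_one_eq_or <;>
    simp only [sunletPos, Sum.elim_inl, Sum.elim_inr] at hu hv huv <;>
    simp only [sunletLine_adj_inl_inl, sunletLine_adj_inl_inr, sunletLine_adj_inr_inl,
      sunletLine_not_adj_inr_inr, not_false_eq_true]
  · rintro ⟨-, rfl | rfl⟩ <;> split_ifs at hu hv <;> omega
  · rintro (rfl | rfl) <;> split_ifs at hu huv <;> omega
  · rintro (rfl | rfl) <;> split_ifs at hv huv <;> omega

lemma exists_inl_even_eq_or_adj (v : ZMod t ⊕ ZMod t) :
    ∃ i : ZMod t, i.val % 2 = 0 ∧ (.inl i = v ∨ (sunletLine t).Adj v (.inl i)) := by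
  rcases v with i | i <;> rcases Nat.mod_two_eq_zero_or_one i.val with hi | hi
  · exact ⟨i, hi, .inl rfl⟩
  · refine ⟨i - 1, by rw [ZMod.val_sub_one_of_odd hi]; omega, .inr ?_⟩
    simp only [sunletLine_adj_inl_inl, sub_add_cancel, or_true, and_true]
    intro h
    have := congrArg ZMod.val h
    rw [ZMod.val_sub_one_of_odd hi] at this
    omega
  · exact ⟨i, hi, .inr (by simp)⟩
  · exact ⟨i - 1, by rw [ZMod.val_sub_one_of_odd hi]; omega, .inr (by simp)⟩

def pairColor (q p : ℕ) : ℕ := if p < 2 * q then p else q + p / 2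

lemma pairColor_eq_pairColor_iff {q p p' : ℕ} :
    pairColor q p = pairColor q p' ↔ p = p' ∨ (2 * q ≤ p ∧ 2 * q ≤ p' ∧ p / 2 = p' / 2) := by
  unfold pairColor; split_ifs <;> omega

def sunletColoring (t : ℕ) [NeZero t] : ZMod t ⊕ ZMod t → Fin (t + (t + 3) / 4) := fun v =>
  ⟨pairColor ((t + 3) / 4) (sunletPos t v), by
    have := sunletPos_lt v; have := NeZero.pos t; unfold pairColor; split_ifs <;> omega⟩

lemma sunletColoring_eq_iff {u v : ZMod t ⊕ ZMod t} :
    sunletColoring t u = sunletColoring t v ↔ u = v ∨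
      (2 * ((t + 3) / 4) ≤ sunletPos t u ∧ 2 * ((t + 3) / 4) ≤ sunletPos t v ∧
        sunletPos t u / 2 = sunletPos t v / 2) := by
  rw [sunletColoring, sunletColoring, Fin.mk.injEq, pairColor_eq_pairColor_iff,
    sunletPos_injective.eq_iff]

lemma ncard_setOf_sunletColoring_eq_le_two (k : Fin (t + (t + 3) / 4)) :
    {u | sunletColoring t u = k}.ncard ≤ 2 := by
  by_contra! h
  obtain ⟨u, v, w, hu, hv, hw, huv, huw, hvw⟩ := (Set.two_lt_ncard_iff (Set.toFinite _)).1 h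
  have huv' := sunletColoring_eq_iff.1 (hu.trans hv.symm)
  have huw' := sunletColoring_eq_iff.1 (hu.trans hw.symm)
  have := sunletPos_injective.ne huv
  have := sunletPos_injective.ne huw
  have := sunletPos_injective.ne hvw
  simp only [huv, huw, false_or] at huv' huw'
  omega

lemma ncard_setOf_sunletColoring_eq_pos (k : Fin (t + (t + 3) / 4)) :
    0 < {u | sunletColoring t u = k}.ncard := by
  have := k.isLt
  obtain ⟨v, hv⟩ := sunletPos_surjective (t := t)
    (p := if k < 2 * ((t + 3) / 4) then k else 2 * (k - (t + 3) / 4)) (by split_ifs <;> omega)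
  refine (Set.ncard_pos (Set.toFinite _)).2 ⟨v, Fin.ext ?_⟩
  simp only [sunletColoring, pairColor, hv]
  split_ifs <;> omega

lemma isEDColoring_sunletColoring : IsEDColoring (sunletLine t) (sunletColoring t) := by
  refine ⟨fun u v hadj heq => ?_, fun v => ?_, fun j k => ?_⟩
  · rcases sunletColoring_eq_iff.1 heq with rfl | ⟨hu, hv, huv⟩
    · exact hadj.ne rfl
    · exact sunletLine_not_adj_of_sunletPos u v (by omega) (by omega) huv hadj
  · obtain ⟨i, hi, hdom⟩ := exists_inl_even_eq_or_adj v
    refine ⟨sunletColoring t (.inl i), ⟨_, rfl⟩, fun u hu => ?_⟩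
    have hpos : sunletPos t (.inl i) < (t + 1) / 2 := by
      have := i.val_lt
      simp only [sunletPos, Sum.elim_inl, if_pos hi]
      omega
    rcases sunletColoring_eq_iff.1 hu with rfl | ⟨-, hi', -⟩
    · exact hdom
    · omega
  · have := ncard_setOf_sunletColoring_eq_le_two j
    have := ncard_setOf_sunletColoring_eq_pos k
    omega

end UpperBound

theorem edcn_lineGraph_sunlet (t : ℕ) (ht : 3 ≤ t) :
    edcn (sunlet t).lineGraph = t + (t + 3) / 4 := by
  have : NeZero t := ⟨by omega⟩
  have hupper : t + (t + 3) / 4 ∈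
      {n | ∃ c : ZMod t ⊕ ZMod t → Fin n, IsEDColoring (sunletLine t) c} :=
    ⟨sunletColoring t, isEDColoring_sunletColoring⟩
  rw [← edcn_eq_of_iso (sunletLineIso ht), edcn]
  exact le_antisymm (Nat.sInf_le hupper)
    (le_csInf ⟨_, hupper⟩ fun n ⟨_, hc⟩ => hc.sunletLine_le ht)
end

section
/- For every integer t ≥ 3 with t ≡ 0, 1, or 3 (mod 4), the line graph of the t-sunlet graph Sl_t admits an equitable dominator coloring using 2⌊t/3⌋ + r + ⌈t/3⌉ + ⌊t/3⌋ colors, where r is the remainder of t modulo 3; in particular χ_ed(L(Sl_t)) ≤ 2⌊t/3⌋ + r + ⌈t/3⌉ + ⌊t/3⌋. -/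
open SimpleGraph

def ccN (t n : ℕ) : ℕ :=
  if n < 3*(t/3) then 4*(n/3) + n%3 else 4*(t/3) + (n - 3*(t/3))

def pcN (t n : ℕ) : ℕ :=
  if n < 3*(t/3) then 4*(n/3) + n%3 + 1
  else if t%3 = 1 then 4*(t/3)+1 else 4*(t/3)+2

lemma ccN_lt {t n : ℕ} (ht : 3 ≤ t) (hn : n < t) :
    ccN t n < 2*(t/3) + t%3 + (t+2)/3 + t/3 := by
  unfold ccN; split_ifs <;> omega

lemma pcN_lt {t n : ℕ} (ht : 3 ≤ t) (hn : n < t) :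
    pcN t n < 2*(t/3) + t%3 + (t+2)/3 + t/3 := by
  unfold pcN; split_ifs <;> omega

lemma ccN_inj {t n₁ n₂ : ℕ} (h₁ : n₁ < t) (h₂ : n₂ < t)
    (h : ccN t n₁ = ccN t n₂) : n₁ = n₂ := by
  unfold ccN at h; split_ifs at h <;> omega

lemma pcN_pcN {t n₁ n₂ : ℕ} (h₁ : n₁ < t) (h₂ : n₂ < t)
    (h : pcN t n₁ = pcN t n₂) : n₁ = n₂ ∨ (3*(t/3) ≤ n₁ ∧ 3*(t/3) ≤ n₂) := by
  unfold pcN at h; split_ifs at h <;> omega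

lemma ccpc {t n₁ n₂ : ℕ} (h₁ : n₁ < t) (h₂ : n₂ < t)
    (h : ccN t n₁ = pcN t n₂) :
    n₁ = n₂ + 1 ∧ n₂ % 3 ≠ 2 ∧ n₁ < 3*(t/3) ∧ n₂ < 3*(t/3) := by
  unfold ccN pcN at h; split_ifs at h <;> omega

lemma ccN_ub {t n : ℕ} (hr : 1 ≤ t%3) (hn : n < t) : ccN t n < 4*(t/3) + t%3 := by
  unfold ccN; split_ifs <;> omega

def sE (t : ℕ) (a : ZMod t) : Sym2 (ZMod t ⊕ ZMod t) := s(.inl a, .inl (a+1))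
def sP (t : ℕ) (a : ZMod t) : Sym2 (ZMod t ⊕ ZMod t) := s(.inl a, .inr a)

lemma zmodTwoNe {t : ℕ} (ht : 3 ≤ t) : ((2:ℕ) : ZMod t) ≠ 0 := by
  haveI : NeZero t := ⟨by omega⟩
  intro h
  have := congrArg ZMod.val h
  rw [ZMod.val_natCast_of_lt (by omega), ZMod.val_zero] at this
  omega

lemma zmodOneNe {t : ℕ} (ht : 3 ≤ t) : ((1:ℕ) : ZMod t) ≠ 0 := by
  haveI : NeZero t := ⟨by omega⟩
  intro h
  have := congrArg ZMod.val h
  rw [ZMod.val_natCast_of_lt (by omega), ZMod.val_zero] at this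
  omega

lemma sE_mem (t : ℕ) (ht : 3 ≤ t) (a : ZMod t) : sE t a ∈ (sunlet t).edgeSet := by
  rw [show sE t a = s(Sum.inl a, Sum.inl (a+1)) from rfl, SimpleGraph.mem_edgeSet, sunlet, SimpleGraph.fromRel_adj]
  refine ⟨fun h => ?_, Or.inl (Or.inl ⟨a, rfl, rfl⟩)⟩
  apply zmodOneNe ht
  have h2 := Sum.inl.inj h
  push_cast
  linear_combination -h2

lemma sP_mem (t : ℕ) (ht : 3 ≤ t) (a : ZMod t) : sP t a ∈ (sunlet t).edgeSet := by
  rw [show sP t a = s(Sum.inl a, Sum.inr a) from rfl, SimpleGraph.mem_edgeSet, sunlet, SimpleGraph.fromRel_adj]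
  exact ⟨fun h => by simp at h, Or.inl (Or.inr ⟨a, rfl, rfl⟩)⟩

lemma edge_class (t : ℕ) {e : Sym2 (ZMod t ⊕ ZMod t)} (he : e ∈ (sunlet t).edgeSet) :
    ∃ a, e = sE t a ∨ e = sP t a := by
  induction e using Sym2.ind with
  | _ x y =>
    rw [SimpleGraph.mem_edgeSet, sunlet, SimpleGraph.fromRel_adj] at he
    obtain ⟨-, h | h⟩ := he
    · obtain (⟨i, rfl, rfl⟩ | ⟨i, rfl, rfl⟩) := h
      exacts [⟨i, Or.inl rfl⟩, ⟨i, Or.inr rfl⟩]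
    · obtain (⟨i, rfl, rfl⟩ | ⟨i, rfl, rfl⟩) := h
      · exact ⟨i, Or.inl Sym2.eq_swap⟩
      · exact ⟨i, Or.inr Sym2.eq_swap⟩

lemma sE_inj (t : ℕ) (ht : 3 ≤ t) {a b : ZMod t} (h : sE t a = sE t b) : a = b := by
  rw [sE, sE, Sym2.eq_iff] at h
  rcases h with ⟨h1, -⟩ | ⟨h1, h2⟩
  · exact Sum.inl.inj h1
  · exfalso
    apply zmodTwoNe ht
    have e1 := Sum.inl.inj h1
    have e2 := Sum.inl.inj h2
    push_cast
    linear_combination e2 - e1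

lemma sP_inj (t : ℕ) {a b : ZMod t} (h : sP t a = sP t b) : a = b := by
  rw [sP, sP, Sym2.eq_iff] at h
  rcases h with ⟨h1, -⟩ | ⟨h1, -⟩
  · exact Sum.inl.inj h1
  · simp at h1

lemma sE_ne_sP (t : ℕ) {a b : ZMod t} : sE t a ≠ sP t b := by
  simp [sE, sP, Sym2.eq_iff]

def gfun (t : ℕ) : ZMod t ⊕ ZMod t → ZMod t ⊕ ZMod t → ℕ
  | .inl i, .inl j => if j = i + 1 then ccN t i.val
      else if i = j + 1 then ccN t j.val else 0
  | .inl i, .inr j => if i = j then pcN t i.val else 0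
  | .inr i, .inl j => if j = i then pcN t j.val else 0
  | .inr _, .inr _ => 0

lemma gfun_symm (t : ℕ) (ht : 3 ≤ t) (x y : ZMod t ⊕ ZMod t) :
    gfun t x y = gfun t y x := by
  cases x with
  | inl i =>
    cases y with
    | inl j =>
      simp only [gfun]
      split_ifs with h1 h2 <;> try rfl
      · exfalso
        apply zmodTwoNe ht
        push_cast
        linear_combination -h1 - h2
    | inr j => rfl
  | inr i =>
    cases y with
    | inl j => rfl
    | inr j => rfl

def fcol (t : ℕ) (ht : 3 ≤ t) : Sym2 (ZMod t ⊕ ZMod t) → ℕ :=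
  Sym2.lift ⟨gfun t, gfun_symm t ht⟩

lemma fcol_sE (t : ℕ) (ht : 3 ≤ t) (a : ZMod t) : fcol t ht (sE t a) = ccN t a.val := by
  simp [fcol, sE, gfun]

lemma fcol_sP (t : ℕ) (ht : 3 ≤ t) (a : ZMod t) : fcol t ht (sP t a) = pcN t a.val := by
  simp [fcol, sP, gfun]

def EEd (t : ℕ) (ht : 3 ≤ t) (a : ZMod t) : (sunlet t).edgeSet := ⟨sE t a, sE_mem t ht a⟩
def PPd (t : ℕ) (ht : 3 ≤ t) (a : ZMod t) : (sunlet t).edgeSet := ⟨sP t a, sP_mem t ht a⟩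


theorem edcn_lineGraph_sunlet_le (t : ℕ) (ht : 3 ≤ t)
    (hmod : t % 4 = 0 ∨ t % 4 = 1 ∨ t % 4 = 3) :
    (∃ c : (sunlet t).edgeSet → Fin (2 * (t / 3) + t % 3 + (t + 2) / 3 + t / 3),
        IsEDColoring (sunlet t).lineGraph c) ∧
    edcn (sunlet t).lineGraph ≤ 2 * (t / 3) + t % 3 + (t + 2) / 3 + t / 3 := by
  haveI : NeZero t := ⟨by omega⟩
  have hvlt : ∀ a : ZMod t, a.val < t := fun a => ZMod.val_lt a
  have hbound : ∀ e : (sunlet t).edgeSet,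
      fcol t ht ↑e < 2*(t/3) + t%3 + (t+2)/3 + t/3 := by
    intro e
    obtain ⟨a, h | h⟩ := edge_class t e.2
    · rw [h, fcol_sE]; exact ccN_lt ht (hvlt a)
    · rw [h, fcol_sP]; exact pcN_lt ht (hvlt a)
  let c : (sunlet t).edgeSet → Fin (2*(t/3) + t%3 + (t+2)/3 + t/3) :=
    fun e => ⟨fcol t ht ↑e, hbound e⟩
  have eqEE : ∀ (u : (sunlet t).edgeSet) (a : ZMod t) (n₀ : ℕ),
      (↑u : Sym2 _) = sE t a → a.val = n₀ → u = EEd t ht (↑n₀ : ZMod t) := by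
    intro u a n₀ h hv
    have ha : a = (↑n₀ : ZMod t) := by rw [← hv, ZMod.natCast_zmod_val]
    exact Subtype.ext (by rw [h, ha]; rfl)
  have eqPP : ∀ (u : (sunlet t).edgeSet) (a : ZMod t) (n₀ : ℕ),
      (↑u : Sym2 _) = sP t a → a.val = n₀ → u = PPd t ht (↑n₀ : ZMod t) := by
    intro u a n₀ h hv
    have ha : a = (↑n₀ : ZMod t) := by rw [← hv, ZMod.natCast_zmod_val]
    exact Subtype.ext (by rw [h, ha]; rfl)
  have hvE : ∀ n₀ : ℕ, n₀ < t → fcol t ht ↑(EEd t ht (↑n₀ : ZMod t)) = ccN t n₀ := by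
    intro n₀ hl
    show fcol t ht (sE t ↑n₀) = _
    rw [fcol_sE, ZMod.val_natCast_of_lt hl]
  have hvP : ∀ n₀ : ℕ, n₀ < t → fcol t ht ↑(PPd t ht (↑n₀ : ZMod t)) = pcN t n₀ := by
    intro n₀ hl
    show fcol t ht (sP t ↑n₀) = _
    rw [fcol_sP, ZMod.val_natCast_of_lt hl]
  have SE : ∀ n₀ : ℕ, n₀ < t → ((n₀ % 3 = 0 ∧ n₀ < 3*(t/3)) ∨ 3*(t/3) ≤ n₀) →
      ∀ u : (sunlet t).edgeSet, fcol t ht ↑u = ccN t n₀ → u = EEd t ht (↑n₀ : ZMod t) := by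
    intro n₀ hn₀ hc u hu
    obtain ⟨a, h | h⟩ := edge_class t u.2
    · rw [h, fcol_sE] at hu
      exact eqEE u a n₀ h (ccN_inj (hvlt a) hn₀ hu)
    · rw [h, fcol_sP] at hu
      have := ccpc hn₀ (hvlt a) hu.symm
      exfalso; omega
  have SP : ∀ n₀ : ℕ, n₀ < t → n₀ % 3 = 2 → n₀ < 3*(t/3) →
      ∀ u : (sunlet t).edgeSet, fcol t ht ↑u = pcN t n₀ → u = PPd t ht (↑n₀ : ZMod t) := by
    intro n₀ hn₀ h2 h3 u hu
    obtain ⟨a, h | h⟩ := edge_class t u.2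
    · rw [h, fcol_sE] at hu
      have := ccpc (hvlt a) hn₀ hu
      exfalso; omega
    · rw [h, fcol_sP] at hu
      rcases pcN_pcN (hvlt a) hn₀ hu with h' | h'
      · exact eqPP u a n₀ h h'
      · exfalso; omega
  have hadj : ∀ (x y : (sunlet t).edgeSet) (v : ZMod t ⊕ ZMod t),
      (x : Sym2 (ZMod t ⊕ ZMod t)) ≠ (y : Sym2 (ZMod t ⊕ ZMod t)) →
      v ∈ (x : Sym2 (ZMod t ⊕ ZMod t)) → v ∈ (y : Sym2 (ZMod t ⊕ ZMod t)) →
      (sunlet t).lineGraph.Adj x y := by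
    intro x y v hne h1 h2
    exact SimpleGraph.lineGraph_adj_iff_exists.mpr
      ⟨fun q => hne (by rw [q]), v, h1, h2⟩
  have hA1 : ∀ a : ZMod t, (sunlet t).lineGraph.Adj (EEd t ht a) (EEd t ht (a+1)) := by
    intro a
    apply hadj _ _ (Sum.inl (a+1))
    · show sE t a ≠ sE t (a+1)
      intro q
      have h2 := sE_inj t ht q
      exact zmodOneNe ht (by push_cast; linear_combination -h2)
    · show _ ∈ sE t a; simp [sE]
    · show _ ∈ sE t (a+1); simp [sE]
  have hA2 : ∀ a : ZMod t, (sunlet t).lineGraph.Adj (EEd t ht a) (PPd t ht a) := by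
    intro a
    apply hadj _ _ (Sum.inl a)
    · show sE t a ≠ sP t a; exact sE_ne_sP t
    · show _ ∈ sE t a; simp [sE]
    · show _ ∈ sP t a; simp [sP]
  have hA3 : ∀ a : ZMod t, (sunlet t).lineGraph.Adj (EEd t ht a) (PPd t ht (a+1)) := by
    intro a
    apply hadj _ _ (Sum.inl (a+1))
    · show sE t a ≠ sP t (a+1); exact sE_ne_sP t
    · show _ ∈ sE t a; simp [sE]
    · show _ ∈ sP t (a+1); simp [sP]
  have hB1 : ∀ a b : ZMod t, ¬ (sunlet t).lineGraph.Adj (PPd t ht a) (PPd t ht b) := by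
    intro a b hadj'
    rw [SimpleGraph.lineGraph_adj_iff_exists] at hadj'
    obtain ⟨hne, v, h1, h2⟩ := hadj'
    have e1 : (PPd t ht a).1 = s(Sum.inl a, Sum.inr a) := rfl
    have e2 : (PPd t ht b).1 = s(Sum.inl b, Sum.inr b) := rfl
    rw [e1, Sym2.mem_iff] at h1
    rw [e2, Sym2.mem_iff] at h2
    rcases h1 with rfl | rfl <;> rcases h2 with h2 | h2 <;>
      simp only [Sum.inl.injEq, Sum.inr.injEq, reduceCtorEq] at h2 <;>
      exact hne (by rw [h2])
  have hB2 : ∀ a b : ZMod t, a.val = b.val + 1 →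
      ¬ (sunlet t).lineGraph.Adj (EEd t ht a) (PPd t ht b) := by
    intro a b hab hadj'
    rw [SimpleGraph.lineGraph_adj_iff_exists] at hadj'
    obtain ⟨-, v, h1, h2⟩ := hadj'
    have e1 : (EEd t ht a).1 = s(Sum.inl a, Sum.inl (a+1)) := rfl
    have e2 : (PPd t ht b).1 = s(Sum.inl b, Sum.inr b) := rfl
    rw [e1, Sym2.mem_iff] at h1
    rw [e2, Sym2.mem_iff] at h2
    rcases h2 with rfl | rfl
    · rcases h1 with h1 | h1
      · have := Sum.inl.inj h1
        have := congrArg ZMod.val this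
        omega
      · have hba : b = a + 1 := Sum.inl.inj h1
        have hcast : ((b.val : ℕ) : ZMod t) = ((a.val + 1 : ℕ) : ZMod t) := by
          push_cast
          rw [ZMod.natCast_zmod_val, ZMod.natCast_zmod_val]
          exact hba
        have hmodeq : b.val % t = (a.val + 1) % t :=
          (ZMod.natCast_eq_natCast_iff _ _ _).mp hcast
        have hbt := hvlt b
        have hat := hvlt a
        rw [Nat.mod_eq_of_lt hbt] at hmodeq
        rcases lt_or_ge (a.val + 1) t with hl | hg
        · rw [Nat.mod_eq_of_lt hl] at hmodeq; omega
        · rw [Nat.mod_eq_sub_mod hg, Nat.mod_eq_of_lt (by omega)] at hmodeq; omega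
    · rcases h1 with h1 | h1 <;> simp at h1
  have master : ∀ w : ℕ, w < 2*(t/3) + t%3 + (t+2)/3 + t/3 →
      ∃ x y : (sunlet t).edgeSet,
        fcol t ht ↑x = w ∧ fcol t ht ↑y = w ∧
        (∀ u : (sunlet t).edgeSet, fcol t ht ↑u = w → u = x ∨ u = y) ∧
        ¬ (sunlet t).lineGraph.Adj x y := by
    intro w hw
    rcases lt_or_ge w (4*(t/3)) with hw4 | hw4
    · rcases (show w%4 = 0 ∨ w%4 = 1 ∨ w%4 = 2 ∨ w%4 = 3 by omega) with hs|hs|hs|hs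
      · have hn : 3*(w/4) < t := by omega
        have hval : ccN t (3*(w/4)) = w := by unfold ccN; split_ifs <;> omega
        exact ⟨EEd t ht ↑(3*(w/4)), EEd t ht ↑(3*(w/4)),
          by rw [hvE _ hn, hval], by rw [hvE _ hn, hval],
          fun u hu => Or.inl (SE _ hn (Or.inl ⟨by omega, by omega⟩) u
            (by rw [hval]; exact hu)),
          SimpleGraph.irrefl _⟩
      · have hn1 : 3*(w/4)+1 < t := by omega
        have hn2 : 3*(w/4) < t := by omega
        have hv1 : ccN t (3*(w/4)+1) = w := by unfold ccN; split_ifs <;> omega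
        have hv2 : pcN t (3*(w/4)) = w := by unfold pcN; split_ifs <;> omega
        refine ⟨EEd t ht ↑(3*(w/4)+1), PPd t ht ↑(3*(w/4)),
          by rw [hvE _ hn1, hv1], by rw [hvP _ hn2, hv2], ?_, ?_⟩
        · intro u hu
          obtain ⟨a, h | h⟩ := edge_class t u.2
          · rw [h, fcol_sE] at hu
            exact Or.inl (eqEE u a _ h (ccN_inj (hvlt a) hn1 (by rw [hu, hv1])))
          · rw [h, fcol_sP] at hu
            have := pcN_pcN (hvlt a) hn2 (by rw [hu, hv2])
            exact Or.inr (eqPP u a _ h (by omega))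
        · apply hB2
          rw [ZMod.val_natCast_of_lt hn1, ZMod.val_natCast_of_lt hn2]
      · have hn1 : 3*(w/4)+2 < t := by omega
        have hn2 : 3*(w/4)+1 < t := by omega
        have hv1 : ccN t (3*(w/4)+2) = w := by unfold ccN; split_ifs <;> omega
        have hv2 : pcN t (3*(w/4)+1) = w := by unfold pcN; split_ifs <;> omega
        refine ⟨EEd t ht ↑(3*(w/4)+2), PPd t ht ↑(3*(w/4)+1),
          by rw [hvE _ hn1, hv1], by rw [hvP _ hn2, hv2], ?_, ?_⟩
        · intro u hu
          obtain ⟨a, h | h⟩ := edge_class t u.2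
          · rw [h, fcol_sE] at hu
            exact Or.inl (eqEE u a _ h (ccN_inj (hvlt a) hn1 (by rw [hu, hv1])))
          · rw [h, fcol_sP] at hu
            have := pcN_pcN (hvlt a) hn2 (by rw [hu, hv2])
            exact Or.inr (eqPP u a _ h (by omega))
        · apply hB2
          rw [ZMod.val_natCast_of_lt hn1, ZMod.val_natCast_of_lt hn2]
      · have hn : 3*(w/4)+2 < t := by omega
        have hval : pcN t (3*(w/4)+2) = w := by unfold pcN; split_ifs <;> omega
        exact ⟨PPd t ht ↑(3*(w/4)+2), PPd t ht ↑(3*(w/4)+2),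
          by rw [hvP _ hn, hval], by rw [hvP _ hn, hval],
          fun u hu => Or.inl (SP _ hn (by omega) (by omega) u
            (by rw [hval]; exact hu)),
          SimpleGraph.irrefl _⟩
    · have hr1 : 1 ≤ t%3 := by omega
      rcases lt_or_ge (w - 4*(t/3)) (t%3) with hlt | hge
      · have hn : 3*(t/3) + (w - 4*(t/3)) < t := by omega
        have hval : ccN t (3*(t/3) + (w - 4*(t/3))) = w := by
          unfold ccN; split_ifs <;> omega
        exact ⟨EEd t ht ↑(3*(t/3) + (w - 4*(t/3))), EEd t ht ↑(3*(t/3) + (w - 4*(t/3))),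
          by rw [hvE _ hn, hval], by rw [hvE _ hn, hval],
          fun u hu => Or.inl (SE _ hn (Or.inr (by omega)) u (by rw [hval]; exact hu)),
          SimpleGraph.irrefl _⟩
      · have hw' : w = 4*(t/3) + t%3 := by omega
        have hn1 : 3*(t/3) < t := by omega
        have hn2 : 3*(t/3) + t%3 - 1 < t := by omega
        have hv1 : pcN t (3*(t/3)) = w := by unfold pcN; split_ifs <;> omega
        have hv2 : pcN t (3*(t/3) + t%3 - 1) = w := by unfold pcN; split_ifs <;> omega
        refine ⟨PPd t ht ↑(3*(t/3)), PPd t ht ↑(3*(t/3) + t%3 - 1),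
          by rw [hvP _ hn1, hv1], by rw [hvP _ hn2, hv2], ?_, hB1 _ _⟩
        intro u hu
        obtain ⟨a, h | h⟩ := edge_class t u.2
        · rw [h, fcol_sE] at hu
          have := ccN_ub hr1 (hvlt a)
          exfalso; omega
        · rw [h, fcol_sP] at hu
          have h5 := pcN_pcN (hvlt a) hn1 (by rw [hu, hv1])
          have h6 := hvlt a
          rcases (show a.val = 3*(t/3) ∨ a.val = 3*(t/3) + t%3 - 1 by omega) with h'|h'
          · exact Or.inl (eqPP u a _ h h')
          · exact Or.inr (eqPP u a _ h h')
  have hED : IsEDColoring (sunlet t).lineGraph c := by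
    refine ⟨?_, ?_, ?_⟩
    · intro u v huv hcc
      obtain ⟨x, y, hx, hy, huniq, hnadj⟩ := master (fcol t ht ↑u) (hbound u)
      have hu' : u = x ∨ u = y := huniq u rfl
      have hv' : v = x ∨ v = y := huniq v (congrArg Fin.val hcc).symm
      rcases hu' with rfl|rfl <;> rcases hv' with rfl|rfl
      · exact SimpleGraph.irrefl _ huv
      · exact hnadj huv
      · exact hnadj huv.symm
      · exact SimpleGraph.irrefl _ huv
    · intro v
      obtain ⟨a, h | h⟩ := edge_class t v.2
      · have hv : v = EEd t ht ↑a.val := eqEE v a a.val h rfl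
        by_cases h3 : a.val < 3*(t/3)
        · rcases (show a.val%3 = 0 ∨ a.val%3 = 1 ∨ a.val%3 = 2 by omega) with h0|h0|h0
          · refine ⟨c v, ⟨v, rfl⟩, fun u hu => Or.inl ?_⟩
            have hu' : fcol t ht ↑u = ccN t a.val := by
              calc fcol t ht ↑u = fcol t ht ↑v := congrArg Fin.val hu
                _ = _ := by rw [h, fcol_sE]
            rw [SE a.val (hvlt a) (Or.inl ⟨h0, h3⟩) u hu', hv]
          · refine ⟨c (EEd t ht ↑(a.val - 1)), ⟨EEd t ht ↑(a.val - 1), rfl⟩,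
              fun u hu => Or.inr ?_⟩
            have hnlt : a.val - 1 < t := by have := hvlt a; omega
            have hu' : fcol t ht ↑u = ccN t (a.val - 1) := by
              calc fcol t ht ↑u = fcol t ht ↑(EEd t ht ↑(a.val - 1)) :=
                    congrArg Fin.val hu
                _ = _ := hvE _ hnlt
            rw [SE _ hnlt (Or.inl ⟨by omega, by omega⟩) u hu', hv]
            have key : ((a.val - 1 : ℕ) : ZMod t) + 1 = ((a.val : ℕ) : ZMod t) := by
              rw [Nat.cast_sub (by omega : 1 ≤ a.val)]
              push_cast; ring
            exact (key ▸ hA1 ((a.val - 1 : ℕ) : ZMod t)).symm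
          · refine ⟨c (PPd t ht ↑a.val), ⟨PPd t ht ↑a.val, rfl⟩,
              fun u hu => Or.inr ?_⟩
            have hu' : fcol t ht ↑u = pcN t a.val := by
              calc fcol t ht ↑u = fcol t ht ↑(PPd t ht ↑a.val) := congrArg Fin.val hu
                _ = _ := hvP _ (hvlt a)
            rw [SP a.val (hvlt a) h0 h3 u hu', hv]
            exact hA2 _
        · push_neg at h3
          refine ⟨c v, ⟨v, rfl⟩, fun u hu => Or.inl ?_⟩
          have hu' : fcol t ht ↑u = ccN t a.val := by
            calc fcol t ht ↑u = fcol t ht ↑v := congrArg Fin.val hu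
              _ = _ := by rw [h, fcol_sE]
          rw [SE a.val (hvlt a) (Or.inr h3) u hu', hv]
      · have hv : v = PPd t ht ↑a.val := eqPP v a a.val h rfl
        by_cases h3 : a.val < 3*(t/3)
        · rcases (show a.val%3 = 0 ∨ a.val%3 = 1 ∨ a.val%3 = 2 by omega) with h0|h0|h0
          · refine ⟨c (EEd t ht ↑a.val), ⟨EEd t ht ↑a.val, rfl⟩,
              fun u hu => Or.inr ?_⟩
            have hu' : fcol t ht ↑u = ccN t a.val := by
              calc fcol t ht ↑u = fcol t ht ↑(EEd t ht ↑a.val) := congrArg Fin.val hu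
                _ = _ := hvE _ (hvlt a)
            rw [SE a.val (hvlt a) (Or.inl ⟨h0, h3⟩) u hu', hv]
            exact (hA2 _).symm
          · refine ⟨c (EEd t ht ↑(a.val - 1)), ⟨EEd t ht ↑(a.val - 1), rfl⟩,
              fun u hu => Or.inr ?_⟩
            have hnlt : a.val - 1 < t := by have := hvlt a; omega
            have hu' : fcol t ht ↑u = ccN t (a.val - 1) := by
              calc fcol t ht ↑u = fcol t ht ↑(EEd t ht ↑(a.val - 1)) :=
                    congrArg Fin.val hu
                _ = _ := hvE _ hnlt
            rw [SE _ hnlt (Or.inl ⟨by omega, by omega⟩) u hu', hv]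
            have key : ((a.val - 1 : ℕ) : ZMod t) + 1 = ((a.val : ℕ) : ZMod t) := by
              rw [Nat.cast_sub (by omega : 1 ≤ a.val)]
              push_cast; ring
            exact (key ▸ hA3 ((a.val - 1 : ℕ) : ZMod t)).symm
          · refine ⟨c v, ⟨v, rfl⟩, fun u hu => Or.inl ?_⟩
            have hu' : fcol t ht ↑u = pcN t a.val := by
              calc fcol t ht ↑u = fcol t ht ↑v := congrArg Fin.val hu
                _ = _ := by rw [h, fcol_sP]
            rw [SP a.val (hvlt a) h0 h3 u hu', hv]
        · push_neg at h3
          refine ⟨c (EEd t ht ↑a.val), ⟨EEd t ht ↑a.val, rfl⟩,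
            fun u hu => Or.inr ?_⟩
          have hu' : fcol t ht ↑u = ccN t a.val := by
            calc fcol t ht ↑u = fcol t ht ↑(EEd t ht ↑a.val) := congrArg Fin.val hu
              _ = _ := hvE _ (hvlt a)
          rw [SE a.val (hvlt a) (Or.inr h3) u hu', hv]
          exact (hA2 _).symm
    · intro i j
      obtain ⟨x, y, hx, -, huniq, -⟩ := master i.val i.isLt
      obtain ⟨x', -, hx', -, -⟩ := master j.val j.isLt
      have h2 : {u | c u = i}.ncard ≤ 2 := by
        have hsub : {u | c u = i} ⊆ {x, y} := fun u hu =>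
          huniq u (congrArg Fin.val hu)
        calc {u | c u = i}.ncard ≤ ({x, y} : Set _).ncard :=
              Set.ncard_le_ncard hsub (Set.toFinite _)
          _ ≤ ({y} : Set _).ncard + 1 := Set.ncard_insert_le _ _
          _ ≤ 2 := by simp
      have h1 : 1 ≤ {u | c u = j}.ncard := by
        have hxm : x' ∈ {u | c u = j} := Fin.val_injective hx'
        exact (Set.ncard_pos (Set.toFinite _)).mpr ⟨x', hxm⟩
      omega
  exact ⟨⟨c, hED⟩, Nat.sInf_le ⟨c, hED⟩⟩
end

section
/- For every integer t ≥ 2, the equitable dominator chromatic number of the line graph of the friendship graph F_t equals 2t, i.e., χ_ed(L(F_t)) = 2t. -/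
open SimpleGraph

/-- The friendship graph `F_t`: `t` triangles sharing the single common universal vertex
`none`; the `i`-th triangle has the two further vertices `some (i, true)` and
`some (i, false)`. -/
def friendship (t : ℕ) : SimpleGraph (Option (Fin t × Bool)) :=
  SimpleGraph.fromRel (fun x y =>
    (∃ p : Fin t × Bool, x = none ∧ y = some p) ∨
    (∃ i : Fin t, x = some (i, true) ∧ y = some (i, false)))

/-!
The `2t` spokes of `F_t` pairwise share the centre, so they form a clique of `L(F_t)` and need
`2t` distinct colours. Conversely, give every spoke its own colour and let the rim edge of
triangle `i` borrow the colour of a spoke of triangle `i + 1`, which it does not touch: every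
colour class then has one or two edges, and every edge of triangle `i` dominates the singleton
class of the spoke `(i, false)`.
-/

section EDColoring

variable {V : Type*} {G : SimpleGraph V}

lemma IsEDColoring.colorable {n : ℕ} {c : V → Fin n} (hc : IsEDColoring G c) : G.Colorable n :=
  ⟨Coloring.mk c fun h => hc.1 h⟩

lemma edcn_eq_of_forall_le {k : ℕ} (hk : ∃ c : V → Fin k, IsEDColoring G c)
    (hle : ∀ n (c : V → Fin n), IsEDColoring G c → k ≤ n) : edcn G = k :=
  le_antisymm (Nat.sInf_le hk) (le_csInf ⟨k, hk⟩ fun n ⟨c, hc⟩ => hle n c hc)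

lemma isEDColoring_equiv_comp {α : Type*} {n : ℕ} (e : α ≃ Fin n) {c : V → α}
    (hproper : ∀ ⦃u v⦄, G.Adj u v → c u ≠ c v)
    (hdom : ∀ v, ∃ a, (∃ u, c u = a) ∧ ∀ u, c u = a → u = v ∨ G.Adj v u)
    (hequit : ∀ a b, {u | c u = a}.ncard ≤ {u | c u = b}.ncard + 1) :
    IsEDColoring G (e ∘ c) := by
  have hfiber : ∀ i, {u | (e ∘ c) u = i} = {u | c u = e.symm i} := fun i => by
    ext u; simp [← Equiv.eq_symm_apply]
  refine ⟨fun u v huv h => hproper huv (e.injective h), fun v => ?_, fun i j => ?_⟩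
  · obtain ⟨a, ⟨u, hu⟩, hdom⟩ := hdom v
    exact ⟨e a, ⟨u, by simp [hu]⟩, fun w hw => hdom w (e.injective hw)⟩
  · simpa only [hfiber] using hequit _ _

end EDColoring

lemma finRotate_apply_ne {t : ℕ} (ht : 2 ≤ t) (i : Fin t) : finRotate t i ≠ i :=
  Equiv.Perm.mem_support.mp (by simp [support_finRotate_of_le ht])

namespace friendship

variable {t : ℕ}

def spoke (p : Fin t × Bool) : (friendship t).edgeSet :=
  ⟨s(none, some p), by
    rw [mem_edgeSet, friendship, fromRel_adj]; exact ⟨by simp, .inl (.inl ⟨p, rfl, rfl⟩)⟩⟩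

def rim (i : Fin t) : (friendship t).edgeSet :=
  ⟨s(some (i, true), some (i, false)), by
    rw [mem_edgeSet, friendship, fromRel_adj]; exact ⟨by simp, .inl (.inr ⟨i, rfl, rfl⟩)⟩⟩

def edge : (Fin t × Bool) ⊕ Fin t → (friendship t).edgeSet :=
  Sum.elim spoke rim

def triangle : (Fin t × Bool) ⊕ Fin t → Fin t :=
  Sum.elim Prod.fst id

lemma edge_bijective : (edge (t := t)).Bijective := by
  constructor
  · rintro (⟨i, a⟩ | i) (⟨j, b⟩ | j) h <;>
      simp_all [edge, spoke, rim, Subtype.ext_iff]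
  · rintro ⟨e, he⟩
    induction e using Sym2.ind with
    | _ x y =>
      rw [mem_edgeSet, friendship, fromRel_adj] at he
      rcases he with ⟨-, (⟨p, rfl, rfl⟩ | ⟨i, rfl, rfl⟩) | (⟨p, rfl, rfl⟩ | ⟨i, rfl, rfl⟩)⟩
      · exact ⟨.inl p, rfl⟩
      · exact ⟨.inr i, rfl⟩
      · exact ⟨.inl p, Subtype.ext Sym2.eq_swap⟩
      · exact ⟨.inr i, Subtype.ext Sym2.eq_swap⟩

lemma lineGraph_adj_edge {a b : (Fin t × Bool) ⊕ Fin t} :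
    (friendship t).lineGraph.Adj (edge a) (edge b) ↔
      a ≠ b ∧ (triangle a = triangle b ∨ a.isLeft ∧ b.isLeft) := by
  rw [lineGraph_adj_iff_exists, edge_bijective.injective.ne_iff]
  rcases a with ⟨i, a⟩ | i <;> rcases b with ⟨j, b⟩ | j <;>
    simp [edge, spoke, rim, triangle, ← and_or_left]

lemma pairwise_lineGraph_adj_spoke :
    Pairwise fun p q : Fin t × Bool => (friendship t).lineGraph.Adj (spoke p) (spoke q) :=
  fun _ _ hpq => lineGraph_adj_edge.2 ⟨Sum.inl_injective.ne hpq, .inr ⟨rfl, rfl⟩⟩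

def color : (Fin t × Bool) ⊕ Fin t → Fin t × Bool :=
  Sum.elim id fun i => (finRotate t i, true)

lemma color_eq_false_iff {a : (Fin t × Bool) ⊕ Fin t} {i : Fin t} :
    color a = (i, false) ↔ a = .inl (i, false) := by
  rcases a <;> simp [color]

lemma color_eq_true_iff {a : (Fin t × Bool) ⊕ Fin t} {i : Fin t} :
    color a = (i, true) ↔ a = .inl (i, true) ∨ a = .inr ((finRotate t).symm i) := by
  rcases a <;> simp [color, Equiv.eq_symm_apply, -finRotate_apply, -finRotate_symm_apply]

lemma color_ne_of_adj (ht : 2 ≤ t) {a b : (Fin t × Bool) ⊕ Fin t}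
    (h : (friendship t).lineGraph.Adj (edge a) (edge b)) : color a ≠ color b := by
  obtain ⟨hab, htri⟩ := lineGraph_adj_edge.1 h
  rcases a with p | i <;> rcases b with q | j
  · exact fun hpq => hab (congrArg Sum.inl hpq)
  · rintro rfl
    exact finRotate_apply_ne ht j (by simpa [triangle, color, -finRotate_apply] using htri)
  · rintro rfl
    exact finRotate_apply_ne ht i
      (Eq.symm (by simpa [triangle, color, -finRotate_apply] using htri))
  · exact absurd (congrArg Sum.inr (by simpa [triangle] using htri)) hab

noncomputable def edgeColoring : (friendship t).edgeSet → Fin t × Bool :=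
  color ∘ (Equiv.ofBijective edge edge_bijective).symm

@[simp] lemma edgeColoring_edge (a : (Fin t × Bool) ⊕ Fin t) :
    edgeColoring (edge a) = color a := by
  simp [edgeColoring, Equiv.ofBijective_symm_apply_apply]

lemma edgeColoring_ne_of_adj (ht : 2 ≤ t) {u v : (friendship t).edgeSet}
    (h : (friendship t).lineGraph.Adj u v) : edgeColoring u ≠ edgeColoring v := by
  obtain ⟨a, rfl⟩ := edge_bijective.surjective u
  obtain ⟨b, rfl⟩ := edge_bijective.surjective v
  simpa using color_ne_of_adj ht h

lemma exists_dominated_class (v : (friendship t).edgeSet) :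
    ∃ x, (∃ u, edgeColoring u = x) ∧
      ∀ u, edgeColoring u = x → u = v ∨ (friendship t).lineGraph.Adj v u := by
  obtain ⟨a, rfl⟩ := edge_bijective.surjective v
  refine ⟨(triangle a, false), ⟨edge (.inl (triangle a, false)), edgeColoring_edge _⟩,
    fun u hu => ?_⟩
  obtain ⟨b, rfl⟩ := edge_bijective.surjective u
  rw [edgeColoring_edge, color_eq_false_iff] at hu
  subst hu
  by_cases hab : a = .inl (triangle a, false)
  · exact .inl (congrArg edge hab.symm)
  · exact .inr (lineGraph_adj_edge.2 ⟨hab, .inl rfl⟩)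

lemma ncard_setOf_edgeColoring_eq (x : Fin t × Bool) :
    {u | edgeColoring u = x}.ncard = {a | color a = x}.ncard := by
  rw [← Set.ncard_image_of_injective _ edge_bijective.injective]
  congr 1
  ext u
  obtain ⟨a, rfl⟩ := edge_bijective.surjective u
  simp [edge_bijective.injective.eq_iff]

lemma ncard_setOf_color_eq_mem_Icc (x : Fin t × Bool) :
    {a | color a = x}.ncard ∈ Set.Icc 1 2 := by
  obtain ⟨i, _ | _⟩ := x
  · simp [color_eq_false_iff]
  · simp only [color_eq_true_iff]
    rw [Set.ofPred_or, Set.ofPred_eq_eq_singleton, Set.ofPred_eq_eq_singleton,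
      ← Set.insert_eq, Set.ncard_pair (by simp)]
    simp

lemma isEDColoring_comp_edgeColoring (ht : 2 ≤ t) {n : ℕ} (e : Fin t × Bool ≃ Fin n) :
    IsEDColoring (friendship t).lineGraph (e ∘ edgeColoring) := by
  refine isEDColoring_equiv_comp e (fun _ _ => edgeColoring_ne_of_adj ht)
    exists_dominated_class fun x y => ?_
  have hx := ncard_setOf_color_eq_mem_Icc x
  have hy := ncard_setOf_color_eq_mem_Icc y
  simp only [ncard_setOf_edgeColoring_eq, Set.mem_Icc] at hx hy ⊢
  omega

end friendship

theorem edcn_lineGraph_friendship (t : ℕ) (ht : 2 ≤ t) :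
    edcn (friendship t).lineGraph = 2 * t := by
  have hcard : Fintype.card (Fin t × Bool) = 2 * t := by simp [mul_comm]
  refine edcn_eq_of_forall_le
    ⟨_, friendship.isEDColoring_comp_edgeColoring ht (Fintype.equivFinOfCardEq hcard)⟩
    fun n c hc => ?_
  simpa [mul_comm] using hc.colorable.card_le_of_pairwise_adj _
    friendship.pairwise_lineGraph_adj_spoke
end
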